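/- arXiv:1511.07062 — 11 statements merged into one kernel-verified Lean document; each statement's English description precedes it below -/
import Mathlib

section
/- Let G be a countable group and let (ℱ_n)_{n∈ℕ} be a countable family of filters on G, each of which admits an ω^ω-base. Suppose t is a group topology on G such that every ℱ_n converges to the identity with respect to t, and t is the finest such topology (i.e., every group topology t' on G in which every ℱ_n converges to the identity is coarser than t). Then the topological group (G, t) admits a local ω^ω-base. -/
/-- A filter `F` admits an `ω^ω`-base if there is a monotone cofinal map from
`ℕ → ℕ` (with the pointwise order) to the members of `F`. -/
def HasOmegaOmegaBase {X : Type*} (F : Filter X) : Prop :=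
  ∃ V : (ℕ → ℕ) → Set X, (∀ f, V f ∈ F) ∧ (∀ f g : ℕ → ℕ, f ≤ g → V g ⊆ V f) ∧
    ∀ A ∈ F, ∃ f, V f ⊆ A


open Filter Set Function Pointwise Topology

namespace Stmt0Aux

variable {G : Type*} [Group G]

/-- Words over a family of "letter" sets indexed by pairs, with pairwise distinct indices. -/
def wordSet (L : ℕ × ℕ → Set G) : Set G :=
  {x | ∃ l : List ((ℕ × ℕ) × G), (l.map Prod.fst).Nodup ∧
    (∀ q ∈ l, q.2 ∈ L q.1) ∧ (l.map Prod.snd).prod = x}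

lemma one_mem_wordSet (L : ℕ × ℕ → Set G) : (1 : G) ∈ wordSet L :=
  ⟨[], by simp, by simp, by simp⟩

lemma letter_subset_wordSet (L : ℕ × ℕ → Set G) (p : ℕ × ℕ) : L p ⊆ wordSet L :=
  fun a ha => ⟨[(p, a)], by simp, by simpa using ha, by simp⟩

lemma wordSet_reindex {L L' : ℕ × ℕ → Set G} (r : ℕ × ℕ → ℕ × ℕ) (hr : Function.Injective r)
    (h : ∀ p, L p ⊆ L' (r p)) : wordSet L ⊆ wordSet L' := by
  rintro x ⟨l, hn, hm, rfl⟩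
  refine ⟨l.map (fun q => (r q.1, q.2)), ?_, ?_, ?_⟩
  · have : (l.map (fun q => (r q.1, q.2))).map Prod.fst = (l.map Prod.fst).map r := by
      simp [List.map_map, Function.comp]
    rw [this]
    exact hn.map hr
  · rintro q hq
    simp only [List.mem_map] at hq
    obtain ⟨q', hq', rfl⟩ := hq
    exact h q'.1 (hm q' hq')
  · simp only [List.map_map]; rfl

lemma conj_list_prod (x : G) (l : List G) :
    (l.map fun a => x * a * x⁻¹).prod = x * l.prod * x⁻¹ := by
  induction l with
  | nil => simp
  | cons a l ih => simp only [List.map_cons, List.prod_cons, ih]; group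

lemma wordSet_conj {L L' : ℕ × ℕ → Set G} (x : G) (r : ℕ × ℕ → ℕ × ℕ)
    (hr : Function.Injective r) (h : ∀ p, ∀ a ∈ L p, x * a * x⁻¹ ∈ L' (r p)) :
    ∀ y ∈ wordSet L, x * y * x⁻¹ ∈ wordSet L' := by
  rintro y ⟨l, hn, hm, rfl⟩
  refine ⟨l.map (fun q => (r q.1, x * q.2 * x⁻¹)), ?_, ?_, ?_⟩
  · have : (l.map (fun q => (r q.1, x * q.2 * x⁻¹))).map Prod.fst = (l.map Prod.fst).map r := by
      simp [List.map_map, Function.comp]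
    rw [this]; exact hn.map hr
  · rintro q hq
    simp only [List.mem_map] at hq
    obtain ⟨q', hq', rfl⟩ := hq
    exact h q'.1 q'.2 (hm q' hq')
  · have : (l.map (fun q => (r q.1, x * q.2 * x⁻¹))).map Prod.snd
        = (l.map Prod.snd).map (fun a => x * a * x⁻¹) := by
      simp [List.map_map, Function.comp]
    rw [this, conj_list_prod]

lemma wordSet_inv {L : ℕ × ℕ → Set G} (hL : ∀ p, (L p)⁻¹ ⊆ L p) :
    ∀ x ∈ wordSet L, x⁻¹ ∈ wordSet L := by
  rintro x ⟨l, hn, hm, rfl⟩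
  refine ⟨l.reverse.map (fun q => (q.1, q.2⁻¹)), ?_, ?_, ?_⟩
  · have : (l.reverse.map (fun q : (ℕ × ℕ) × G => (q.1, q.2⁻¹))).map Prod.fst
        = ((l.map Prod.fst).reverse) := by
      simp [List.map_map, Function.comp, List.map_reverse]
    rw [this]
    exact List.nodup_reverse.mpr hn
  · rintro q hq
    simp only [List.mem_map, List.mem_reverse] at hq
    obtain ⟨q', hq', rfl⟩ := hq
    exact hL q'.1 (by simpa using hm q' hq')
  · have : (l.reverse.map (fun q : (ℕ × ℕ) × G => (q.1, q.2⁻¹))).map Prod.snd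
        = ((l.map Prod.snd).map fun a => a⁻¹).reverse := by
      simp [List.map_map, Function.comp, List.map_reverse]
    rw [this, ← List.prod_inv_reverse]

lemma wordSet_mul {L L' : ℕ × ℕ → Set G}
    (h1 : ∀ p : ℕ × ℕ, L p ⊆ L' (p.1, 2 * p.2))
    (h2 : ∀ p : ℕ × ℕ, L p ⊆ L' (p.1, 2 * p.2 + 1)) :
    wordSet L * wordSet L ⊆ wordSet L' := by
  rintro x hx
  rw [Set.mem_mul] at hx
  obtain ⟨a, ⟨l1, hn1, hm1, rfl⟩, b, ⟨l2, hn2, hm2, rfl⟩, rfl⟩ := hx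
  refine ⟨l1.map (fun q => ((q.1.1, 2 * q.1.2), q.2)) ++
      l2.map (fun q => ((q.1.1, 2 * q.1.2 + 1), q.2)), ?_, ?_, ?_⟩
  · rw [List.map_append]
    have e1 : (l1.map (fun q : (ℕ × ℕ) × G => ((q.1.1, 2 * q.1.2), q.2))).map Prod.fst
        = (l1.map Prod.fst).map (fun p : ℕ × ℕ => (p.1, 2 * p.2)) := by
      simp [List.map_map, Function.comp]
    have e2 : (l2.map (fun q : (ℕ × ℕ) × G => ((q.1.1, 2 * q.1.2 + 1), q.2))).map Prod.fst
        = (l2.map Prod.fst).map (fun p : ℕ × ℕ => (p.1, 2 * p.2 + 1)) := by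
      simp [List.map_map, Function.comp]
    rw [e1, e2, List.nodup_append]
    refine ⟨hn1.map ?_, hn2.map ?_, ?_⟩
    · rintro ⟨a, b⟩ ⟨c, d⟩ h
      simp only [Prod.mk.injEq] at h ⊢
      omega
    · rintro ⟨a, b⟩ ⟨c, d⟩ h
      simp only [Prod.mk.injEq] at h ⊢
      omega
    · intro p hp q hq h
      simp only [List.mem_map] at hp hq
      obtain ⟨⟨a, b⟩, _, rfl⟩ := hp
      obtain ⟨⟨c, d⟩, _, rfl⟩ := hq
      simp only [Prod.mk.injEq] at h
      omega
  · rintro q hq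
    rw [List.mem_append] at hq
    rcases hq with hq | hq <;> simp only [List.mem_map] at hq <;>
      obtain ⟨q', hq', rfl⟩ := hq
    · exact h1 q'.1 (hm1 q' hq')
    · exact h2 q'.1 (hm2 q' hq')
  · rw [List.map_append, List.prod_append]
    congr 1 <;> (simp only [List.map_map]; rfl)


lemma prod_mem_of_nodup (W : ℕ → Set G) (h1 : ∀ k, (1 : G) ∈ W k)
    (h3 : ∀ k, ∀ a ∈ W (k + 1), ∀ b ∈ W (k + 1), ∀ c ∈ W (k + 1), a * b * c ∈ W k) :
    ∀ (m : ℕ) (l : List (ℕ × G)), l.length ≤ m → (l.map Prod.fst).Nodup →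
      ∀ N, (∀ q ∈ l, q.2 ∈ W q.1 ∧ N < q.1) → (l.map Prod.snd).prod ∈ W N := by
  have hstep : ∀ k, W (k + 1) ⊆ W k := by
    intro k a ha
    simpa using h3 k a ha 1 (h1 _) 1 (h1 _)
  have hanti : ∀ {m n : ℕ}, m ≤ n → W n ⊆ W m := by
    intro m n h
    induction h with
    | refl => exact le_refl _
    | step _ ih => exact (hstep _).trans ih
  intro m
  induction m with
  | zero =>
    intro l hl _ N _
    have : l = [] := List.eq_nil_of_length_eq_zero (Nat.le_zero.mp hl)
    subst this
    simpa using h1 N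
  | succ m ih =>
    intro l hl hnd N hq
    by_cases hne : l = []
    · subst hne; simpa using h1 N
    -- choose element with minimal first coordinate
    have hne' : ((l.map Prod.fst).toFinset : Finset ℕ).Nonempty := by
      simp [List.toFinset_nonempty_iff, hne]
    obtain ⟨k, hkmem, hkmin⟩ := Finset.exists_min_image _ id hne'
    rw [List.mem_toFinset, List.mem_map] at hkmem
    obtain ⟨q, hql, hqk⟩ := hkmem
    obtain ⟨s, t, rfl⟩ := List.append_of_mem hql
    have hmin : ∀ q' ∈ s ++ q :: t, k ≤ q'.1 := by
      intro q' hq'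
      exact hkmin q'.1 (by rw [List.mem_toFinset, List.mem_map]; exact ⟨q', hq', rfl⟩)
    rw [List.map_append, List.nodup_append] at hnd
    obtain ⟨hnds, hndqt, hdisj⟩ := hnd
    rw [List.map_cons, List.nodup_cons] at hndqt
    have hNltk : N < k := hqk ▸ (hq q hql).2
    have hkpos : 0 < k := lt_of_le_of_lt (Nat.zero_le N) hNltk
    have hNk : N ≤ k - 1 := by omega
    have hs : (s.map Prod.snd).prod ∈ W k := by
      refine ih s (by rw [List.length_append, List.length_cons] at hl; omega) hnds k ?_
      intro q' hq'
      refine ⟨(hq q' (by simp [hq'])).1, ?_⟩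
      have hle := hmin q' (by simp [hq'])
      have hne2 : q'.1 ≠ k := by
        intro h
        exact hdisj q'.1 (List.mem_map_of_mem (f := Prod.fst) hq') k (by simp [hqk]) h
      omega
    have ht : (t.map Prod.snd).prod ∈ W k := by
      refine ih t (by rw [List.length_append, List.length_cons] at hl; omega) hndqt.2 k ?_
      intro q' hq'
      refine ⟨(hq q' (by simp [hq'])).1, ?_⟩
      have hle := hmin q' (by simp [hq'])
      have hne2 : q'.1 ≠ k := by
        intro h
        exact hndqt.1 (by rw [hqk, ← h]; exact List.mem_map_of_mem (f := Prod.fst) hq')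
      omega
    have hqW : q.2 ∈ W k := hqk ▸ (hq q hql).1
    have : (s.map Prod.snd).prod * q.2 * (t.map Prod.snd).prod ∈ W (k - 1) := by
      have hk1 : k - 1 + 1 = k := by omega
      refine h3 (k - 1) _ ?_ _ ?_ _ ?_ <;> rw [hk1] <;> assumption
    have hprod : ((s ++ q :: t).map Prod.snd).prod
        = (s.map Prod.snd).prod * q.2 * (t.map Prod.snd).prod := by
      rw [List.map_append, List.prod_append, List.map_cons, List.prod_cons, mul_assoc]
    rw [hprod]
    exact hanti hNk this


variable (V : ℕ → (ℕ → ℕ) → Set G) (e : ℕ → G)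

def bSet (f : ℕ → ℕ) (p : ℕ × ℕ) : Set G :=
  V p.1 (fun m => f (Nat.pair (Nat.pair p.1 p.2) m))

def sSet (f : ℕ → ℕ) (p : ℕ × ℕ) : Set G :=
  bSet V f p ∪ (bSet V f p)⁻¹ ∪ {1}

def lSet (f : ℕ → ℕ) (p : ℕ × ℕ) : Set G :=
  sSet V f p ∪ ⋃ j ∈ Finset.range (p.2 + 1), (fun a => e j * a * (e j)⁻¹) '' sSet V f p

def remap (σ : ℕ → ℕ) (q : ℕ) : ℕ :=
  Nat.pair (Nat.pair q.unpair.1.unpair.1 (σ q.unpair.1.unpair.2)) q.unpair.2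

lemma remap_pair (σ : ℕ → ℕ) (n i m : ℕ) :
    remap σ (Nat.pair (Nat.pair n i) m) = Nat.pair (Nat.pair n (σ i)) m := by
  simp [remap]

lemma bSet_remap (σ : ℕ → ℕ) (f : ℕ → ℕ) (p : ℕ × ℕ) :
    bSet V (f ∘ remap σ) p = bSet V f (p.1, σ p.2) := by
  unfold bSet
  congr 1
  funext m
  simp [remap]

lemma one_mem_sSet (f : ℕ → ℕ) (p : ℕ × ℕ) : (1 : G) ∈ sSet V f p := by
  simp [sSet]

lemma sSet_inv (f : ℕ → ℕ) (p : ℕ × ℕ) : (sSet V f p)⁻¹ ⊆ sSet V f p := by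
  intro a ha
  rw [Set.mem_inv] at ha
  rcases ha with (h | h) | h
  · exact Or.inl (Or.inr (by rwa [Set.mem_inv]))
  · exact Or.inl (Or.inl (by rwa [Set.mem_inv, inv_inv] at h))
  · simp only [Set.mem_singleton_iff] at h
    exact Or.inr (by simp [inv_eq_one.mp h])

lemma sSet_mono {f g : ℕ → ℕ} {p p' : ℕ × ℕ} (h : bSet V f p ⊆ bSet V g p') :
    sSet V f p ⊆ sSet V g p' := by
  rintro a ((ha | ha) | ha)
  · exact Or.inl (Or.inl (h ha))
  · exact Or.inl (Or.inr (by rw [Set.mem_inv] at ha ⊢; exact h ha))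
  · exact Or.inr ha

lemma lSet_mono {f g : ℕ → ℕ} {p p' : ℕ × ℕ} (h : bSet V f p ⊆ bSet V g p')
    (h2 : p.2 ≤ p'.2) : lSet V e f p ⊆ lSet V e g p' := by
  rintro a (ha | ha)
  · exact Or.inl (sSet_mono V h ha)
  · simp only [Set.mem_iUnion, Finset.mem_range] at ha
    obtain ⟨j, hj, b, hb, rfl⟩ := ha
    refine Or.inr ?_
    simp only [Set.mem_iUnion, Finset.mem_range]
    exact ⟨j, by omega, b, sSet_mono V h hb, rfl⟩

lemma bSet_subset_lSet (f : ℕ → ℕ) (p : ℕ × ℕ) : bSet V f p ⊆ lSet V e f p :=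
  fun a ha => Or.inl (Or.inl (Or.inl ha))

lemma one_mem_lSet (f : ℕ → ℕ) (p : ℕ × ℕ) : (1 : G) ∈ lSet V e f p :=
  Or.inl (one_mem_sSet V f p)

lemma lSet_inv (f : ℕ → ℕ) (p : ℕ × ℕ) : (lSet V e f p)⁻¹ ⊆ lSet V e f p := by
  intro a ha
  rw [Set.mem_inv] at ha
  rcases ha with ha | ha
  · exact Or.inl (sSet_inv V f p (by rwa [Set.mem_inv]))
  · simp only [Set.mem_iUnion, Finset.mem_range] at ha
    obtain ⟨j, hj, b, hb, hba⟩ := ha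
    refine Or.inr ?_
    simp only [Set.mem_iUnion, Finset.mem_range]
    refine ⟨j, hj, b⁻¹, sSet_inv V f p (by rwa [Set.mem_inv, inv_inv]), ?_⟩
    simp only at hba
    have : a = (e j * b * (e j)⁻¹)⁻¹ := by rw [hba, inv_inv]
    simp only [this]
    group

end Stmt0Aux


open Stmt0Aux in
/-- Theorem 3.1. -/
theorem stmt0' {G : Type*} [Group G] [Countable G] (t : TopologicalSpace G)
    (ht : @IsTopologicalGroup G t _)
    (F : ℕ → Filter G) (hF : ∀ n, ∃ V : (ℕ → ℕ) → Set G, (∀ f, V f ∈ F n) ∧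
      (∀ f g : ℕ → ℕ, f ≤ g → V g ⊆ V f) ∧ ∀ A ∈ F n, ∃ f, V f ⊆ A)
    (hconv : ∀ n, F n ≤ @nhds G t 1)
    (hfinest : ∀ t' : TopologicalSpace G, @IsTopologicalGroup G t' _ →
      (∀ n, F n ≤ @nhds G t' 1) → t ≤ t') :
    ∃ V : (ℕ → ℕ) → Set G, (∀ f, V f ∈ @nhds G t 1) ∧
      (∀ f g : ℕ → ℕ, f ≤ g → V g ⊆ V f) ∧ ∀ A ∈ @nhds G t 1, ∃ f, V f ⊆ A := by
  classical
  obtain ⟨e, he⟩ := exists_surjective_nat G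
  choose V hVmem hVmono hVcof using hF
  choose ι hι using fun a : G => he a
  set VV : (ℕ → ℕ) → Set G := fun f => wordSet (lSet V e f) with hVVdef
  have VVmono : ∀ f g : ℕ → ℕ, f ≤ g → VV g ⊆ VV f := by
    intro f g hfg
    refine wordSet_reindex id Function.injective_id (fun p => ?_)
    exact lSet_mono V e (hVmono p.1 _ _ (fun m => hfg _)) le_rfl
  have VVmemF : ∀ (f : ℕ → ℕ) (n : ℕ), VV f ∈ F n := by
    intro f n
    have hsub : bSet V f (n, 0) ⊆ VV f :=
      (bSet_subset_lSet V e f (n, 0)).trans (letter_subset_wordSet _ (n, 0))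
    have hb : bSet V f (n, 0) ∈ F n := hVmem n _
    exact Filter.mem_of_superset hb hsub
  -- the group filter basis
  have VVmul : ∀ f : ℕ → ℕ, ∃ g, VV g * VV g ⊆ VV f := by
    intro f
    set g : ℕ → ℕ := fun q =>
      max (f (remap (fun i => 2 * i) q)) (f (remap (fun i => 2 * i + 1) q)) with hgdef
    refine ⟨g, wordSet_mul (fun p => ?_) (fun p => ?_)⟩
    · refine lSet_mono V e ?_ (by omega)
      have h1 : bSet V g p ⊆ bSet V (f ∘ remap (fun i => 2 * i)) p :=
        hVmono p.1 _ _ (fun m => le_max_left _ _)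
      rw [bSet_remap] at h1
      exact h1
    · refine lSet_mono V e ?_ (by omega)
      have h1 : bSet V g p ⊆ bSet V (f ∘ remap (fun i => 2 * i + 1)) p :=
        hVmono p.1 _ _ (fun m => le_max_right _ _)
      rw [bSet_remap] at h1
      exact h1
  have VVconj : ∀ (x₀ : G) (f : ℕ → ℕ), ∃ g, ∀ y ∈ VV g, x₀ * y * x₀⁻¹ ∈ VV f := by
    intro x₀ f
    set σ : ℕ → ℕ := fun i =>
      max (ι x₀) ((Finset.range (i + 1)).sup fun j => ι (x₀ * e j)) + (i + 1) with hσdef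
    have hσsup : ∀ i, ((Finset.range (i + 1)).sup fun j => ι (x₀ * e j)) ≤ σ i :=
      fun i => le_trans (le_max_right _ _) (Nat.le_add_right _ _)
    have hσx : ∀ i, ι x₀ ≤ σ i := fun i => le_trans (le_max_left _ _) (Nat.le_add_right _ _)
    have hσmono : StrictMono σ := by
      apply strictMono_nat_of_lt_succ
      intro i
      have h1 : ((Finset.range (i + 1)).sup fun j => ι (x₀ * e j)) ≤
          ((Finset.range (i + 1 + 1)).sup fun j => ι (x₀ * e j)) :=
        Finset.sup_mono (Finset.range_subset_range.mpr (by omega))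
      have h2 := max_le_max (le_refl (ι x₀)) h1
      simp only [hσdef]
      exact Nat.add_lt_add_of_le_of_lt h2 (by omega)
    refine ⟨f ∘ remap σ, ?_⟩
    refine wordSet_conj x₀ (fun p => (p.1, σ p.2)) ?_ ?_
    · rintro ⟨a, b⟩ ⟨c, d⟩ h
      simp only [Prod.mk.injEq] at h ⊢
      exact ⟨h.1, hσmono.injective h.2⟩
    · intro p a ha
      have hs : sSet V (f ∘ remap σ) p = sSet V f (p.1, σ p.2) := by
        unfold sSet
        rw [bSet_remap]
      rcases ha with ha | ha
      · refine Or.inr ?_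
        simp only [Set.mem_iUnion, Finset.mem_range]
        refine ⟨ι x₀, by have := hσx p.2; omega, a, hs ▸ ha, ?_⟩
        simp only [hι x₀]
      · simp only [Set.mem_iUnion, Finset.mem_range] at ha
        obtain ⟨j, hj, b, hb, rfl⟩ := ha
        refine Or.inr ?_
        simp only [Set.mem_iUnion, Finset.mem_range]
        have hjle : ι (x₀ * e j) ≤ σ p.2 := by
          refine le_trans ?_ (hσsup p.2)
          exact Finset.le_sup (f := fun j => ι (x₀ * e j)) (Finset.mem_range.mpr hj)
        refine ⟨ι (x₀ * e j), by omega, b, hs ▸ hb, ?_⟩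
        simp only [hι]
        group
  let B : GroupFilterBasis G :=
    { sets := Set.range VV
      nonempty := ⟨VV id, Set.mem_range_self id⟩
      inter_sets := by
        rintro x y ⟨f, rfl⟩ ⟨g, rfl⟩
        exact ⟨VV (f ⊔ g), Set.mem_range_self _,
          Set.subset_inter (VVmono f _ le_sup_left) (VVmono g _ le_sup_right)⟩
      one' := by
        rintro U ⟨f, rfl⟩
        exact one_mem_wordSet _
      mul' := by
        rintro U ⟨f, rfl⟩
        obtain ⟨g, hg⟩ := VVmul f
        exact ⟨VV g, Set.mem_range_self _, hg⟩
      inv' := by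
        rintro U ⟨f, rfl⟩
        exact ⟨VV f, Set.mem_range_self _, fun x hx => wordSet_inv (lSet_inv V e f) x hx⟩
      conj' := by
        rintro x₀ U ⟨f, rfl⟩
        obtain ⟨g, hg⟩ := VVconj x₀ f
        exact ⟨VV g, Set.mem_range_self _, fun y hy => hg y hy⟩ }
  have hconv' : ∀ n, F n ≤ @nhds G B.topology 1 := by
    intro n
    rw [B.nhds_one_eq]
    intro A hA
    obtain ⟨s, hs, hsub⟩ := B.toFilterBasis.mem_filter_iff.mp hA
    obtain ⟨f, rfl⟩ := hs
    exact Filter.mem_of_superset (VVmemF f n) hsub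
  have hle : t ≤ B.topology := hfinest _ B.isTopologicalGroup hconv'
  have VVnhds : ∀ f, VV f ∈ @nhds G t 1 := fun f =>
    nhds_mono hle (B.mem_nhds_one (Set.mem_range_self f))
  refine ⟨VV, VVnhds, VVmono, ?_⟩
  intro A hA
  letI := t
  haveI := ht
  -- build the chain W
  have step : ∀ s : Set G, ∃ s', s ∈ 𝓝 (1 : G) →
      (s' ∈ 𝓝 (1 : G) ∧ ∀ a ∈ s', ∀ b ∈ s', ∀ c ∈ s', a * b * c ∈ s) := by
    intro s
    by_cases hs : s ∈ 𝓝 (1 : G)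
    · obtain ⟨V1, hV1, h1⟩ := exists_nhds_one_split hs
      obtain ⟨V2, hV2, h2⟩ := exists_nhds_one_split hV1
      refine ⟨V2, fun _ => ⟨hV2, ?_⟩⟩
      intro a ha b hb c hc
      have hbc : b * c ∈ V1 := h2 b hb c hc
      have ha1 : a ∈ V1 := by simpa using h2 a ha 1 (mem_of_mem_nhds hV2)
      have := h1 a ha1 (b * c) hbc
      rwa [← mul_assoc] at this
    · exact ⟨∅, fun h => absurd h hs⟩
  choose nxt hnxt using step
  set W : ℕ → Set G := fun k => Nat.rec A (fun _ s => nxt s) k with hWdef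
  have hW : ∀ k, W k ∈ 𝓝 (1 : G) := by
    intro k
    induction k with
    | zero => exact hA
    | succ k ih => exact (hnxt _ ih).1
  have hW3 : ∀ k, ∀ a ∈ W (k + 1), ∀ b ∈ W (k + 1), ∀ c ∈ W (k + 1), a * b * c ∈ W k :=
    fun k => (hnxt _ (hW k)).2
  have hW1 : ∀ k, (1 : G) ∈ W k := fun k => mem_of_mem_nhds (hW k)
  -- the small sets
  set kp : ℕ × ℕ → ℕ := fun p => Nat.pair p.1 p.2 + 1 with hkpdef
  have hconjW : ∀ (x : G) (s : Set G), s ∈ 𝓝 (1 : G) →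
      (fun a => x * a * x⁻¹) ⁻¹' s ∈ 𝓝 (1 : G) := by
    intro x s hs
    have hc : Continuous fun a : G => x * a * x⁻¹ :=
      (continuous_const.mul continuous_id).mul continuous_const
    apply ContinuousAt.preimage_mem_nhds hc.continuousAt
    simpa using hs
  set Q : ℕ × ℕ → Set G := fun p =>
    W (kp p) ∩ ⋂ j ∈ Finset.range (p.2 + 1), (fun a => e j * a * (e j)⁻¹) ⁻¹' W (kp p)
    with hQdef
  have hQ : ∀ p, Q p ∈ 𝓝 (1 : G) := by
    intro p
    simp only [hQdef]
    refine Filter.inter_mem (hW (kp p)) ?_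
    exact (Filter.biInter_finset_mem _).mpr fun j _ => hconjW (e j) _ (hW (kp p))
  set R : ℕ × ℕ → Set G := fun p => Q p ∩ (fun a : G => a⁻¹) ⁻¹' Q p with hRdef
  have hR : ∀ p, R p ∈ 𝓝 (1 : G) := by
    intro p
    simp only [hRdef]
    refine Filter.inter_mem (hQ p) ?_
    apply ContinuousAt.preimage_mem_nhds continuous_inv.continuousAt
    simpa using hQ p
  have hRQ : ∀ p, ∀ a : G, a ∈ R p → a ∈ Q p ∧ a⁻¹ ∈ Q p := by
    intro p a ha
    simp only [hRdef, Set.mem_inter_iff, Set.mem_preimage] at ha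
    exact ha
  have hQW : ∀ p, ∀ a : G, a ∈ Q p →
      a ∈ W (kp p) ∧ ∀ j < p.2 + 1, e j * a * (e j)⁻¹ ∈ W (kp p) := by
    intro p a ha
    simp only [hQdef, Set.mem_inter_iff, Set.mem_iInter, Set.mem_preimage,
      Finset.mem_range] at ha
    exact ha
  choose φ hφ using fun p : ℕ × ℕ => hVcof p.1 (R p) (hconv p.1 (hR p))
  set f : ℕ → ℕ := fun q => φ (q.unpair.1.unpair.1, q.unpair.1.unpair.2) q.unpair.2 with hfdef
  have hbR : ∀ p : ℕ × ℕ, bSet V f p ⊆ R p := by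
    intro p
    have heq : bSet V f p = V p.1 (φ p) := by
      unfold bSet
      congr 1
      funext m
      simp [hfdef]
    rw [heq]
    exact hφ p
  have hsQ : ∀ p, ∀ a ∈ sSet V f p, a = 1 ∨ a ∈ Q p := by
    intro p a ha
    rcases ha with (h | h) | h
    · exact Or.inr (hRQ p a (hbR p h)).1
    · right
      have h2 := (hRQ p a⁻¹ (hbR p (by rwa [Set.mem_inv] at h))).2
      rwa [inv_inv] at h2
    · exact Or.inl h
  have hLW : ∀ p, lSet V e f p ⊆ W (kp p) := by
    intro p a ha
    rcases ha with ha | ha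
    · rcases hsQ p a ha with rfl | hq
      · exact hW1 (kp p)
      · exact (hQW p a hq).1
    · simp only [Set.mem_iUnion, Finset.mem_range] at ha
      obtain ⟨j, hj, b, hb, rfl⟩ := ha
      rcases hsQ p b hb with rfl | hq
      · simpa using hW1 (kp p)
      · exact (hQW p b hq).2 j hj
  refine ⟨f, ?_⟩
  have hkpinj : Function.Injective kp := by
    rintro ⟨a, b⟩ ⟨c, d⟩ h
    simp only [hkpdef, Nat.add_right_cancel_iff, Nat.pair_eq_pair] at h
    simp [Prod.mk.injEq, h.1, h.2]
  have hsub : VV f ⊆ W 0 := by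
    rintro x ⟨l, hn, hm, rfl⟩
    have hprod := prod_mem_of_nodup W hW1 hW3 l.length (l.map fun q => (kp q.1, q.2))
      (by simp) ?nodup 0 ?cond
    case nodup =>
      have heq : ((l.map fun q => (kp q.1, q.2)).map Prod.fst) = (l.map Prod.fst).map kp := by
        simp only [List.map_map]; rfl
      rw [heq]
      exact hn.map hkpinj
    case cond =>
      intro q hq
      simp only [List.mem_map] at hq
      obtain ⟨q', hq', rfl⟩ := hq
      exact ⟨hLW q'.1 (hm q' hq'), by simp [hkpdef]⟩
    have heq2 : ((l.map fun q => (kp q.1, q.2)).map Prod.snd) = l.map Prod.snd := by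
      simp only [List.map_map]; rfl
    rwa [heq2] at hprod
  exact hsub


/-- Theorem 3.1: if `G` is a countable group, `(ℱ_n)` a countable family of filters on `G`
each admitting an `ω^ω`-base, and `t` is the finest group topology on `G` making every
`ℱ_n` converge to the identity, then `(G, t)` admits a local `ω^ω`-base. -/
theorem stmt0 {G : Type*} [Group G] [Countable G] (t : TopologicalSpace G)
    (ht : @IsTopologicalGroup G t _)
    (F : ℕ → Filter G) (hF : ∀ n, HasOmegaOmegaBase (F n))
    (hconv : ∀ n, F n ≤ @nhds G t 1)
    (hfinest : ∀ t' : TopologicalSpace G, @IsTopologicalGroup G t' _ →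
      (∀ n, F n ≤ @nhds G t' 1) → t ≤ t') :
    HasOmegaOmegaBase (@nhds G t 1) := by
  exact stmt0' t ht F hF hconv hfinest
end

section
/- Let X be a set and let (ℱ_n)_{n∈ℕ} be a countable family of filters on X, each admitting an ω^ω-base. Then the intersection filter ℱ = ⋂_{n∈ℕ} ℱ_n (whose members are exactly the subsets of X belonging to every ℱ_n; in terms of the lattice of filters, the supremum ⨆_n ℱ_n) admits an ω^ω-base. -/
/-- Lemma 3.2: if each filter `ℱ_n` on `X` admits an `ω^ω`-base, then so does the
intersection filter `⋂_n ℱ_n` (the supremum `⨆ n, ℱ_n` in the lattice of filters,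
whose members are exactly the sets belonging to every `ℱ_n`). -/
theorem stmt1 {X : Type*} (F : ℕ → Filter X) (hF : ∀ n, HasOmegaOmegaBase (F n)) :
    HasOmegaOmegaBase (⨆ n, F n) := by
  choose V hmem hmono hcof using hF
  refine ⟨fun f => ⋃ n, V n (fun k => f (Nat.pair n k)), ?_, ?_, ?_⟩
  · intro f
    rw [Filter.mem_iSup]
    intro n
    exact Filter.mem_of_superset (hmem n _) (Set.subset_iUnion (fun n => V n fun k => f (Nat.pair n k)) n)
  · intro f g hfg
    exact Set.iUnion_mono fun n => hmono n _ _ (fun k => hfg _)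
  · intro A hA
    rw [Filter.mem_iSup] at hA
    choose f hf using fun n => hcof n A (hA n)
    refine ⟨fun m => f m.unpair.1 m.unpair.2, Set.iUnion_subset fun n => ?_⟩
    have h : (fun k => f (Nat.pair n k).unpair.1 (Nat.pair n k).unpair.2) = f n := by
      funext k; simp [Nat.unpair_pair]
    rw [h]; exact hf n
end

section
/- Let G be a group and let (ℱ_n)_{n∈ℕ} be a countable family of filters on G, each of which admits an ω^ω-base. Suppose t is a group topology on G with the SIN property (there is a neighborhood base at the identity consisting of sets V with gVg⁻¹ = V for every g ∈ G) such that every ℱ_n converges to the identity with respect to t, and t is the finest such topology (every SIN group topology t' on G in which every ℱ_n converges to the identity is coarser than t). Then (G, t) admits a local ω^ω-base. -/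
/-- A group topology has the SIN property if there is a neighbourhood base at the
identity consisting of conjugation-invariant sets. -/
def IsSIN {G : Type*} [Group G] (t : TopologicalSpace G) : Prop :=
  ∀ U ∈ @nhds G t 1, ∃ W ∈ @nhds G t 1, W ⊆ U ∧
    ∀ g : G, (fun x => g * x * g⁻¹) '' W = W

open Pointwise

section Aux
variable {G : Type*} [Group G]

/-- Conjugation invariance. -/
def ConjInv (U : Set G) : Prop := ∀ g x, x ∈ U → g * x * g⁻¹ ∈ U

lemma ConjInv.inter {U V : Set G} (hU : ConjInv U) (hV : ConjInv V) : ConjInv (U ∩ V) :=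
  fun g x hx => ⟨hU g x hx.1, hV g x hx.2⟩

lemma ConjInv.inv {U : Set G} (hU : ConjInv U) : ConjInv U⁻¹ := by
  intro g x hx
  have h := hU g x⁻¹ hx
  have : (g * x * g⁻¹)⁻¹ = g * x⁻¹ * g⁻¹ := by group
  simpa [Set.mem_inv, this] using h

lemma ConjInv.commute {U V : Set G} (hU : ConjInv U) (hV : ConjInv V) : U * V = V * U := by
  have key : ∀ (A B : Set G), ConjInv A → ConjInv B → A * B ⊆ B * A := by
    intro A B hA _hB x hx
    rcases Set.mem_mul.mp hx with ⟨a, ha, b, hb, rfl⟩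
    have : b⁻¹ * a * b⁻¹⁻¹ ∈ A := hA b⁻¹ a ha
    have hb' : b * (b⁻¹ * a * b⁻¹⁻¹) = a * b := by group
    exact hb' ▸ Set.mul_mem_mul hb this
  exact le_antisymm (key U V hU hV) (key V U hV hU)

lemma ConjInv.image_eq {U : Set G} (hU : ConjInv U) (g : G) :
    (fun x => g * x * g⁻¹) '' U = U := by
  apply Set.Subset.antisymm
  · rintro _ ⟨x, hx, rfl⟩; exact hU g x hx
  · intro x hx
    refine ⟨g⁻¹ * x * g⁻¹⁻¹, hU g⁻¹ x hx, by group⟩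

/-- conjugation-symmetric-hull of a set, together with `1`. -/
def chull (A : Set G) : Set G := {1} ∪ ⋃ g : G, (fun x => g * x * g⁻¹) '' (A ∪ A⁻¹)

lemma one_mem_chull (A : Set G) : (1 : G) ∈ chull A := Or.inl rfl

lemma subset_chull (A : Set G) : A ⊆ chull A := by
  intro a ha
  exact Or.inr (Set.mem_iUnion.mpr ⟨1, ⟨a, Or.inl ha, by group⟩⟩)

lemma chull_mono {A B : Set G} (h : A ⊆ B) : chull A ⊆ chull B := by
  rintro x (hx | hx)
  · exact Or.inl hx
  · rcases Set.mem_iUnion.mp hx with ⟨g, a, ha, rfl⟩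
    refine Or.inr (Set.mem_iUnion.mpr ⟨g, a, ?_, rfl⟩)
    rcases ha with ha | ha
    · exact Or.inl (h ha)
    · exact Or.inr (Set.inv_subset_inv.mpr h ha)

lemma chull_conjInv (A : Set G) : ConjInv (chull A) := by
  rintro g x (hx | hx)
  · left; simp_all
  · rcases Set.mem_iUnion.mp hx with ⟨k, a, ha, rfl⟩
    refine Or.inr (Set.mem_iUnion.mpr ⟨g * k, a, ha, by group⟩)

lemma chull_inv (A : Set G) : (chull A)⁻¹ = chull A := by
  have key : ∀ x : G, x ∈ chull A → x⁻¹ ∈ chull A := by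
    rintro x (hx | hx)
    · left; simp_all
    · rcases Set.mem_iUnion.mp hx with ⟨k, a, ha, rfl⟩
      refine Or.inr (Set.mem_iUnion.mpr ⟨k, a⁻¹, ?_, by group⟩)
      rcases ha with ha | ha
      · exact Or.inr (by simpa using ha)
      · exact Or.inl (by simpa using ha)
  apply Set.Subset.antisymm
  · intro x hx; simpa using key x⁻¹ (by simpa using hx)
  · intro x hx; exact Set.mem_inv.mpr (by simpa using key x hx)

lemma chull_subset {A : Set G} (h1 : (1 : G) ∈ A) (hsym : A⁻¹ = A) (hinv : ConjInv A) :
    chull A ⊆ A := by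
  rintro x (hx | hx)
  · simp_all
  · rcases Set.mem_iUnion.mp hx with ⟨g, a, ha, rfl⟩
    have ha' : a ∈ A := by
      rcases ha with ha | ha
      · exact ha
      · rw [← hsym]; exact Set.mem_inv.mpr (by simpa using ha)
    exact hinv g a ha'

end Aux

section Words
variable {G : Type*} [Group G]

/-- product of the sets `S i` for `i` in a list -/
def lprod (S : ℕ → Set G) (l : List ℕ) : Set G := (l.map S).prod

/-- the word `S 0 * S 1 * ... * S k`. -/
def word (S : ℕ → Set G) (k : ℕ) : Set G := lprod S (List.range (k+1))

/-- union of all the words. -/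
def bigU (S : ℕ → Set G) : Set G := ⋃ k, word S k

lemma lprod_nil (S : ℕ → Set G) : lprod S [] = 1 := rfl

lemma lprod_cons (S : ℕ → Set G) (i : ℕ) (l : List ℕ) :
    lprod S (i :: l) = S i * lprod S l := by
  simp [lprod, List.prod_cons]

lemma lprod_append (S : ℕ → Set G) (l₁ l₂ : List ℕ) :
    lprod S (l₁ ++ l₂) = lprod S l₁ * lprod S l₂ := by
  simp [lprod, List.prod_append]

lemma lprod_mono {S T : ℕ → Set G} (h : ∀ i, S i ⊆ T i) (l : List ℕ) :
    lprod S l ⊆ lprod T l := by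
  induction l with
  | nil => simp [lprod_nil]
  | cons i l ih =>
    rw [lprod_cons, lprod_cons]
    exact Set.mul_subset_mul (h i) ih

lemma one_mem_lprod {S : ℕ → Set G} (h : ∀ i, (1 : G) ∈ S i) (l : List ℕ) :
    (1 : G) ∈ lprod S l := by
  induction l with
  | nil => simp [lprod_nil, Set.one_mem_one]
  | cons i l ih =>
    rw [lprod_cons]
    simpa using Set.mul_mem_mul (h i) ih

lemma lprod_conjInv {S : ℕ → Set G} (h : ∀ i, ConjInv (S i)) (l : List ℕ) :
    ConjInv (lprod S l) := by
  induction l with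
  | nil =>
    intro g x hx
    simp only [lprod_nil, Set.mem_one] at hx ⊢
    simp [hx]
  | cons i l ih =>
    intro g x hx
    rw [lprod_cons] at hx ⊢
    rcases Set.mem_mul.mp hx with ⟨a, ha, b, hb, rfl⟩
    have : g * (a * b) * g⁻¹ = (g * a * g⁻¹) * (g * b * g⁻¹) := by group
    rw [this]
    exact Set.mul_mem_mul (h i g a ha) (ih g b hb)

lemma pairwise_commute_of_conjInv {S : ℕ → Set G} (h : ∀ i, ConjInv (S i)) (l : List ℕ) :
    (l.map S).Pairwise Commute := by
  induction l with
  | nil => simp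
  | cons i l ih =>
    rw [List.map_cons, List.pairwise_cons]
    refine ⟨?_, ih⟩
    rintro U hU
    rcases List.mem_map.mp hU with ⟨j, _, rfl⟩
    exact (h i).commute (h j)

lemma lprod_perm {S : ℕ → Set G} (h : ∀ i, ConjInv (S i)) {l l' : List ℕ}
    (hp : l.Perm l') : lprod S l = lprod S l' :=
  List.Perm.prod_eq' (hp.map S) (pairwise_commute_of_conjInv h l)

lemma word_succ (S : ℕ → Set G) (k : ℕ) :
    word S (k+1) = word S k * S (k+1) := by
  simp [word, List.range_succ, lprod_append, lprod, List.prod_cons, mul_assoc]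

lemma word_zero (S : ℕ → Set G) : word S 0 = S 0 * 1 := by
  simp [word, lprod, List.range_succ]

/-- key combinatorial lemma: product over a duplicate-free list lands in a word. -/
lemma lprod_nodup_subset_word {S : ℕ → Set G} (hinv : ∀ i, ConjInv (S i))
    (h1 : ∀ i, (1 : G) ∈ S i) :
    ∀ k (l : List ℕ), l.Nodup → (∀ i ∈ l, i ≤ k) → lprod S l ⊆ word S k := by
  intro k
  induction k with
  | zero =>
    intro l hnd hle
    match l, hnd, hle with
    | [], _, _ =>
      rw [word_zero, lprod_nil]
      intro x hx
      simp only [Set.mem_one] at hx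
      subst hx
      simpa using Set.mul_mem_mul (h1 0) Set.one_mem_one
    | [a], _, hle =>
      have : a = 0 := Nat.le_zero.mp (hle a (by simp))
      subst this
      rw [word_zero, lprod_cons, lprod_nil]
    | a :: b :: l, hnd, hle =>
      exfalso
      have ha : a = 0 := Nat.le_zero.mp (hle a (by simp))
      have hb : b = 0 := Nat.le_zero.mp (hle b (by simp))
      subst ha; subst hb
      simp at hnd
  | succ k ih =>
    intro l hnd hle
    by_cases hmem : (k+1) ∈ l
    · have hperm : l.Perm ((k+1) :: l.erase (k+1)) := List.perm_cons_erase hmem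
      have hnd' : (l.erase (k+1)).Nodup := hnd.erase _
      have hnotmem : (k+1) ∉ l.erase (k+1) := fun h => hnd.not_mem_erase h
      have hle' : ∀ i ∈ l.erase (k+1), i ≤ k := by
        intro i hi
        have hil : i ∈ l := List.mem_of_mem_erase hi
        rcases Nat.lt_or_ge i (k+1) with h' | h'
        · omega
        · have : i = k + 1 := le_antisymm (hle i hil) h'
          exact absurd (this ▸ hi) hnotmem
      calc lprod S l = lprod S ((k+1) :: l.erase (k+1)) := lprod_perm hinv hperm
        _ = S (k+1) * lprod S (l.erase (k+1)) := lprod_cons ..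
        _ = lprod S (l.erase (k+1)) * S (k+1) := (hinv (k+1)).commute (lprod_conjInv hinv _)
        _ ⊆ word S k * S (k+1) := Set.mul_subset_mul_right (ih _ hnd' hle')
        _ = word S (k+1) := (word_succ S k).symm
    · have hle' : ∀ i ∈ l, i ≤ k := by
        intro i hi
        have := hle i hi
        rcases Nat.lt_or_ge i (k+1) with h' | h'
        · omega
        · exact absurd (le_antisymm this h' ▸ hi) hmem
      calc lprod S l ⊆ word S k := ih l hnd hle'
        _ ⊆ word S k * S (k+1) := by
            intro x hx
            simpa using Set.mul_mem_mul hx (h1 (k+1))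
        _ = word S (k+1) := (word_succ S k).symm

lemma le_foldr_max (l : List ℕ) : ∀ i ∈ l, i ≤ l.foldr max 0 := by
  induction l with
  | nil => simp
  | cons a l ih =>
    intro i hi
    rw [List.foldr_cons]
    rcases List.mem_cons.mp hi with rfl | hi
    · exact le_max_left _ _
    · exact le_trans (ih i hi) (le_max_right _ _)

lemma lprod_nodup_subset_bigU {S : ℕ → Set G} (hinv : ∀ i, ConjInv (S i))
    (h1 : ∀ i, (1 : G) ∈ S i) {l : List ℕ} (hnd : l.Nodup) :
    lprod S l ⊆ bigU S := by
  intro x hx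
  exact Set.mem_iUnion.mpr ⟨l.foldr max 0,
    lprod_nodup_subset_word hinv h1 _ l hnd (le_foldr_max l) hx⟩

lemma mem_bigU_iff {S : ℕ → Set G} {x : G} : x ∈ bigU S ↔ ∃ k, x ∈ word S k :=
  Set.mem_iUnion

lemma one_mem_bigU {S : ℕ → Set G} (h1 : ∀ i, (1 : G) ∈ S i) : (1 : G) ∈ bigU S :=
  Set.mem_iUnion.mpr ⟨0, one_mem_lprod h1 _⟩

lemma bigU_conjInv {S : ℕ → Set G} (hinv : ∀ i, ConjInv (S i)) : ConjInv (bigU S) := by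
  intro g x hx
  rcases mem_bigU_iff.mp hx with ⟨k, hk⟩
  exact mem_bigU_iff.mpr ⟨k, lprod_conjInv hinv _ g x hk⟩

lemma bigU_mono {S T : ℕ → Set G} (h : ∀ i, S i ⊆ T i) : bigU S ⊆ bigU T := by
  intro x hx
  rcases mem_bigU_iff.mp hx with ⟨k, hk⟩
  exact mem_bigU_iff.mpr ⟨k, lprod_mono h _ hk⟩

lemma subset_bigU {S : ℕ → Set G} (h1 : ∀ i, (1 : G) ∈ S i) (i : ℕ) : S i ⊆ bigU S := by
  intro x hx
  refine Set.mem_iUnion.mpr ⟨i, ?_⟩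
  cases i with
  | zero => rw [word_zero]; simpa using Set.mul_mem_mul hx Set.one_mem_one
  | succ k =>
    rw [word_succ]
    have h1' : (1:G) ∈ word S k := one_mem_lprod h1 _
    simpa using Set.mul_mem_mul h1' hx

lemma bigU_inv_subset {S : ℕ → Set G} (hinv : ∀ i, ConjInv (S i))
    (h1 : ∀ i, (1 : G) ∈ S i) (hsym : ∀ i, (S i)⁻¹ = S i) :
    (bigU S)⁻¹ ⊆ bigU S := by
  intro x hx
  rcases mem_bigU_iff.mp (Set.mem_inv.mp hx) with ⟨k, hk⟩
  -- x⁻¹ ∈ word S k; show x ∈ lprod over reversed list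
  have key : ∀ l : List ℕ, ∀ y : G, y ∈ lprod S l → y⁻¹ ∈ lprod S l.reverse := by
    intro l
    induction l with
    | nil => intro y hy; simp only [lprod_nil, Set.mem_one] at hy; simp [List.reverse_nil, lprod_nil, hy]
    | cons i l ih =>
      intro y hy
      rw [lprod_cons] at hy
      rcases Set.mem_mul.mp hy with ⟨a, ha, b, hb, rfl⟩
      rw [List.reverse_cons, lprod_append, mul_inv_rev]
      refine Set.mul_mem_mul (ih b hb) ?_
      rw [lprod_cons, lprod_nil]
      have : a⁻¹ ∈ S i := by rw [← hsym i]; exact Set.inv_mem_inv.mpr ha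
      simpa using Set.mul_mem_mul this Set.one_mem_one
  have hx' : x ∈ lprod S (List.range (k+1)).reverse := by
    have := key (List.range (k+1)) x⁻¹ hk
    simpa using this
  exact lprod_nodup_subset_bigU hinv h1 (List.nodup_reverse.mpr List.nodup_range) hx'

end Words

section Pairing

/-- first duplication injection -/
def pA (i : ℕ) : ℕ := Nat.pair (Nat.unpair i).1 (2 * (Nat.unpair i).2)
/-- second duplication injection -/
def pB (i : ℕ) : ℕ := Nat.pair (Nat.unpair i).1 (2 * (Nat.unpair i).2 + 1)

lemma pA_injective : Function.Injective pA := by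
  intro i j h
  have h' := congrArg Nat.unpair h
  simp only [pA, Nat.unpair_pair, Prod.mk.injEq] at h'
  obtain ⟨h1, h2'⟩ := h'
  have h2 : (Nat.unpair i).2 = (Nat.unpair j).2 := by omega
  calc i = Nat.pair (Nat.unpair i).1 (Nat.unpair i).2 := (Nat.pair_unpair i).symm
    _ = Nat.pair (Nat.unpair j).1 (Nat.unpair j).2 := by rw [h1, h2]
    _ = j := Nat.pair_unpair j

lemma pB_injective : Function.Injective pB := by
  intro i j h
  have h' := congrArg Nat.unpair h
  simp only [pB, Nat.unpair_pair, Prod.mk.injEq] at h'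
  obtain ⟨h1, h2'⟩ := h'
  have h2 : (Nat.unpair i).2 = (Nat.unpair j).2 := by omega
  calc i = Nat.pair (Nat.unpair i).1 (Nat.unpair i).2 := (Nat.pair_unpair i).symm
    _ = Nat.pair (Nat.unpair j).1 (Nat.unpair j).2 := by rw [h1, h2]
    _ = j := Nat.pair_unpair j

lemma pA_ne_pB (i j : ℕ) : pA i ≠ pB j := by
  intro h
  have h' := congrArg (fun n => (Nat.unpair n).2) h
  simp only [pA, pB, Nat.unpair_pair] at h'
  omega

lemma unpair_pA_fst (i : ℕ) : (Nat.unpair (pA i)).1 = (Nat.unpair i).1 := by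
  simp [pA, Nat.unpair_pair]

lemma unpair_pB_fst (i : ℕ) : (Nat.unpair (pB i)).1 = (Nat.unpair i).1 := by
  simp [pB, Nat.unpair_pair]

end Pairing

section More
variable {G : Type*} [Group G]

lemma lprod_comp (S : ℕ → Set G) (σ : ℕ → ℕ) (l : List ℕ) :
    lprod (fun i => S (σ i)) l = lprod S (l.map σ) := by
  simp [lprod, List.map_map, Function.comp_def]

/-- the square of a doubled `bigU` is contained in the original `bigU`. -/
lemma bigU_sq {S T : ℕ → Set G} (hinv : ∀ i, ConjInv (S i)) (h1 : ∀ i, (1 : G) ∈ S i)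
    (hTA : ∀ i, T i ⊆ S (pA i)) (hTB : ∀ i, T i ⊆ S (pB i)) :
    bigU T * bigU T ⊆ bigU S := by
  rintro z hz
  rcases Set.mem_mul.mp hz with ⟨x, hx, y, hy, rfl⟩
  rcases mem_bigU_iff.mp hx with ⟨j, hj⟩
  rcases mem_bigU_iff.mp hy with ⟨k, hk⟩
  have hx' : x ∈ lprod S ((List.range (j+1)).map pA) := by
    rw [← lprod_comp]
    exact lprod_mono (fun i => hTA i) _ hj
  have hy' : y ∈ lprod S ((List.range (k+1)).map pB) := by
    rw [← lprod_comp]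
    exact lprod_mono (fun i => hTB i) _ hk
  have hxy : x * y ∈ lprod S ((List.range (j+1)).map pA ++ (List.range (k+1)).map pB) := by
    rw [lprod_append]
    exact Set.mul_mem_mul hx' hy'
  have hnd : ((List.range (j+1)).map pA ++ (List.range (k+1)).map pB).Nodup := by
    refine List.Nodup.append (List.nodup_range.map pA_injective)
      (List.nodup_range.map pB_injective) ?_
    intro a ha hb
    rcases List.mem_map.mp ha with ⟨i, _, rfl⟩
    rcases List.mem_map.mp hb with ⟨i', _, h⟩
    exact pA_ne_pB i i' h.symm
  exact lprod_nodup_subset_bigU hinv h1 hnd hxy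

/-- telescoping: a word in a decreasing chain of squares is small. -/
lemma word_chain_subset {W : ℕ → Set G} (h1 : ∀ k, (1 : G) ∈ W k)
    (hsq : ∀ k, W (k+1) * W (k+1) ⊆ W k) (k : ℕ) :
    word (fun i => W (i+2)) k ⊆ W 1 := by
  have key : ∀ k, word (fun i => W (i+2)) k * W (k+2) ⊆ W 1 := by
    intro k
    induction k with
    | zero =>
      rw [word_zero]
      calc (W 2 * 1) * W 2 = W 2 * W 2 := by rw [mul_one]
        _ ⊆ W 1 := hsq 1
    | succ k ih =>
      rw [word_succ]
      calc (word (fun i => W (i+2)) k * W (k+3)) * W (k+3)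
          = word (fun i => W (i+2)) k * (W (k+3) * W (k+3)) := by rw [mul_assoc]
        _ ⊆ word (fun i => W (i+2)) k * W (k+2) := Set.mul_subset_mul_left (hsq (k+2))
        _ ⊆ W 1 := ih
  intro x hx
  exact key k (by simpa using Set.mul_mem_mul hx (h1 (k+2)))

end More

/-- Theorem 3.17: if `G` is a group, `(ℱ_n)` a countable family of filters on `G` each
admitting an `ω^ω`-base, and `t` is the finest SIN group topology on `G` making every
`ℱ_n` converge to the identity, then `(G, t)` admits a local `ω^ω`-base. -/
theorem stmt3 {G : Type*} [Group G] (t : TopologicalSpace G)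
    (ht : @IsTopologicalGroup G t _) (hSIN : IsSIN t)
    (F : ℕ → Filter G) (hF : ∀ n, HasOmegaOmegaBase (F n))
    (hconv : ∀ n, F n ≤ @nhds G t 1)
    (hfinest : ∀ t' : TopologicalSpace G, @IsTopologicalGroup G t' _ → IsSIN t' →
      (∀ n, F n ≤ @nhds G t' 1) → t ≤ t') :
    HasOmegaOmegaBase (@nhds G t 1) := by
  classical
  choose VV hVV_mem hVV_mono hVV_cof using hF
  let Good : (ℕ → Set G) → Prop := fun A => ∀ i, A i ∈ F (Nat.unpair i).1
  let UU : (ℕ → Set G) → Set G := fun A => bigU (fun i => chull (A i))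
  have hUU_inv : ∀ A : ℕ → Set G, ConjInv (UU A) :=
    fun A => bigU_conjInv (fun i => chull_conjInv _)
  have hUU_one : ∀ A : ℕ → Set G, (1 : G) ∈ UU A :=
    fun A => one_mem_bigU (fun i => one_mem_chull _)
  have hUU_mono : ∀ A B : ℕ → Set G, (∀ i, A i ⊆ B i) → UU A ⊆ UU B :=
    fun A B h => bigU_mono (fun i => chull_mono (h i))
  have hUU_invset : ∀ A : ℕ → Set G, (UU A)⁻¹ ⊆ UU A := fun A =>
    bigU_inv_subset (fun i => chull_conjInv _) (fun i => one_mem_chull _) (fun i => chull_inv _)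
  -- the group filter basis
  let B : GroupFilterBasis G :=
  { sets := {U | ∃ A : ℕ → Set G, Good A ∧ U = UU A}
    nonempty := ⟨UU (fun _ => Set.univ), ⟨fun _ => Set.univ, fun _ => Filter.univ_mem, rfl⟩⟩
    inter_sets := by
      rintro x y ⟨A, hA, rfl⟩ ⟨A', hA', rfl⟩
      refine ⟨UU (fun i => A i ∩ A' i),
        ⟨fun i => A i ∩ A' i, fun i => Filter.inter_mem (hA i) (hA' i), rfl⟩, ?_⟩
      exact Set.subset_inter (hUU_mono _ _ fun i => Set.inter_subset_left)
        (hUU_mono _ _ fun i => Set.inter_subset_right)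
    one' := by rintro U ⟨A, hA, rfl⟩; exact hUU_one A
    mul' := by
      rintro U ⟨A, hA, rfl⟩
      refine ⟨UU (fun i => A (pA i) ∩ A (pB i)),
        ⟨fun i => A (pA i) ∩ A (pB i), ?_, rfl⟩, ?_⟩
      · intro i
        refine Filter.inter_mem ?_ ?_
        · have := hA (pA i); rwa [unpair_pA_fst i] at this
        · have := hA (pB i); rwa [unpair_pB_fst i] at this
      · exact bigU_sq (fun i => chull_conjInv _) (fun i => one_mem_chull _)
          (fun i => chull_mono Set.inter_subset_left)
          (fun i => chull_mono Set.inter_subset_right)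
    inv' := by
      rintro U ⟨A, hA, rfl⟩
      refine ⟨UU A, ⟨A, hA, rfl⟩, ?_⟩
      intro x hx
      have hx' : x⁻¹ ∈ (UU A)⁻¹ := by simpa using hx
      exact hUU_invset A hx'
    conj' := by
      rintro x₀ U ⟨A, hA, rfl⟩
      exact ⟨UU A, ⟨A, hA, rfl⟩, fun x hx => hUU_inv A x₀ x hx⟩ }
  let t' : TopologicalSpace G := B.topology
  have ht' : @IsTopologicalGroup G t' _ := B.isTopologicalGroup
  have hmemB : ∀ A : ℕ → Set G, Good A → UU A ∈ @nhds G t' 1 := by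
    intro A hA
    exact B.mem_nhds_one ⟨A, hA, rfl⟩
  have hSIN' : IsSIN t' := by
    intro U hU
    rw [B.nhds_one_eq] at hU
    rcases B.toFilterBasis.mem_filter_iff.mp hU with ⟨s, hs, hsU⟩
    rcases hs with ⟨A, hA, rfl⟩
    exact ⟨UU A, hmemB A hA, hsU, fun g => (hUU_inv A).image_eq g⟩
  have hconv' : ∀ n, F n ≤ @nhds G t' 1 := by
    intro n s hs
    rw [B.nhds_one_eq] at hs
    rcases B.toFilterBasis.mem_filter_iff.mp hs with ⟨u, hu, hsU⟩
    rcases hu with ⟨A, hA, rfl⟩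
    have h1 : A (Nat.pair n 0) ∈ F n := by
      have := hA (Nat.pair n 0)
      rwa [Nat.unpair_pair] at this
    refine Filter.mem_of_superset h1 ?_
    exact ((subset_chull _).trans
      (subset_bigU (fun i => one_mem_chull (A i)) (Nat.pair n 0))).trans hsU
  have hle : t ≤ t' := hfinest t' ht' hSIN' hconv'
  have hmemT : ∀ A : ℕ → Set G, Good A → UU A ∈ @nhds G t 1 :=
    fun A hA => nhds_mono hle (hmemB A hA)
  -- Part (b): every t-neighbourhood of 1 contains some `UU A`.
  have step : ∀ U : Set G, ∃ W : Set G, U ∈ @nhds G t 1 →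
      W ∈ @nhds G t 1 ∧ ConjInv W ∧ W⁻¹ = W ∧ (1 : G) ∈ W ∧ W * W ⊆ U := by
    intro U
    by_cases hU : U ∈ @nhds G t 1
    · letI := t
      haveI := ht
      obtain ⟨V, hV, hVV⟩ := exists_nhds_one_split hU
      obtain ⟨W₀, hW₀, hW₀V, hW₀conj⟩ := hSIN V hV
      have hW₀inv : ConjInv W₀ := by
        intro g x hx
        rw [← hW₀conj g]
        exact ⟨x, hx, rfl⟩
      refine ⟨W₀ ∩ W₀⁻¹, fun _ => ⟨?_, hW₀inv.inter hW₀inv.inv, ?_, ?_, ?_⟩⟩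
      · exact Filter.inter_mem hW₀ (inv_mem_nhds_one G hW₀)
      · rw [Set.inter_inv, inv_inv, Set.inter_comm]
      · exact ⟨mem_of_mem_nhds hW₀, Set.mem_inv.mpr (by simpa using mem_of_mem_nhds hW₀)⟩
      · rintro z hz
        rcases Set.mem_mul.mp hz with ⟨a, ha, b, hb, rfl⟩
        exact hVV a (hW₀V ha.1) b (hW₀V hb.1)
    · exact ⟨Set.univ, fun h => absurd h hU⟩
  choose w hw using step
  have hcof : ∀ M ∈ @nhds G t 1, ∃ A : ℕ → Set G, Good A ∧ UU A ⊆ M := by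
    intro M hM
    let Wc : ℕ → Set G := fun k => Nat.rec (w M) (fun _ p => w p) k
    have hmem : ∀ k, Wc k ∈ @nhds G t 1 := by
      intro k
      induction k with
      | zero => exact (hw M hM).1
      | succ k ih => exact (hw (Wc k) ih).1
    have hprops : ∀ k, ConjInv (Wc k) ∧ (Wc k)⁻¹ = Wc k ∧ (1 : G) ∈ Wc k := by
      intro k
      cases k with
      | zero => exact ⟨(hw M hM).2.1, (hw M hM).2.2.1, (hw M hM).2.2.2.1⟩
      | succ k => exact ⟨(hw _ (hmem k)).2.1, (hw _ (hmem k)).2.2.1, (hw _ (hmem k)).2.2.2.1⟩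
    have hsq : ∀ k, Wc (k+1) * Wc (k+1) ⊆ Wc k := fun k => (hw _ (hmem k)).2.2.2.2
    have h1 : ∀ k, (1 : G) ∈ Wc k := fun k => (hprops k).2.2
    have h0M : Wc 0 ⊆ M := by
      intro x hx
      have : x * 1 ∈ M := (hw M hM).2.2.2.2 (Set.mul_mem_mul hx (h1 0))
      simpa using this
    refine ⟨fun i => Wc (i+2), fun i => hconv _ (hmem (i+2)), ?_⟩
    have hc : ∀ i, chull (Wc (i+2)) ⊆ Wc (i+2) :=
      fun i => chull_subset (h1 (i+2)) ((hprops (i+2)).2.1) ((hprops (i+2)).1)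
    intro x hx
    rcases mem_bigU_iff.mp hx with ⟨k, hk⟩
    have hword : x ∈ word (fun i => Wc (i+2)) k := lprod_mono (fun i => hc i) _ hk
    have hx1 : x ∈ Wc 1 := word_chain_subset h1 hsq k hword
    have hx0 : x ∈ Wc 0 := by
      have : x * 1 ∈ Wc 0 := hsq 0 (Set.mul_mem_mul hx1 (h1 1))
      simpa using this
    exact h0M hx0
  -- Assemble the ω^ω-base
  let Ah : (ℕ → ℕ) → ℕ → Set G :=
    fun h i => VV (Nat.unpair i).1 (fun m => h (Nat.pair i m))
  have hGoodAh : ∀ h, Good (Ah h) := fun h i => hVV_mem _ _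
  refine ⟨fun h => UU (Ah h), fun h => hmemT _ (hGoodAh h), ?_, ?_⟩
  · intro f g hfg
    apply hUU_mono
    intro i
    exact hVV_mono _ _ _ (fun m => hfg _)
  · intro M hM
    obtain ⟨A, hA, hAM⟩ := hcof M hM
    have hex : ∀ i, ∃ f : ℕ → ℕ, VV (Nat.unpair i).1 f ⊆ A i := fun i => hVV_cof _ _ (hA i)
    choose f hf using hex
    refine ⟨fun j => f (Nat.unpair j).1 (Nat.unpair j).2, ?_⟩
    refine (hUU_mono _ _ ?_).trans hAM
    intro i
    have heq : (fun m => f (Nat.unpair (Nat.pair i m)).1 (Nat.unpair (Nat.pair i m)).2) = f i := by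
      funext m; rw [Nat.unpair_pair]
    calc Ah (fun j => f (Nat.unpair j).1 (Nat.unpair j).2) i
        = VV (Nat.unpair i).1 (f i) := by show VV _ _ = _; rw [heq]
      _ ⊆ A i := hf i
end

section
/- Let (G_n)_{n∈ℕ} be a countable family of topological groups, each separable and admitting a local ω^ω-base. Let G = ∗_{n∈ℕ} G_n be their algebraic free product (coproduct of groups), and suppose t is a group topology on G such that each canonical injection G_n → G is a topological embedding (t induces the original topology of G_n on its canonical image) and t is the finest group topology on G with this property (every group topology on G inducing the original topology on each canonical copy of G_n is coarser than t). Then (G, t) admits a local ω^ω-base. -/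
set_option linter.unusedSectionVars false

open Filter Set Topology

namespace Stmt5Proof

attribute [local instance] Classical.propDecidable

variable {G : ℕ → Type*} [∀ n, Group (G n)]

/-- One conjugated factor `c * ε * c⁻¹` encoded as `(index, c, ε)`. -/
def fac (q : ℕ × Monoid.CoprodI G × Monoid.CoprodI G) : Monoid.CoprodI G :=
  q.2.1 * q.2.2 * q.2.1⁻¹

/-- The basic sets: products of conjugated letters with pairwise distinct indices. -/
def Wset (u : Monoid.CoprodI G → ℕ → Set (Monoid.CoprodI G)) : Set (Monoid.CoprodI G) :=
  {x | ∃ L : List (ℕ × Monoid.CoprodI G × Monoid.CoprodI G),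
    (L.map Prod.fst).Nodup ∧ (∀ q ∈ L, q.2.2 ∈ u q.2.1 q.1) ∧ x = (L.map fac).prod}

theorem one_mem_Wset (u : Monoid.CoprodI G → ℕ → Set (Monoid.CoprodI G)) :
    (1 : Monoid.CoprodI G) ∈ Wset u :=
  ⟨[], by simp, by simp, by simp⟩

theorem Wset_mono {u u' : Monoid.CoprodI G → ℕ → Set (Monoid.CoprodI G)}
    (h : ∀ c i, u c i ⊆ u' c i) : Wset u ⊆ Wset u' := by
  rintro x ⟨L, h1, h2, h3⟩
  exact ⟨L, h1, fun q hq => h _ _ (h2 q hq), h3⟩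

theorem conj_list_prod {H : Type*} [Group H] (g : H) {α : Type*} (l : List α) (f : α → H) :
    g * (l.map f).prod * g⁻¹ = (l.map fun a => g * f a * g⁻¹).prod := by
  induction l with
  | nil => simp
  | cons a l ih => simp only [List.map_cons, List.prod_cons, ← ih]; group

theorem inv_list_prod {H : Type*} [Group H] {α : Type*} (l : List α) (f : α → H) :
    ((l.map f).prod)⁻¹ = (l.reverse.map fun a => (f a)⁻¹).prod := by
  rw [List.prod_inv_reverse]
  rw [List.map_map, List.map_reverse]
  rfl

theorem inv_mem_Wset {u : Monoid.CoprodI G → ℕ → Set (Monoid.CoprodI G)}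
    (hsym : ∀ c i, (u c i)⁻¹ = u c i) {x : Monoid.CoprodI G} (hx : x ∈ Wset u) :
    x⁻¹ ∈ Wset u := by
  obtain ⟨L, h1, h2, rfl⟩ := hx
  refine ⟨(L.map fun q => (q.1, q.2.1, q.2.2⁻¹)).reverse, ?_, ?_, ?_⟩
  · simpa [List.map_reverse, List.map_map, Function.comp_def] using h1
  · intro q hq
    simp only [List.mem_reverse, List.mem_map] at hq
    obtain ⟨p, hp, rfl⟩ := hq
    have := h2 p hp
    simp only
    rw [← hsym p.2.1 p.1]
    simpa using this
  · rw [inv_list_prod]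
    congr 1
    rw [List.map_reverse, List.map_reverse]
    congr 1
    rw [List.map_map]
    apply List.map_congr_left
    intro a _
    simp [fac]
    group


variable [∀ n, TopologicalSpace (G n)]

/-- Validity of a parameter `u` relative to a subgroup `D` of allowed conjugators. -/
def ValidU (D : Subgroup (Monoid.CoprodI G)) (u : Monoid.CoprodI G → ℕ → Set (Monoid.CoprodI G)) :
    Prop :=
  ∀ c i, (u c i)⁻¹ = u c i ∧
    (c ∈ D → ∀ n, ((Monoid.CoprodI.of : G n →* Monoid.CoprodI G) : G n → Monoid.CoprodI G) ⁻¹'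
      (u c i) ∈ 𝓝 (1 : G n)) ∧
    (c ∉ D → u c i = ∅)

theorem ValidU.inter {D : Subgroup (Monoid.CoprodI G)}
    {u u' : Monoid.CoprodI G → ℕ → Set (Monoid.CoprodI G)}
    (h : ValidU D u) (h' : ValidU D u') : ValidU D (fun c i => u c i ∩ u' c i) := by
  intro c i
  refine ⟨?_, fun hc n => ?_, fun hc => ?_⟩
  · rw [Set.inter_inv, (h c i).1, (h' c i).1]
  · rw [Set.preimage_inter]
    exact Filter.inter_mem ((h c i).2.1 hc n) ((h' c i).2.1 hc n)
  · show u c i ∩ u' c i = ∅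
    rw [(h c i).2.2 hc, Set.empty_inter]

theorem mul_Wset_subset {u : Monoid.CoprodI G → ℕ → Set (Monoid.CoprodI G)}
    {x y : Monoid.CoprodI G}
    (hx : x ∈ Wset (fun c i => u c (2 * i) ∩ u c (2 * i + 1)))
    (hy : y ∈ Wset (fun c i => u c (2 * i) ∩ u c (2 * i + 1))) :
    x * y ∈ Wset u := by
  obtain ⟨L₁, hn₁, hm₁, rfl⟩ := hx
  obtain ⟨L₂, hn₂, hm₂, rfl⟩ := hy
  refine ⟨L₁.map (fun q => (2 * q.1, q.2)) ++ L₂.map (fun q => (2 * q.1 + 1, q.2)), ?_, ?_, ?_⟩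
  · rw [List.map_append, List.nodup_append]
    refine ⟨?_, ?_, ?_⟩
    · rw [List.map_map]
      have : (Prod.fst ∘ fun q : ℕ × Monoid.CoprodI G × Monoid.CoprodI G => (2 * q.1, q.2))
          = (fun m => 2 * m) ∘ Prod.fst := rfl
      rw [this, ← List.map_map]
      exact hn₁.map (fun a b h => by omega)
    · rw [List.map_map]
      have : (Prod.fst ∘ fun q : ℕ × Monoid.CoprodI G × Monoid.CoprodI G => (2 * q.1 + 1, q.2))
          = (fun m => 2 * m + 1) ∘ Prod.fst := rfl
      rw [this, ← List.map_map]
      exact hn₂.map (fun a b h => by omega)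
    · intro a ha b hb hab
      simp only [List.map_map, List.mem_map] at ha hb
      obtain ⟨p, _, rfl⟩ := ha
      obtain ⟨p', _, h⟩ := hb
      simp only [Function.comp] at h hab
      omega
  · intro q hq
    rcases List.mem_append.1 hq with h | h <;>
      · simp only [List.mem_map] at h
        obtain ⟨p, hp, rfl⟩ := h
        first
          | exact (hm₁ p hp).1
          | exact (hm₂ p hp).2
  · rw [List.map_append, List.prod_append, List.map_map, List.map_map]
    rfl

/-- The countable dense subgroup generated by images of dense subsets of the factors. -/
def Dgen (Dn : ∀ n, Set (G n)) : Subgroup (Monoid.CoprodI G) :=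
  Subgroup.closure (⋃ n, ((Monoid.CoprodI.of : G n →* Monoid.CoprodI G) :
    G n → Monoid.CoprodI G) '' (Dn n))

theorem of_mem_Dgen {Dn : ∀ n, Set (G n)} {n : ℕ} {y : G n} (hy : y ∈ Dn n) :
    (Monoid.CoprodI.of y : Monoid.CoprodI G) ∈ Dgen Dn :=
  Subgroup.subset_closure (Set.mem_iUnion.2 ⟨n, Set.mem_image_of_mem _ hy⟩)


theorem countable_Dgen {Dn : ∀ n, Set (G n)} (hDn : ∀ n, (Dn n).Countable) :
    ((Dgen Dn : Subgroup (Monoid.CoprodI G)) : Set (Monoid.CoprodI G)).Countable := by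
  classical
  set s : Set (Monoid.CoprodI G) := ⋃ n, ((Monoid.CoprodI.of : G n →* Monoid.CoprodI G) :
    G n → Monoid.CoprodI G) '' (Dn n) with hs
  have hscount : s.Countable := Set.countable_iUnion fun n => (hDn n).image _
  have hsinv : (s⁻¹ : Set (Monoid.CoprodI G)).Countable := by
    have h2 : s⁻¹ = (fun x : Monoid.CoprodI G => x⁻¹) '' s := by
      ext x
      constructor
      · intro hx
        exact ⟨x⁻¹, hx, inv_inv x⟩
      · rintro ⟨y, hy, rfl⟩
        simpa [Set.mem_inv] using hy
    rw [h2]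
    exact hscount.image _
  have hs' : (s ∪ s⁻¹).Countable := hscount.union hsinv
  have key : ((Dgen Dn : Subgroup (Monoid.CoprodI G)) : Set (Monoid.CoprodI G)) ⊆
      Set.range (fun l : List ↥(s ∪ s⁻¹) => (l.map Subtype.val).prod) := by
    intro x hx
    have hx' : x ∈ Submonoid.closure (s ∪ s⁻¹) := by
      have : x ∈ (Subgroup.closure s).toSubmonoid := hx
      rwa [Subgroup.closure_toSubmonoid] at this
    obtain ⟨l, hl, hlp⟩ := Submonoid.exists_list_of_mem_closure hx'
    refine ⟨l.attach.map fun y => (⟨y.1, hl y.1 y.2⟩ : ↥(s ∪ s⁻¹)), ?_⟩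
    simp only [List.map_map]
    rw [show (Subtype.val ∘ fun y : {y // y ∈ l} => (⟨y.1, hl y.1 y.2⟩ : ↥(s ∪ s⁻¹)))
      = fun y : {y // y ∈ l} => y.1 from rfl]
    rw [List.attach_map_subtype_val]
    exact hlp
  have : Countable ↥(s ∪ s⁻¹) := hs'.to_subtype
  exact (Set.countable_range _).mono key

variable [∀ n, IsTopologicalGroup (G n)]

/-- Core approximation lemma: every element of the free product can be written as a
product of conjugates (with conjugators in the dense subgroup, letters in prescribed sets)
times an element of the dense subgroup. -/
theorem core_approx {Dn : ∀ n, Set (G n)} (hDn : ∀ n, Dense (Dn n)) (h : Monoid.CoprodI G) :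
    ∀ (Q : Monoid.CoprodI G → ℕ → Set (Monoid.CoprodI G)),
      (∀ c ∈ Dgen Dn, ∀ (m : ℕ) (n : ℕ),
        ((Monoid.CoprodI.of : G n →* Monoid.CoprodI G) : G n → Monoid.CoprodI G) ⁻¹' (Q c m) ∈
          𝓝 (1 : G n)) →
      ∀ (e : ℕ → ℕ), Function.Injective e →
      ∃ d ∈ Dgen Dn, ∃ L : List (ℕ × Monoid.CoprodI G × Monoid.CoprodI G),
        (L.map Prod.fst).Nodup ∧
        (∀ q ∈ L, q.1 ∈ Set.range e ∧ q.2.1 ∈ Dgen Dn ∧ q.2.2 ∈ Q q.2.1 q.1) ∧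
        h = (L.map fac).prod * d := by
  induction h using Monoid.CoprodI.induction_on with
  | one =>
    intro Q hQ e he
    exact ⟨1, one_mem _, [], by simp, by simp, by simp⟩
  | of n x =>
    intro Q hQ e he
    set S := ((Monoid.CoprodI.of : G n →* Monoid.CoprodI G) : G n → Monoid.CoprodI G) ⁻¹'
      (Q 1 (e 0)) with hSdef
    have hS : S ∈ 𝓝 (1 : G n) := hQ 1 (one_mem _) (e 0) n
    have hcont : ContinuousAt (fun y : G n => x * y⁻¹) x :=
      (continuous_const.mul continuous_inv).continuousAt
    have hpre : (fun y : G n => x * y⁻¹) ⁻¹' S ∈ 𝓝 x := by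
      apply hcont.preimage_mem_nhds
      simpa using hS
    obtain ⟨O, hOsub, hO, hxO⟩ := mem_nhds_iff.1 hpre
    obtain ⟨y, hyD, hyO⟩ := (hDn n).exists_mem_open hO ⟨x, hxO⟩
    have hmem : (Monoid.CoprodI.of (x * y⁻¹) : Monoid.CoprodI G) ∈ Q 1 (e 0) := hOsub hyO
    refine ⟨Monoid.CoprodI.of y, of_mem_Dgen hyD, [(e 0, 1, Monoid.CoprodI.of (x * y⁻¹))],
      by simp, ?_, ?_⟩
    · rintro q hq
      simp only [List.mem_singleton] at hq
      subst hq
      exact ⟨⟨0, rfl⟩, one_mem _, hmem⟩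
    · simp only [List.map_cons, List.map_nil, List.prod_cons, List.prod_nil, fac]
      rw [one_mul, mul_one, inv_one, mul_one, ← MonoidHom.map_mul]
      rw [inv_mul_cancel_right]
  | mul x y ihx ihy =>
    intro Q hQ e he
    obtain ⟨d₁, hd₁, L₁, hn₁, hm₁, heq₁⟩ := ihx Q hQ (fun m => e (2 * m + 1))
      (fun a b hab => by have := he hab; omega)
    obtain ⟨d₂, hd₂, L₂, hn₂, hm₂, heq₂⟩ := ihy (fun c m => Q (d₁ * c) m)
      (fun c hc m n => hQ _ (mul_mem hd₁ hc) m n) (fun m => e (2 * m))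
      (fun a b hab => by have := he hab; omega)
    refine ⟨d₁ * d₂, mul_mem hd₁ hd₂,
      L₁ ++ L₂.map (fun q => (q.1, d₁ * q.2.1, q.2.2)), ?_, ?_, ?_⟩
    · rw [List.map_append, List.nodup_append, List.map_map]
      have hfst : (Prod.fst ∘ fun q : ℕ × Monoid.CoprodI G × Monoid.CoprodI G =>
          (q.1, d₁ * q.2.1, q.2.2)) = Prod.fst := rfl
      rw [hfst]
      refine ⟨hn₁, hn₂, ?_⟩
      intro a ha b hb hab
      obtain ⟨p, hp, rfl⟩ := List.mem_map.1 ha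
      obtain ⟨p', hp', hpp⟩ := List.mem_map.1 hb
      subst hab
      obtain ⟨m, hm⟩ := (hm₁ p hp).1
      obtain ⟨m', hm'⟩ := (hm₂ p' hp').1
      rw [hpp] at hm'
      have := he (hm.trans hm'.symm)
      omega
    · intro q hq
      rcases List.mem_append.1 hq with hq | hq
      · obtain ⟨m, hm⟩ := (hm₁ q hq).1
        exact ⟨⟨2 * m + 1, hm⟩, (hm₁ q hq).2.1, (hm₁ q hq).2.2⟩
      · obtain ⟨p, hp, rfl⟩ := List.mem_map.1 hq
        obtain ⟨m, hm⟩ := (hm₂ p hp).1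
        exact ⟨⟨2 * m, hm⟩, mul_mem hd₁ (hm₂ p hp).2.1, (hm₂ p hp).2.2⟩
    · have hconj : ((L₂.map (fun q : ℕ × Monoid.CoprodI G × Monoid.CoprodI G =>
          (q.1, d₁ * q.2.1, q.2.2))).map fac).prod
          = d₁ * (L₂.map fac).prod * d₁⁻¹ := by
        rw [conj_list_prod d₁ L₂ fac, List.map_map]
        congr 1
        apply List.map_congr_left
        intro a _
        simp [fac]
        group
      rw [List.map_append, List.prod_append, hconj, heq₁, heq₂]
      group


/-- Index encoding. -/
def enc (i a b : ℕ) : ℕ := Nat.pair i (Nat.pair a b)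

/-- Mirror of an index: flip the last bit to 1. -/
def mir (x : ℕ) : ℕ := Nat.pair x.unpair.1 (Nat.pair x.unpair.2.unpair.1 1)

theorem mir_enc (i a b : ℕ) : mir (enc i a b) = enc i a 1 := by
  simp [mir, enc, Nat.unpair_pair]

theorem enc_eq_enc {i a b i' a' b' : ℕ} : enc i a b = enc i' a' b' ↔ i = i' ∧ a = a' ∧ b = b' := by
  simp [enc, Nat.pair_eq_pair]

/-- The conjugation property for the basic sets. -/
theorem conj_Wset {Dn : ∀ n, Set (G n)} (hDn : ∀ n, Dense (Dn n)) (g : Monoid.CoprodI G)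
    {u : Monoid.CoprodI G → ℕ → Set (Monoid.CoprodI G)} (hu : ValidU (Dgen Dn) u) :
    ∃ u', ValidU (Dgen Dn) u' ∧ ∀ w ∈ Wset u', g * w * g⁻¹ ∈ Wset u := by
  classical
  have key : ∀ (c' : Monoid.CoprodI G) (i : ℕ), ∃ d ∈ Dgen Dn,
      ∃ L : List (ℕ × Monoid.CoprodI G × Monoid.CoprodI G),
      (L.map Prod.fst).Nodup ∧
      (∀ q ∈ L, q.1 ∈ Set.range (fun m => enc i (m + 1) 0) ∧ q.2.1 ∈ Dgen Dn ∧
        q.2.2 ∈ u q.2.1 q.1 ∩ u q.2.1 (mir q.1)) ∧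
      g * c' = (L.map fac).prod * d := by
    intro c' i
    refine core_approx hDn (g * c') (fun c m => u c m ∩ u c (mir m)) ?_
      (fun m => enc i (m + 1) 0) ?_
    · intro c hc m n
      rw [Set.preimage_inter]
      exact Filter.inter_mem ((hu c m).2.1 hc n) ((hu c (mir m)).2.1 hc n)
    · intro a b hab
      rw [enc_eq_enc] at hab
      omega
  choose d hd L hL1 hL2 hL3 using key
  refine ⟨fun c' i => if c' ∈ Dgen Dn then u (d c' i) (enc i 0 0) else ∅, ?_, ?_⟩
  · intro c i
    dsimp only
    by_cases hc : c ∈ Dgen Dn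
    · rw [if_pos hc]
      exact ⟨(hu _ _).1, fun _ n => (hu _ _).2.1 (hd c i) n, fun hc' => absurd hc hc'⟩
    · rw [if_neg hc]
      refine ⟨by simp, fun hc' => absurd hc' hc, fun _ => rfl⟩
  · rintro w ⟨l, hl1, hl2, rfl⟩
    -- every conjugator appearing in `l` is in the dense subgroup
    have hlD : ∀ q ∈ l, q.2.1 ∈ Dgen Dn ∧ q.2.2 ∈ u (d q.2.1 q.1) (enc q.1 0 0) := by
      intro q hq
      have := hl2 q hq
      dsimp only at this
      by_cases hc : q.2.1 ∈ Dgen Dn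
      · rw [if_pos hc] at this; exact ⟨hc, this⟩
      · rw [if_neg hc] at this; exact absurd this (Set.notMem_empty _)
    set blk : ℕ × Monoid.CoprodI G × Monoid.CoprodI G →
        List (ℕ × Monoid.CoprodI G × Monoid.CoprodI G) := fun q =>
      L q.2.1 q.1 ++ (enc q.1 0 0, d q.2.1 q.1, q.2.2) ::
        ((L q.2.1 q.1).reverse.map fun r => (mir r.1, r.2.1, r.2.2⁻¹)) with hblk
    -- the first projections of a block all have `unpair.1 = q.1`
    have hblk_fst : ∀ q, ∀ z ∈ (blk q).map Prod.fst, z.unpair.1 = q.1 := by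
      intro q z hz
      rw [List.mem_map] at hz
      obtain ⟨p, hp, rfl⟩ := hz
      rw [hblk] at hp
      rcases List.mem_append.1 hp with hp | hp
      · obtain ⟨m, hm⟩ := (hL2 q.2.1 q.1 p hp).1
        rw [← hm]
        simp [enc, Nat.unpair_pair]
      · rcases List.mem_cons.1 hp with hp | hp
        · rw [hp]
          simp [enc, Nat.unpair_pair]
        · rw [List.mem_map] at hp
          obtain ⟨r, hr, rfl⟩ := hp
          obtain ⟨m, hm⟩ := (hL2 q.2.1 q.1 r (List.mem_reverse.1 hr)).1
          simp only [← hm, mir_enc]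
          simp [enc, Nat.unpair_pair]
    refine ⟨l.flatMap blk, ?_, ?_, ?_⟩
    · -- Nodup of all indices
      rw [List.map_flatMap]
      rw [List.nodup_flatMap]
      constructor
      · intro q hq
        -- within one block
        rw [hblk]
        simp only [List.map_append, List.map_cons, List.map_map]
        rw [List.nodup_append]
        refine ⟨hL1 q.2.1 q.1, ?_, ?_⟩
        · rw [List.nodup_cons]
          constructor
          · -- the middle index is not a mirror index
            intro hmem
            rw [List.mem_map] at hmem
            obtain ⟨r, hr, hre⟩ := hmem
            obtain ⟨m, hm⟩ := (hL2 q.2.1 q.1 r (List.mem_reverse.1 hr)).1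
            simp only [Function.comp] at hre
            rw [← hm, mir_enc, enc_eq_enc] at hre
            omega
          · -- mirror indices are nodup
            have : ((L q.2.1 q.1).reverse.map
                ((Prod.fst ∘ fun r : ℕ × Monoid.CoprodI G × Monoid.CoprodI G =>
                  (mir r.1, r.2.1, r.2.2⁻¹))))
                = ((L q.2.1 q.1).map Prod.fst).reverse.map mir := by
              rw [List.map_reverse, List.map_reverse, List.map_map]
              rfl
            rw [this]
            apply List.Nodup.map_on ?_ (List.nodup_reverse.2 (hL1 q.2.1 q.1))
            intro x hx y hy hxy
            rw [List.mem_reverse] at hx hy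
            have hx' : x ∈ Set.range (fun m => enc q.1 (m + 1) 0) := by
              obtain ⟨p, hp, rfl⟩ := List.mem_map.1 hx
              exact (hL2 q.2.1 q.1 p hp).1
            have hy' : y ∈ Set.range (fun m => enc q.1 (m + 1) 0) := by
              obtain ⟨p, hp, rfl⟩ := List.mem_map.1 hy
              exact (hL2 q.2.1 q.1 p hp).1
            obtain ⟨mx, hmx⟩ := hx'
            obtain ⟨my, hmy⟩ := hy'
            have hmx' : enc q.1 (mx + 1) 0 = x := hmx
            have hmy' : enc q.1 (my + 1) 0 = y := hmy
            subst hmx'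
            subst hmy'
            rw [mir_enc, mir_enc, enc_eq_enc] at hxy
            rw [enc_eq_enc]
            omega
        · -- forward indices disjoint from middle/mirror
          intro a ha b hb hab
          obtain ⟨p, hp, rfl⟩ := List.mem_map.1 ha
          subst hab
          obtain ⟨m, hm⟩ := (hL2 q.2.1 q.1 p hp).1
          rcases List.mem_cons.1 hb with hb | hb
          · rw [← hm, enc_eq_enc] at hb
            omega
          · rw [List.mem_map] at hb
            obtain ⟨r, hr, hre⟩ := hb
            obtain ⟨m', hm'⟩ := (hL2 q.2.1 q.1 r (List.mem_reverse.1 hr)).1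
            simp only [Function.comp_apply] at hre
            rw [← hm', mir_enc, ← hm, enc_eq_enc] at hre
            omega
      · -- distinct blocks are disjoint
        have hne : l.Pairwise (fun q q' => q.1 ≠ q'.1) := by
          have h := hl1
          rw [List.Nodup, List.pairwise_map] at h
          exact h
        refine hne.imp ?_
        intro q q' hqq'
        intro a ha hb
        have h1 := hblk_fst q a ha
        have h2 := hblk_fst q' a hb
        exact hqq' (h1 ▸ h2 ▸ rfl)
    · -- memberships
      intro p hp
      rw [List.mem_flatMap] at hp
      obtain ⟨q, hq, hpq⟩ := hp
      rw [hblk] at hpq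
      rcases List.mem_append.1 hpq with hpq | hpq
      · exact (hL2 q.2.1 q.1 p hpq).2.2.1
      · rcases List.mem_cons.1 hpq with hpq | hpq
        · rw [hpq]
          exact (hlD q hq).2
        · rw [List.mem_map] at hpq
          obtain ⟨r, hr, rfl⟩ := hpq
          have hmem := (hL2 q.2.1 q.1 r (List.mem_reverse.1 hr)).2.2.2
          show r.2.2⁻¹ ∈ u r.2.1 (mir r.1)
          rw [← (hu r.2.1 (mir r.1)).1]
          exact Set.inv_mem_inv.2 hmem
    · -- the product identity
      have hblock : ∀ q ∈ l, ((blk q).map fac).prod = g * fac q * g⁻¹ := by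
        intro q hq
        rw [hblk]
        simp only [List.map_append, List.map_cons, List.prod_append, List.prod_cons]
        have hPrev : (((L q.2.1 q.1).reverse.map fun r : ℕ × Monoid.CoprodI G × Monoid.CoprodI G
            => (mir r.1, r.2.1, r.2.2⁻¹)).map fac).prod = (((L q.2.1 q.1).map fac).prod)⁻¹ := by
          rw [inv_list_prod, List.map_map]
          congr 1
          apply List.map_congr_left
          intro a _
          simp [fac]
          group
        rw [hPrev]
        have hspec := hL3 q.2.1 q.1
        have hP : ((L q.2.1 q.1).map fac).prod = (g * q.2.1) * (d q.2.1 q.1)⁻¹ := by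
          rw [hspec]; group
        rw [hP]
        simp only [fac]
        group
      have hgen : ∀ l' : List (ℕ × Monoid.CoprodI G × Monoid.CoprodI G),
          (∀ p ∈ l', ((blk p).map fac).prod = g * fac p * g⁻¹) →
          ((l'.flatMap blk).map fac).prod = g * (l'.map fac).prod * g⁻¹ := by
        intro l'
        induction l' with
        | nil => intro _; simp
        | cons q l'' ih =>
          intro hb
          rw [List.flatMap_cons, List.map_append, List.prod_append, List.map_cons,
            List.prod_cons, hb q (List.mem_cons_self),
            ih (fun p hp => hb p (List.mem_cons_of_mem q hp))]
          group
      exact (hgen l hblock).symm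


theorem validU_default (Dn : ∀ n, Set (G n)) :
    ValidU (Dgen Dn) (fun c i => if c ∈ Dgen Dn then (Set.univ : Set (Monoid.CoprodI G)) else ∅) := by
  classical
  intro c i
  by_cases hc : c ∈ Dgen Dn
  · refine ⟨by simp [hc], fun _ n => by simp [hc], fun hc' => absurd hc hc'⟩
  · refine ⟨by simp [hc], fun hc' => absurd hc' hc, fun _ => by simp [hc]⟩

theorem validU_halve {Dn : ∀ n, Set (G n)} {u : Monoid.CoprodI G → ℕ → Set (Monoid.CoprodI G)}
    (hu : ValidU (Dgen Dn) u) :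
    ValidU (Dgen Dn) (fun c i => u c (2 * i) ∩ u c (2 * i + 1)) := by
  intro c i
  refine ⟨?_, fun hc n => ?_, fun hc => ?_⟩
  · show (u c (2 * i) ∩ u c (2 * i + 1))⁻¹ = _
    rw [Set.inter_inv, (hu c (2 * i)).1, (hu c (2 * i + 1)).1]
  · rw [Set.preimage_inter]
    exact Filter.inter_mem ((hu c (2 * i)).2.1 hc n) ((hu c (2 * i + 1)).2.1 hc n)
  · show u c (2 * i) ∩ u c (2 * i + 1) = ∅
    rw [(hu c (2 * i)).2.2 hc, Set.empty_inter]

/-- The group filter basis on the free product built from the dense subsets `Dn`. -/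
def fpBasis (Dn : ∀ n, Set (G n)) (hDn : ∀ n, Dense (Dn n)) :
    GroupFilterBasis (Monoid.CoprodI G) where
  sets := {s | ∃ u, ValidU (Dgen Dn) u ∧ s = Wset u}
  nonempty := ⟨_, ⟨_, validU_default Dn, rfl⟩⟩
  inter_sets := by
    rintro _ _ ⟨u, hu, rfl⟩ ⟨u', hu', rfl⟩
    exact ⟨Wset (fun c i => u c i ∩ u' c i), ⟨_, hu.inter hu', rfl⟩,
      Set.subset_inter (Wset_mono fun c i => Set.inter_subset_left)
        (Wset_mono fun c i => Set.inter_subset_right)⟩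
  one' := by
    rintro _ ⟨u, hu, rfl⟩
    exact one_mem_Wset u
  mul' := by
    rintro _ ⟨u, hu, rfl⟩
    refine ⟨Wset (fun c i => u c (2 * i) ∩ u c (2 * i + 1)), ⟨_, validU_halve hu, rfl⟩, ?_⟩
    rintro x ⟨a, ha, b, hb, rfl⟩
    exact mul_Wset_subset ha hb
  inv' := by
    rintro _ ⟨u, hu, rfl⟩
    exact ⟨Wset u, ⟨u, hu, rfl⟩, fun x hx => inv_mem_Wset (fun c i => (hu c i).1) hx⟩
  conj' := by
    rintro x₀ _ ⟨u, hu, rfl⟩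
    obtain ⟨u', hu', h⟩ := conj_Wset hDn x₀ hu
    exact ⟨Wset u', ⟨u', hu', rfl⟩, fun w hw => h w hw⟩

theorem Wset_mem_nhds_fpBasis {Dn : ∀ n, Set (G n)} (hDn : ∀ n, Dense (Dn n))
    {u : Monoid.CoprodI G → ℕ → Set (Monoid.CoprodI G)} (hu : ValidU (Dgen Dn) u) :
    Wset u ∈ @nhds _ (fpBasis Dn hDn).topology 1 :=
  GroupFilterBasis.mem_nhds_one _ ⟨u, hu, rfl⟩

theorem continuous_of_fpBasis {Dn : ∀ n, Set (G n)} (hDn : ∀ n, Dense (Dn n)) (n : ℕ) :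
    Continuous[_, (fpBasis Dn hDn).topology]
      ((Monoid.CoprodI.of : G n →* Monoid.CoprodI G) : G n → Monoid.CoprodI G) := by
  letI := (fpBasis Dn hDn).topology
  haveI : @IsTopologicalGroup (Monoid.CoprodI G) (fpBasis Dn hDn).topology _ :=
    (fpBasis Dn hDn).isTopologicalGroup
  apply continuous_of_continuousAt_one (Monoid.CoprodI.of : G n →* Monoid.CoprodI G)
  rw [ContinuousAt, map_one]
  intro s hs
  rw [(fpBasis Dn hDn).nhds_one_hasBasis.mem_iff] at hs
  obtain ⟨V, ⟨u, hu, rfl⟩, hVs⟩ := hs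
  rw [Filter.mem_map]
  apply Filter.mem_of_superset ((hu 1 0).2.1 (one_mem _) n)
  intro x hx
  apply hVs
  refine ⟨[(0, 1, Monoid.CoprodI.of x)], by simp, ?_, by simp [fac]⟩
  rintro q hq
  simp only [List.mem_singleton] at hq
  subst hq
  exact hx


theorem exists_min_fst {H : Type*} (L : List (ℕ × H)) (h : L ≠ []) :
    ∃ q ∈ L, ∀ q' ∈ L, q.1 ≤ q'.1 := by
  induction L with
  | nil => exact absurd rfl h
  | cons a L ih =>
    rcases eq_or_ne L [] with rfl | hL
    · exact ⟨a, List.mem_cons_self, by simp⟩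
    · obtain ⟨q, hq, hmin⟩ := ih hL
      rcases le_total a.1 q.1 with hle | hle
      · refine ⟨a, List.mem_cons_self, ?_⟩
        intro q' hq'
        rcases List.mem_cons.1 hq' with rfl | hq'
        · exact le_rfl
        · exact hle.trans (hmin q' hq')
      · refine ⟨q, List.mem_cons_of_mem a hq, ?_⟩
        intro q' hq'
        rcases List.mem_cons.1 hq' with rfl | hq'
        · exact hle
        · exact hmin q' hq'

theorem chain_subset {H : Type*} {S : ℕ → Set H} (hmono : ∀ i, S (i + 1) ⊆ S i) :
    ∀ {m k : ℕ}, m ≤ k → S k ⊆ S m := by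
  intro m k hmk
  induction k with
  | zero => rw [Nat.le_zero.1 hmk]
  | succ k ih =>
    rcases Nat.lt_or_ge m (k + 1) with hm | hm
    · exact (hmono k).trans (ih (Nat.lt_succ_iff.1 hm))
    · rw [Nat.le_antisymm hmk hm]

theorem telescope {H : Type*} [Group H] (S : ℕ → Set H) (h1 : ∀ i, (1 : H) ∈ S i)
    (hmono : ∀ i, S (i + 1) ⊆ S i)
    (h3 : ∀ i, ∀ a ∈ S (i + 1), ∀ b ∈ S (i + 1), ∀ c ∈ S (i + 1), a * b * c ∈ S i) :
    ∀ (k : ℕ) (L : List (ℕ × H)), L.length ≤ k → (L.map Prod.fst).Nodup →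
      ∀ m, (∀ q ∈ L, m ≤ q.1 ∧ q.2 ∈ S (q.1 + 1)) → (L.map Prod.snd).prod ∈ S m := by
  intro k
  induction k with
  | zero =>
    intro L hL _ m _
    rw [List.length_eq_zero_iff.1 (Nat.le_zero.1 hL)]
    simpa using h1 m
  | succ k ih =>
    intro L hL hnd m hmem
    rcases eq_or_ne L [] with rfl | hLne
    · simpa using h1 m
    obtain ⟨q, hqmem, hqmin⟩ := exists_min_fst L hLne
    obtain ⟨s, t, rfl⟩ := List.append_of_mem hqmem
    have hlen : s.length + t.length ≤ k := by
      have := hL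
      simp only [List.length_append, List.length_cons] at this
      omega
    -- nodup decomposition
    rw [List.map_append, List.map_cons] at hnd
    rw [List.nodup_append] at hnd
    obtain ⟨hnds, hndqt, hdisj⟩ := hnd
    rw [List.nodup_cons] at hndqt
    -- all other indices are strictly above q.1
    have hs_gt : ∀ q' ∈ s, q.1 + 1 ≤ q'.1 := by
      intro q' hq'
      have hge := hqmin q' (List.mem_append_left _ hq')
      have hne : q'.1 ≠ q.1 := by
        intro h
        exact hdisj _ (List.mem_map_of_mem (f := Prod.fst) hq') q'.1 (h ▸ List.mem_cons_self) rfl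
      omega
    have ht_gt : ∀ q' ∈ t, q.1 + 1 ≤ q'.1 := by
      intro q' hq'
      have hge := hqmin q' (List.mem_append_right _ (List.mem_cons_of_mem q hq'))
      have hne : q'.1 ≠ q.1 := by
        intro h
        exact hndqt.1 (h ▸ List.mem_map_of_mem (f := Prod.fst) hq')
      omega
    have hps : (s.map Prod.snd).prod ∈ S (q.1 + 1) := by
      apply ih s (by omega) hnds (q.1 + 1)
      intro q' hq'
      exact ⟨hs_gt q' hq', (hmem q' (List.mem_append_left _ hq')).2⟩
    have hpt : (t.map Prod.snd).prod ∈ S (q.1 + 1) := by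
      apply ih t (by omega) hndqt.2 (q.1 + 1)
      intro q' hq'
      exact ⟨ht_gt q' hq', (hmem q' (List.mem_append_right _ (List.mem_cons_of_mem q hq'))).2⟩
    have hq2 : q.2 ∈ S (q.1 + 1) := (hmem q hqmem).2
    have : (s.map Prod.snd).prod * q.2 * (t.map Prod.snd).prod ∈ S q.1 :=
      h3 q.1 _ hps _ hq2 _ hpt
    have hfin : (s.map Prod.snd).prod * q.2 * (t.map Prod.snd).prod ∈ S m :=
      chain_subset hmono (hmem q hqmem).1 this
    rw [List.map_append, List.prod_append, List.map_cons, List.prod_cons, ← mul_assoc]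
    exact hfin

theorem exists_shrinking {H : Type*} [Group H] [TopologicalSpace H] [IsTopologicalGroup H]
    {A : Set H} (hA : A ∈ 𝓝 (1 : H)) :
    ∃ S : ℕ → Set H, S 0 = A ∧ (∀ i, S i ∈ 𝓝 (1 : H)) ∧ (∀ i, S (i + 1) ⊆ S i) ∧
      ∀ i, ∀ a ∈ S (i + 1), ∀ b ∈ S (i + 1), ∀ c ∈ S (i + 1), a * b * c ∈ S i := by
  have step : ∀ p : {s : Set H // s ∈ 𝓝 (1 : H)}, ∃ s' : Set H, s' ∈ 𝓝 (1 : H) ∧ s' ⊆ p.1 ∧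
      ∀ a ∈ s', ∀ b ∈ s', ∀ c ∈ s', a * b * c ∈ p.1 := by
    rintro ⟨s, hs⟩
    obtain ⟨V, hV, hVmul⟩ := exists_nhds_one_split4 hs
    refine ⟨V ∩ s, Filter.inter_mem hV hs, Set.inter_subset_right, ?_⟩
    intro a ha b hb c hc
    have := hVmul ha.1 hb.1 hc.1 (mem_of_mem_nhds hV)
    simpa using this
  choose f hf1 hf2 hf3 using step
  set g : {s : Set H // s ∈ 𝓝 (1 : H)} → {s : Set H // s ∈ 𝓝 (1 : H)} :=
    fun p => ⟨f p, hf1 p⟩ with hg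
  refine ⟨fun i => (g^[i] ⟨A, hA⟩).1, by simp, fun i => (g^[i] ⟨A, hA⟩).2, ?_, ?_⟩
  · intro i
    show (g^[i + 1] ⟨A, hA⟩).1 ⊆ (g^[i] ⟨A, hA⟩).1
    rw [Function.iterate_succ_apply']
    exact hf2 _
  · intro i
    show ∀ a ∈ (g^[i + 1] ⟨A, hA⟩).1, ∀ b ∈ (g^[i + 1] ⟨A, hA⟩).1,
      ∀ c ∈ (g^[i + 1] ⟨A, hA⟩).1, a * b * c ∈ (g^[i] ⟨A, hA⟩).1
    rw [Function.iterate_succ_apply']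
    exact hf3 _


theorem induced_le_fpBasis {Dn : ∀ n, Set (G n)} (hDn : ∀ n, Dense (Dn n)) (n : ℕ) :
    (inferInstance : TopologicalSpace (G n)) ≤
      ((fpBasis Dn hDn).topology).induced
        ((Monoid.CoprodI.of : G n →* Monoid.CoprodI G) : G n → Monoid.CoprodI G) :=
  (continuous_iff_le_induced
      (t₂ := (fpBasis Dn hDn).topology)).mp (continuous_of_fpBasis hDn n)

/-- The "elementary" symmetric sets built from neighborhoods in the factors. -/
theorem elem_props (W : ∀ n, Set (G n)) (hW : ∀ n, W n ∈ 𝓝 (1 : G n)) :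
    (({1} ∪ ⋃ n, ((Monoid.CoprodI.of : G n →* Monoid.CoprodI G) :
        G n → Monoid.CoprodI G) '' (W n ∩ (W n)⁻¹) : Set (Monoid.CoprodI G)))⁻¹ =
      ({1} ∪ ⋃ n, ((Monoid.CoprodI.of : G n →* Monoid.CoprodI G) :
        G n → Monoid.CoprodI G) '' (W n ∩ (W n)⁻¹) : Set (Monoid.CoprodI G)) ∧
    ∀ m : ℕ, ((Monoid.CoprodI.of : G m →* Monoid.CoprodI G) : G m → Monoid.CoprodI G) ⁻¹'
      ({1} ∪ ⋃ n, ((Monoid.CoprodI.of : G n →* Monoid.CoprodI G) :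
        G n → Monoid.CoprodI G) '' (W n ∩ (W n)⁻¹) : Set (Monoid.CoprodI G)) ∈ 𝓝 (1 : G m) := by
  set E : Set (Monoid.CoprodI G) := {1} ∪ ⋃ n, ((Monoid.CoprodI.of : G n →* Monoid.CoprodI G) :
    G n → Monoid.CoprodI G) '' (W n ∩ (W n)⁻¹) with hE
  have hclosed : ∀ x ∈ E, x⁻¹ ∈ E := by
    intro x hx
    rcases hx with hx | hx
    · rw [Set.mem_singleton_iff.1 hx]
      exact Or.inl (by simp)
    · obtain ⟨n, hn⟩ := Set.mem_iUnion.1 hx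
      obtain ⟨z, hz, rfl⟩ := hn
      refine Or.inr (Set.mem_iUnion.2 ⟨n, ⟨z⁻¹, ⟨?_, ?_⟩, by rw [map_inv]⟩⟩)
      · exact Set.mem_inv.1 hz.2
      · exact Set.inv_mem_inv.2 hz.1
  constructor
  · ext x
    rw [Set.mem_inv]
    constructor
    · intro hx
      have := hclosed x⁻¹ hx
      rwa [inv_inv] at this
    · exact hclosed x
  · intro m
    apply Filter.mem_of_superset (Filter.inter_mem (hW m) (inv_mem_nhds_one (G m) (hW m)))
    intro z hz
    exact Or.inr (Set.mem_iUnion.2 ⟨m, ⟨z, hz, rfl⟩⟩)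

end Stmt5Proof

/-- Corollary 3.7: the free product (Graev) of countably many separable topological
groups, each with a local `ω^ω`-base, admits a local `ω^ω`-base.  Here the free
product carries the finest group topology inducing the original topology on each
canonical copy of a factor, and each canonical injection is a topological embedding. -/
theorem stmt5 (G : ℕ → Type*) [∀ n, Group (G n)] [∀ n, TopologicalSpace (G n)]
    [∀ n, IsTopologicalGroup (G n)] [∀ n, TopologicalSpace.SeparableSpace (G n)]
    (hbase : ∀ n, HasOmegaOmegaBase (nhds (1 : G n)))
    (t : TopologicalSpace (Monoid.CoprodI G)) (ht : @IsTopologicalGroup (Monoid.CoprodI G) t _)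
    (hinj : ∀ n, Function.Injective
      ((Monoid.CoprodI.of : G n →* Monoid.CoprodI G) : G n → Monoid.CoprodI G))
    (hemb : ∀ n, t.induced
      ((Monoid.CoprodI.of : G n →* Monoid.CoprodI G) : G n → Monoid.CoprodI G) =
      ‹∀ n, TopologicalSpace (G n)› n)
    (hfinest : ∀ t' : TopologicalSpace (Monoid.CoprodI G),
      @IsTopologicalGroup (Monoid.CoprodI G) t' _ →
      (∀ n, t'.induced
        ((Monoid.CoprodI.of : G n →* Monoid.CoprodI G) : G n → Monoid.CoprodI G) =
        ‹∀ n, TopologicalSpace (G n)› n) → t ≤ t') :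
    HasOmegaOmegaBase (@nhds (Monoid.CoprodI G) t 1) := by
  classical
  letI := t
  haveI := ht
  -- countable dense subsets of the factors
  choose Dn hDnc hDnd using fun n => TopologicalSpace.exists_countable_dense (G n)
  -- `t` is finer than the basis topology
  have htle : t ≤ (Stmt5Proof.fpBasis Dn hDnd).topology := by
    have h1 : @IsTopologicalGroup (Monoid.CoprodI G)
        (t ⊓ (Stmt5Proof.fpBasis Dn hDnd).topology) _ :=
      topologicalGroup_inf ht (Stmt5Proof.fpBasis Dn hDnd).isTopologicalGroup
    have h2 : ∀ n, (t ⊓ (Stmt5Proof.fpBasis Dn hDnd).topology).induced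
        ((Monoid.CoprodI.of : G n →* Monoid.CoprodI G) : G n → Monoid.CoprodI G) =
        ‹∀ n, TopologicalSpace (G n)› n := by
      intro n
      rw [induced_inf, hemb n]
      exact inf_eq_left.2 (Stmt5Proof.induced_le_fpBasis hDnd n)
    exact (hfinest _ h1 h2).trans inf_le_right
  have hkey : ∀ u, Stmt5Proof.ValidU (Stmt5Proof.Dgen Dn) u →
      Stmt5Proof.Wset u ∈ @nhds (Monoid.CoprodI G) t 1 := by
    intro u hu
    exact Filter.le_def.1 (nhds_mono htle) _ (Stmt5Proof.Wset_mem_nhds_fpBasis hDnd hu)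
  -- `of` is continuous for `t`
  have hofc : ∀ n, Continuous
      ((Monoid.CoprodI.of : G n →* Monoid.CoprodI G) : G n → Monoid.CoprodI G) := by
    intro n
    exact (continuous_iff_le_induced (t₂ := t)).2 (le_of_eq (hemb n).symm)
  -- enumeration of the dense subgroup
  have hDcnt : ((Stmt5Proof.Dgen Dn : Subgroup (Monoid.CoprodI G)) :
      Set (Monoid.CoprodI G)).Countable := Stmt5Proof.countable_Dgen hDnc
  obtain ⟨φ, hφ⟩ := hDcnt.exists_eq_range ⟨1, one_mem _⟩
  set code : Monoid.CoprodI G → ℕ := fun c => if h : ∃ k, φ k = c then h.choose else 0 with hcode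
  have hcode_spec : ∀ c ∈ Stmt5Proof.Dgen Dn, φ (code c) = c := by
    intro c hc
    have hcr : c ∈ Set.range φ := by rw [← hφ]; exact hc
    obtain ⟨k, hk⟩ := hcr
    rw [hcode]
    dsimp only
    rw [dif_pos ⟨k, hk⟩]
    exact (⟨k, hk⟩ : ∃ k, φ k = c).choose_spec
  -- the factor bases
  choose Vb hVb1 hVb2 hVb3 using hbase
  -- the parameter family
  set uf : (ℕ → ℕ) → Monoid.CoprodI G → ℕ → Set (Monoid.CoprodI G) := fun f c i =>
    if c ∈ Stmt5Proof.Dgen Dn then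
      ({1} ∪ ⋃ n, ((Monoid.CoprodI.of : G n →* Monoid.CoprodI G) :
        G n → Monoid.CoprodI G) ''
          (Vb n (fun m => f (Nat.pair (code c) (Nat.pair i (Nat.pair n m)))) ∩
           (Vb n (fun m => f (Nat.pair (code c) (Nat.pair i (Nat.pair n m)))))⁻¹) :
        Set (Monoid.CoprodI G))
    else ∅ with huf
  have hufvalid : ∀ f, Stmt5Proof.ValidU (Stmt5Proof.Dgen Dn) (uf f) := by
    intro f c i
    rw [huf]
    dsimp only
    by_cases hc : c ∈ Stmt5Proof.Dgen Dn
    · rw [if_pos hc]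
      obtain ⟨hsym, htr⟩ := Stmt5Proof.elem_props (G := G)
        (fun n => Vb n (fun m => f (Nat.pair (code c) (Nat.pair i (Nat.pair n m)))))
        (fun n => hVb1 n _)
      exact ⟨hsym, fun _ m => htr m, fun hc' => absurd hc hc'⟩
    · rw [if_neg hc]
      exact ⟨by simp, fun hc' => absurd hc' hc, fun _ => rfl⟩
  refine ⟨fun f => Stmt5Proof.Wset (uf f), fun f => hkey _ (hufvalid f), ?_, ?_⟩
  · -- monotonicity
    intro f g hfg
    apply Stmt5Proof.Wset_mono
    intro c i
    rw [huf]
    dsimp only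
    by_cases hc : c ∈ Stmt5Proof.Dgen Dn
    · rw [if_pos hc, if_pos hc]
      apply Set.union_subset_union_right
      apply Set.iUnion_mono
      intro n
      apply Set.image_mono
      have hVsub : Vb n (fun m => g (Nat.pair (code c) (Nat.pair i (Nat.pair n m)))) ⊆
          Vb n (fun m => f (Nat.pair (code c) (Nat.pair i (Nat.pair n m)))) :=
        hVb2 n _ _ (fun m => hfg _)
      exact Set.inter_subset_inter hVsub (Set.inv_subset_inv.2 hVsub)
    · rw [if_neg hc, if_neg hc]
  · -- cofinality
    intro A hA
    obtain ⟨S, hS0, hSnhds, hSmono, hS3⟩ :=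
      @Stmt5Proof.exists_shrinking (Monoid.CoprodI G) _ t ht A hA
    have hS1 : ∀ i, (1 : Monoid.CoprodI G) ∈ S i := fun i => mem_of_mem_nhds (hSnhds i)
    -- choose base functions below the conjugated targets
    have hTnhds : ∀ (c : Monoid.CoprodI G) (i n : ℕ), c ∈ Stmt5Proof.Dgen Dn →
        ((Monoid.CoprodI.of : G n →* Monoid.CoprodI G) : G n → Monoid.CoprodI G) ⁻¹'
          ((fun x => c * x * c⁻¹) ⁻¹' S (i + 1)) ∈ 𝓝 (1 : G n) := by
      intro c i n _
      apply (hofc n).continuousAt.preimage_mem_nhds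
      have hconj : ContinuousAt (fun x : Monoid.CoprodI G => c * x * c⁻¹) 1 :=
        ((continuous_const.mul continuous_id).mul continuous_const).continuousAt
      have := hconj.preimage_mem_nhds (by simpa using hSnhds (i + 1))
      simpa using this
    have hffex : ∀ (c : Monoid.CoprodI G) (i n : ℕ), ∃ ff : ℕ → ℕ,
        c ∈ Stmt5Proof.Dgen Dn → Vb n ff ⊆
          ((Monoid.CoprodI.of : G n →* Monoid.CoprodI G) : G n → Monoid.CoprodI G) ⁻¹'
            ((fun x => c * x * c⁻¹) ⁻¹' S (i + 1)) := by
      intro c i n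
      by_cases hc : c ∈ Stmt5Proof.Dgen Dn
      · obtain ⟨ff, hff⟩ := hVb3 n _ (hTnhds c i n hc)
        exact ⟨ff, fun _ => hff⟩
      · exact ⟨fun _ => 0, fun h => absurd h hc⟩
    choose ffun hffun using hffex
    set f0 : ℕ → ℕ := fun x => ffun (φ x.unpair.1) x.unpair.2.unpair.1
      x.unpair.2.unpair.2.unpair.1 x.unpair.2.unpair.2.unpair.2 with hf0
    refine ⟨f0, ?_⟩
    rintro x ⟨L, hnd, hmem, rfl⟩
    have hfacS : ∀ q ∈ L, Stmt5Proof.fac q ∈ S (q.1 + 1) := by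
      intro q hq
      have hqmem := hmem q hq
      rw [huf] at hqmem
      dsimp only at hqmem
      by_cases hc : q.2.1 ∈ Stmt5Proof.Dgen Dn
      · rw [if_pos hc] at hqmem
        rcases hqmem with hq1 | hq1
        · show q.2.1 * q.2.2 * q.2.1⁻¹ ∈ S (q.1 + 1)
          rw [Set.mem_singleton_iff.1 hq1]
          simpa using hS1 (q.1 + 1)
        · obtain ⟨n, hn⟩ := Set.mem_iUnion.1 hq1
          obtain ⟨z, hz, hze⟩ := hn
          have hslice : (fun m => f0 (Nat.pair (code q.2.1) (Nat.pair q.1 (Nat.pair n m))))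
              = ffun q.2.1 q.1 n := by
            funext m
            rw [hf0]
            dsimp only
            rw [Nat.unpair_pair, Nat.unpair_pair, Nat.unpair_pair, hcode_spec q.2.1 hc]
          rw [hslice] at hz
          have := hffun q.2.1 q.1 n hc hz.1
          show q.2.1 * q.2.2 * q.2.1⁻¹ ∈ S (q.1 + 1)
          rw [← hze]
          exact this
      · rw [if_neg hc] at hqmem
        exact absurd hqmem (Set.notMem_empty _)
    have := Stmt5Proof.telescope S hS1 hSmono hS3 L.length
      (L.map fun q => (q.1, Stmt5Proof.fac q)) (by simp) ?_ 0 ?_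
    · have hmm : ((L.map fun q => (q.1, Stmt5Proof.fac q)).map Prod.snd).prod
          = (L.map Stmt5Proof.fac).prod := by
        rw [List.map_map]
        rfl
      rw [hmm] at this
      rw [← hS0]
      exact this
    · rw [List.map_map]
      exact hnd
    · intro q hq
      obtain ⟨p, hp, rfl⟩ := List.mem_map.1 hq
      exact ⟨Nat.zero_le _, hfacS p hp⟩
end

section
/- Let (X, 𝒰) be a uniform space that is separable (has a countable dense subset with respect to the topology induced by 𝒰) and whose uniformity 𝒰 admits an ω^ω-base. Let F be the free group on the set X, let ℱ be the filter on F generated by the filter base consisting of the sets i(V) = { x⁻¹·y : (x,y) ∈ V } ∪ { x·y⁻¹ : (x,y) ∈ V } for V ∈ 𝒰 (where elements of X are identified with the generators of F), and suppose t is a group topology on F such that ℱ converges to the identity with respect to t and t is the finest group topology with this property. Then (F, t) admits a local ω^ω-base. -/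
/-- For an entourage `V` of the uniform space `X`, the subset
`i(V) = {x⁻¹y : (x,y) ∈ V} ∪ {xy⁻¹ : (x,y) ∈ V}` of the free group on `X`. -/
def iSet {X : Type*} (V : Set (X × X)) : Set (FreeGroup X) :=
  {w | ∃ p ∈ V, w = (FreeGroup.of p.1)⁻¹ * FreeGroup.of p.2} ∪
    {w | ∃ p ∈ V, w = FreeGroup.of p.1 * (FreeGroup.of p.2)⁻¹}

/-- The filter on the free group on a uniform space `X` generated by the sets `i(V)`,
`V` an entourage of `X`. -/
def freeFilter (X : Type*) [UniformSpace X] : Filter (FreeGroup X) :=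
  Filter.generate {S | ∃ V ∈ uniformity X, S = iSet V}

namespace Stmt6Aux

open Filter Set Function
open scoped Classical
set_option linter.unusedSectionVars false

variable {X : Type*} [UniformSpace X]

theorem iSet_mono {V W : Set (X × X)} (h : V ⊆ W) : iSet V ⊆ iSet W := by
  rintro w (⟨p, hp, rfl⟩ | ⟨p, hp, rfl⟩)
  · exact Or.inl ⟨p, h hp, rfl⟩
  · exact Or.inr ⟨p, h hp, rfl⟩

/-- symmetrized entourage -/
def symEnt (V : Set (X × X)) : Set (X × X) := V ∩ Prod.swap ⁻¹' V

theorem symEnt_mem {V : Set (X × X)} (hV : V ∈ uniformity X) : symEnt V ∈ uniformity X :=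
  Filter.inter_mem hV (tendsto_swap_uniformity hV)

theorem symEnt_mono {V W : Set (X × X)} (h : V ⊆ W) : symEnt V ⊆ symEnt W :=
  Set.inter_subset_inter h (Set.preimage_mono h)

def iSetSym (V : Set (X × X)) : Set (FreeGroup X) := iSet (symEnt V)

theorem iSetSym_mono {V W : Set (X × X)} (h : V ⊆ W) : iSetSym V ⊆ iSetSym W :=
  iSet_mono (symEnt_mono h)

theorem iSetSym_subset_iSet {V : Set (X × X)} : iSetSym V ⊆ iSet V :=
  iSet_mono Set.inter_subset_left

theorem inv_mem_iSetSym {V : Set (X × X)} {s : FreeGroup X} (hs : s ∈ iSetSym V) :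
    s⁻¹ ∈ iSetSym V := by
  rcases hs with ⟨p, hp, rfl⟩ | ⟨p, hp, rfl⟩
  · exact Or.inl ⟨(p.2, p.1), ⟨hp.2, hp.1⟩, by simp [mul_inv_rev]⟩
  · exact Or.inr ⟨(p.2, p.1), ⟨hp.2, hp.1⟩, by simp [mul_inv_rev]⟩

/-- An entry of a product list: (index, conjugator, small element). -/
abbrev Entry (X : Type*) := ℕ × FreeGroup X × FreeGroup X

def fac (e : Entry X) : FreeGroup X := e.2.1 * e.2.2 * e.2.1⁻¹

def goodEntry (A : ℕ → FreeGroup X → Set (X × X)) (K : Set (FreeGroup X)) (I : Set ℕ)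
    (e : Entry X) : Prop :=
  e.1 ∈ I ∧ e.2.1 ∈ K ∧ e.2.2 ∈ iSetSym (A e.1 e.2.1)

/-- Products of conjugated small sets, with conjugators in `K`, indices in `I`, each index
used at most `M` times. -/
def pSet (A : ℕ → FreeGroup X → Set (X × X)) (K : Set (FreeGroup X)) (I : Set ℕ) (M : ℕ) :
    Set (FreeGroup X) :=
  {w | ∃ L : List (Entry X),
    (∀ e ∈ L, goodEntry A K I e) ∧ (∀ i, (L.map Prod.fst).count i ≤ M) ∧
    w = (L.map fac).prod}

theorem one_mem_pSet {A : ℕ → FreeGroup X → Set (X × X)} {K I M} :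
    (1 : FreeGroup X) ∈ pSet A K I M :=
  ⟨[], by simp, by simp, by simp⟩

theorem pSet_mono {A A' : ℕ → FreeGroup X → Set (X × X)} {K K' I I' M M'}
    (hA : ∀ i ∈ I, ∀ g ∈ K, A i g ⊆ A' i g) (hK : K ⊆ K') (hI : I ⊆ I') (hM : M ≤ M') :
    pSet A K I M ⊆ pSet A' K' I' M' := by
  rintro w ⟨L, hL, hc, rfl⟩
  refine ⟨L, fun e he => ?_, fun i => le_trans (hc i) hM, rfl⟩
  obtain ⟨h1, h2, h3⟩ := hL e he
  exact ⟨hI h1, hK h2, iSetSym_mono (hA _ h1 _ h2) h3⟩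

theorem mem_of_count_pos {L : List (Entry X)} {A : ℕ → FreeGroup X → Set (X × X)} {K I}
    (hL : ∀ e ∈ L, goodEntry A K I e) {i : ℕ} (h : i ∉ I) :
    (L.map Prod.fst).count i = 0 := by
  rw [List.count_eq_zero]
  rintro hmem
  obtain ⟨e, he, rfl⟩ := List.mem_map.1 hmem
  exact h (hL e he).1

theorem mul_mem_pSet_count {A : ℕ → FreeGroup X → Set (X × X)} {K I₁ I₂ M₁ M₂ M}
    {w₁ w₂ : FreeGroup X} (h₁ : w₁ ∈ pSet A K I₁ M₁) (h₂ : w₂ ∈ pSet A K I₂ M₂)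
    (hM : ∀ i : ℕ, (if i ∈ I₁ then M₁ else 0) + (if i ∈ I₂ then M₂ else 0) ≤ M) :
    w₁ * w₂ ∈ pSet A K (I₁ ∪ I₂) M := by
  obtain ⟨L₁, hL₁, hc₁, rfl⟩ := h₁
  obtain ⟨L₂, hL₂, hc₂, rfl⟩ := h₂
  refine ⟨L₁ ++ L₂, ?_, ?_, by simp⟩
  · intro e he
    rcases List.mem_append.1 he with he | he
    · obtain ⟨a, b, c⟩ := hL₁ e he; exact ⟨Or.inl a, b, c⟩
    · obtain ⟨a, b, c⟩ := hL₂ e he; exact ⟨Or.inr a, b, c⟩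
  · intro i
    rw [List.map_append, List.count_append]
    refine le_trans (add_le_add ?_ ?_) (hM i)
    · by_cases hi : i ∈ I₁
      · simpa [hi] using hc₁ i
      · simp [hi, mem_of_count_pos hL₁ hi]
    · by_cases hi : i ∈ I₂
      · simpa [hi] using hc₂ i
      · simp [hi, mem_of_count_pos hL₂ hi]

theorem inv_mem_pSet {A : ℕ → FreeGroup X → Set (X × X)} {K I M} {w : FreeGroup X}
    (h : w ∈ pSet A K I M) : w⁻¹ ∈ pSet A K I M := by
  obtain ⟨L, hL, hc, rfl⟩ := h
  refine ⟨(L.map fun e => (e.1, e.2.1, e.2.2⁻¹)).reverse, ?_, ?_, ?_⟩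
  · intro e he
    rw [List.mem_reverse, List.mem_map] at he
    obtain ⟨e', he', rfl⟩ := he
    obtain ⟨a, b, c⟩ := hL e' he'
    exact ⟨a, b, inv_mem_iSetSym c⟩
  · intro i
    rw [List.map_reverse, List.count_reverse, List.map_map]
    simpa [Function.comp_def] using hc i
  · rw [List.prod_inv_reverse]
    congr 1
    rw [← List.map_reverse, ← List.map_reverse, List.map_map, ← List.map_reverse, List.map_map]
    apply List.map_congr_left
    intro e _
    simp [fac, Function.comp, mul_assoc]

theorem single_mem_pSet {A : ℕ → FreeGroup X → Set (X × X)} {K I} {M : ℕ} (hM : 1 ≤ M)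
    {i : ℕ} {g s : FreeGroup X} (hi : i ∈ I) (hg : g ∈ K) (hs : s ∈ iSetSym (A i g)) :
    g * s * g⁻¹ ∈ pSet A K I M :=
  ⟨[(i, g, s)], by
    intro e he
    rw [List.mem_singleton] at he
    subst he
    exact ⟨hi, hg, hs⟩, by
    intro j
    simp only [List.map_cons, List.map_nil]
    exact le_trans List.count_le_length (by simpa using hM), by simp [fac]⟩


end Stmt6Aux

namespace Stmt6Aux
open Filter Set Function
open scoped Classical
set_option linter.unusedSectionVars false
variable {X : Type*} [UniformSpace X]


theorem reindex_mem_pSet {A B : ℕ → FreeGroup X → Set (X × X)} {K I I' M} {w : FreeGroup X}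
    (h : w ∈ pSet A K I M) (σ : ℕ → ℕ) (hσ : Function.Injective σ)
    (hσI : ∀ i ∈ I, σ i ∈ I') (hAB : ∀ i ∈ I, ∀ g ∈ K, A i g ⊆ B (σ i) g) :
    w ∈ pSet B K I' M := by
  obtain ⟨L, hL, hc, rfl⟩ := h
  refine ⟨L.map fun e => (σ e.1, e.2), ?_, ?_, ?_⟩
  · intro e he
    rw [List.mem_map] at he
    obtain ⟨e', he', rfl⟩ := he
    obtain ⟨a, b, c⟩ := hL e' he'
    exact ⟨hσI _ a, b, iSetSym_mono (hAB _ a _ b) c⟩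
  · intro i
    have : (List.map Prod.fst (L.map fun e => (σ e.1, e.2))) = (L.map Prod.fst).map σ := by
      rw [List.map_map, List.map_map]; rfl
    rw [this]
    by_cases hi : ∃ j, σ j = i
    · obtain ⟨j, rfl⟩ := hi
      rw [List.count_map_of_injective _ σ hσ]
      exact hc j
    · rw [List.count_eq_zero.2]
      · exact Nat.zero_le M
      · intro hmem
        obtain ⟨j, _, hj⟩ := List.mem_map.1 hmem
        exact hi ⟨j, hj⟩
  · rw [List.map_map]; rfl

theorem conj_prod_eq (x : FreeGroup X) (L : List (Entry X)) :
    x * (List.map fac L).prod * x⁻¹ = (L.map fun e => fac (e.1, x * e.2.1, e.2.2)).prod := by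
  induction L with
  | nil => simp
  | cons e L ih =>
    simp only [List.map_cons, List.prod_cons]
    rw [show x * (fac e * (List.map fac L).prod) * x⁻¹
        = (x * fac e * x⁻¹) * (x * (List.map fac L).prod * x⁻¹) by group, ih]
    congr 1
    simp [fac, mul_assoc]

theorem conj_mem_pSet {A : ℕ → FreeGroup X → Set (X × X)} {I M} {w : FreeGroup X}
    (h : w ∈ pSet A univ I M) (x : FreeGroup X) :
    x * w * x⁻¹ ∈ pSet (fun i g => A i (x⁻¹ * g)) univ I M := by
  obtain ⟨L, hL, hc, rfl⟩ := h
  refine ⟨L.map fun e => (e.1, x * e.2.1, e.2.2), ?_, ?_, ?_⟩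
  · intro e he
    rw [List.mem_map] at he
    obtain ⟨e', he', rfl⟩ := he
    obtain ⟨a, _, c⟩ := hL e' he'
    refine ⟨a, trivial, ?_⟩
    simpa [inv_mul_cancel_left] using c
  · intro i
    have : (List.map Prod.fst (L.map fun e => (e.1, x * e.2.1, e.2.2))) = L.map Prod.fst := by
      rw [List.map_map]; rfl
    rw [this]; exact hc i
  · rw [List.map_map]
    exact conj_prod_eq x L

/-- The basic neighborhoods of `1` for the finest group topology. -/
def Uset (A : ℕ → FreeGroup X → Set (X × X)) : Set (FreeGroup X) := pSet A univ univ 1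

def gfb (X : Type*) [UniformSpace X] : GroupFilterBasis (FreeGroup X) where
  sets := {S | ∃ A : ℕ → FreeGroup X → Set (X × X),
    (∀ i g, A i g ∈ uniformity X) ∧ S = Uset A}
  nonempty := ⟨Uset fun _ _ => univ, fun _ _ => univ, fun _ _ => univ_mem, rfl⟩
  inter_sets := by
    rintro _ _ ⟨A, hA, rfl⟩ ⟨B, hB, rfl⟩
    refine ⟨Uset fun i g => A i g ∩ B i g, ⟨_, fun i g => inter_mem (hA i g) (hB i g), rfl⟩, ?_⟩
    exact subset_inter
      (pSet_mono (fun i _ g _ => inter_subset_left) subset_rfl subset_rfl le_rfl)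
      (pSet_mono (fun i _ g _ => inter_subset_right) subset_rfl subset_rfl le_rfl)
  one' := by
    rintro _ ⟨A, hA, rfl⟩
    exact one_mem_pSet
  mul' := by
    rintro _ ⟨A, hA, rfl⟩
    refine ⟨Uset fun i g => A (2 * i) g ∩ A (2 * i + 1) g,
      ⟨_, fun i g => inter_mem (hA _ g) (hA _ g), rfl⟩, ?_⟩
    rintro w ⟨w₁, h₁, w₂, h₂, rfl⟩
    have e1 : w₁ ∈ pSet A univ {j | Even j} 1 :=
      reindex_mem_pSet h₁ (fun i => 2 * i) (fun a b h => by dsimp at h; omega)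
        (fun i _ => ⟨i, show 2 * i = i + i by omega⟩) (fun i _ g _ => inter_subset_left)
    have e2 : w₂ ∈ pSet A univ {j | Odd j} 1 :=
      reindex_mem_pSet h₂ (fun i => 2 * i + 1) (fun a b h => by dsimp at h; omega)
        (fun i _ => ⟨i, show 2 * i + 1 = 2 * i + 1 by rfl⟩) (fun i _ g _ => inter_subset_right)
    have := mul_mem_pSet_count (M := 1) e1 e2 ?_
    · exact pSet_mono (fun _ _ _ _ => subset_rfl) subset_rfl (subset_univ _) le_rfl this
    · intro i
      rcases Nat.even_or_odd i with h | h
      · simp [h, Nat.not_odd_iff_even.2 h]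
      · simp [h, Nat.not_even_iff_odd.2 h]
  inv' := by
    rintro _ ⟨A, hA, rfl⟩
    exact ⟨Uset A, ⟨A, hA, rfl⟩, fun w hw => inv_mem_pSet hw⟩
  conj' := by
    rintro x₀ _ ⟨A, hA, rfl⟩
    refine ⟨Uset fun i g => A i (x₀ * g), ⟨_, fun i g => hA i _, rfl⟩, ?_⟩
    intro w hw
    have := conj_mem_pSet hw x₀
    refine pSet_mono (fun i _ g _ => ?_) subset_rfl subset_rfl le_rfl this
    rw [mul_inv_cancel_left]

theorem iSet_mem_freeFilter {V : Set (X × X)} (hV : V ∈ uniformity X) :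
    iSet V ∈ freeFilter X :=
  Filter.mem_generate_iff.2 ⟨{iSet V}, by
    rintro _ rfl
    exact ⟨V, hV, rfl⟩, finite_singleton _, by simp⟩

theorem exists_iSet_subset {S : Set (FreeGroup X)} (hS : S ∈ freeFilter X) :
    ∃ V ∈ uniformity X, iSet V ⊆ S := by
  obtain ⟨t, hts, htfin, hsub⟩ := Filter.mem_generate_iff.1 hS
  choose! Vu hVu hVeq using fun u (hu : u ∈ t) => hts hu
  refine ⟨⋂ u ∈ t, Vu u, (Filter.biInter_mem htfin).2 hVu, ?_⟩
  refine subset_trans ?_ hsub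
  intro w hw
  rw [mem_sInter]
  intro u hu
  have h2 : w ∈ iSet (Vu u) := iSet_mono (biInter_subset_of_mem hu) hw
  rwa [← hVeq u hu] at h2

theorem Uset_mem_freeFilter {A : ℕ → FreeGroup X → Set (X × X)}
    (hA : ∀ i g, A i g ∈ uniformity X) : Uset A ∈ freeFilter X := by
  refine Filter.mem_of_superset (iSet_mem_freeFilter (symEnt_mem (hA 0 1))) ?_
  intro s hs
  have : (1 : FreeGroup X) * s * (1 : FreeGroup X)⁻¹ ∈ Uset A :=
    single_mem_pSet le_rfl trivial trivial hs
  simpa using this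

theorem freeFilter_le_gfb : freeFilter X ≤ @nhds (FreeGroup X) (gfb X).topology 1 := by
  rw [GroupFilterBasis.nhds_one_eq]
  intro S hS
  obtain ⟨U, hU, hUS⟩ := (FilterBasis.mem_filter_iff _).1 hS
  obtain ⟨A, hA, rfl⟩ := hU
  exact Filter.mem_of_superset (Uset_mem_freeFilter hA) hUS

theorem exists_nhds_one_split5 {t : TopologicalSpace (FreeGroup X)}
    (ht : @IsTopologicalGroup (FreeGroup X) t _) {S : Set (FreeGroup X)}
    (hS : S ∈ @nhds _ t 1) :
    ∃ T ∈ @nhds (FreeGroup X) t 1, ∀ a ∈ T, ∀ b ∈ T, ∀ c ∈ T, ∀ d ∈ T, ∀ e ∈ T,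
      a * b * c * d * e ∈ S := by
  letI := t
  obtain ⟨V₁, hV₁, hV₁p⟩ := exists_nhds_one_split hS
  obtain ⟨V₂, hV₂, hV₂p⟩ := exists_nhds_one_split hV₁
  obtain ⟨V₃, hV₃, hV₃p⟩ := exists_nhds_one_split hV₂
  refine ⟨V₃ ∩ V₂ ∩ V₁, inter_mem (inter_mem hV₃ hV₂) hV₁, ?_⟩
  intro a ha b hb c hc d hd e he
  have hab : a * b ∈ V₂ := hV₃p a ha.1.1 b hb.1.1
  have hcd : c * d ∈ V₂ := hV₃p c hc.1.1 d hd.1.1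
  have habcd : a * b * (c * d) ∈ V₁ := hV₂p _ hab _ hcd
  have : a * b * (c * d) * e ∈ S := hV₁p _ habcd e he.2
  rwa [show a * b * (c * d) * e = a * b * c * d * e by group] at this

theorem exists_chain {t : TopologicalSpace (FreeGroup X)}
    (ht : @IsTopologicalGroup (FreeGroup X) t _) {N : Set (FreeGroup X)}
    (hN : N ∈ @nhds _ t 1) :
    ∃ W : ℕ → Set (FreeGroup X), W 0 ⊆ N ∧ (∀ i, W i ∈ @nhds (FreeGroup X) t 1) ∧
      ∀ i, ∀ a ∈ W (i+1), ∀ b ∈ W (i+1), ∀ c ∈ W (i+1), ∀ d ∈ W (i+1), ∀ e ∈ W (i+1),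
        a * b * c * d * e ∈ W i := by
  letI := t
  choose! f hf1 hf2 using fun (S : Set (FreeGroup X)) (hS : S ∈ @nhds _ t 1) =>
    exists_nhds_one_split5 ht hS
  refine ⟨fun n => Nat.rec N (fun _ S => f S) n, subset_rfl, ?_, ?_⟩
  · have key : ∀ i, (Nat.rec N (fun _ S => f S) i : Set (FreeGroup X)) ∈ @nhds _ t 1 := by
      intro i
      induction i with
      | zero => exact hN
      | succ i ih => exact hf1 _ ih
    exact key
  · intro i
    have : (Nat.rec N (fun _ S => f S) i : Set (FreeGroup X)) ∈ @nhds _ t 1 := by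
      induction i with
      | zero => exact hN
      | succ i ih => exact hf1 _ ih
    exact hf2 _ this

section Chain

variable {W : ℕ → Set (FreeGroup X)} (h1 : ∀ i, (1 : FreeGroup X) ∈ W i)
  (h5 : ∀ i, ∀ a ∈ W (i+1), ∀ b ∈ W (i+1), ∀ c ∈ W (i+1), ∀ d ∈ W (i+1), ∀ e ∈ W (i+1),
    a * b * c * d * e ∈ W i)

include h1 h5

theorem chain_anti : ∀ {m j : ℕ}, m ≤ j → W j ⊆ W m := by
  have step : ∀ i, W (i+1) ⊆ W i := by
    intro i a ha
    have := h5 i a ha 1 (h1 _) 1 (h1 _) 1 (h1 _) 1 (h1 _)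
    simpa using this
  intro m j h
  induction j with
  | zero => cases Nat.le_zero.1 h; exact subset_rfl
  | succ j ih =>
    rcases Nat.lt_or_ge m (j+1) with h' | h'
    · exact subset_trans (step j) (ih (Nat.lt_succ_iff.1 h'))
    · have : m = j + 1 := le_antisymm h h'
      subst this; exact subset_rfl

theorem chain_prod : ∀ n (l : List (ℕ × FreeGroup X)), l.length ≤ n → ∀ m,
    (∀ p ∈ l, m < p.1 ∧ p.2 ∈ W p.1) → (∀ i, (l.map Prod.fst).count i ≤ 2) →
    (l.map Prod.snd).prod ∈ W m := by
  intro n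
  induction n with
  | zero =>
    intro l hl m _ _
    rw [List.length_eq_zero_iff.1 (Nat.le_zero.1 hl)]
    simpa using h1 m
  | succ n ih =>
    intro l hlen m hp hc
    by_cases hnil : l = []
    · subst hnil; simpa using h1 m
    have hex : ∃ k, k ∈ l.map Prod.fst := by
      obtain ⟨p, hp'⟩ := List.exists_mem_of_ne_nil l hnil
      exact ⟨p.1, List.mem_map_of_mem (f := Prod.fst) hp'⟩
    have hs_mem : Nat.find hex ∈ l.map Prod.fst := Nat.find_spec hex
    set s := Nat.find hex with hs_def
    have hs_min : ∀ j ∈ l.map Prod.fst, s ≤ j := fun j hj => Nat.find_min' hex hj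
    obtain ⟨p, hpl, hps⟩ := List.mem_map.1 hs_mem
    have hms : m < s := by rw [← hps]; exact (hp p hpl).1
    obtain ⟨s', hs'⟩ : ∃ s', s = s' + 1 := ⟨s - 1, by omega⟩
    have hms' : m ≤ s' := by omega
    obtain ⟨l₁, l₂, hl12⟩ := List.append_of_mem hpl
    have hcnt := hc s
    rw [hl12] at hcnt
    simp only [List.map_append, List.map_cons, List.count_append, List.count_cons, hps,
      beq_self_eq_true, if_true] at hcnt
    have hp2 : p.2 ∈ W s := by rw [← hps]; exact (hp p hpl).2
    have piece : ∀ lp : List (ℕ × FreeGroup X), lp.Sublist l → lp.length ≤ n →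
        s ∉ lp.map Prod.fst → (lp.map Prod.snd).prod ∈ W s := by
      intro lp hsub hlp hns
      apply ih lp hlp s
      · intro r hr
        have hrl : r ∈ l := hsub.subset hr
        refine ⟨?_, (hp r hrl).2⟩
        have h1' := hs_min r.1 (List.mem_map_of_mem (f := Prod.fst) hrl)
        have hne : r.1 ≠ s := fun h => hns (h ▸ List.mem_map_of_mem (f := Prod.fst) hr)
        omega
      · intro i
        exact le_trans (((hsub.map Prod.fst).count_le) i) (hc i)
    have hsub1 : l₁.Sublist l := hl12 ▸ List.sublist_append_left l₁ (p :: l₂)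
    have hsub2 : l₂.Sublist l := hl12 ▸
      ((List.sublist_cons_self p l₂).trans (List.sublist_append_right l₁ (p :: l₂)))
    have hlen' : l₁.length + 1 + l₂.length ≤ n + 1 := by
      have h' := hlen; rw [hl12] at h'; simp [List.length_append] at h'; omega
    by_cases hA : s ∈ l₁.map Prod.fst
    · -- second occurrence inside l₁
      obtain ⟨q, hql, hqs⟩ := List.mem_map.1 hA
      obtain ⟨l₃, l₄, hl34⟩ := List.append_of_mem hql
      have hcnt1 := hcnt
      have hc1 : (l₁.map Prod.fst).count s ≥ 1 := List.one_le_count_iff.2 hA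
      have hcnt3 : (l₃.map Prod.fst).count s + (l₄.map Prod.fst).count s + 1
          = (l₁.map Prod.fst).count s := by
        rw [hl34]
        simp only [List.map_append, List.map_cons, List.count_append, List.count_cons, hqs,
          beq_self_eq_true, if_true]
        omega
      have hns3 : s ∉ l₃.map Prod.fst := by
        intro h; have := List.one_le_count_iff.2 h; omega
      have hns4 : s ∉ l₄.map Prod.fst := by
        intro h; have := List.one_le_count_iff.2 h; omega
      have hns2 : s ∉ l₂.map Prod.fst := by
        intro h; have := List.one_le_count_iff.2 h; omega
      have hlen34 : l₃.length + 1 + l₄.length = l₁.length := by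
        rw [hl34]; simp [List.length_append]; omega
      have hsub3 : l₃.Sublist l := ((hl34 ▸ List.sublist_append_left l₃ (q :: l₄)).trans hsub1)
      have hsub4 : l₄.Sublist l := (((List.sublist_cons_self q l₄).trans
        (List.sublist_append_right l₃ (q :: l₄))).trans (hl34 ▸ hsub1))
      have hq2 : q.2 ∈ W s := by rw [← hqs]; exact (hp q (hsub1.subset hql)).2
      have hP3 := piece l₃ hsub3 (by omega) hns3
      have hP4 := piece l₄ hsub4 (by omega) hns4
      have hP2 := piece l₂ hsub2 (by omega) hns2
      rw [hs'] at hP3 hP4 hP2 hq2 hp2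
      have key := h5 s' _ hP3 _ hq2 _ hP4 _ hp2 _ hP2
      have heq : (l.map Prod.snd).prod
          = (l₃.map Prod.snd).prod * q.2 * (l₄.map Prod.snd).prod * p.2
            * (l₂.map Prod.snd).prod := by
        rw [hl12, hl34]
        simp [List.map_append, List.prod_append, List.prod_cons, mul_assoc]
      rw [heq]
      exact chain_anti h1 h5 hms' key
    · by_cases hB : s ∈ l₂.map Prod.fst
      · obtain ⟨q, hql, hqs⟩ := List.mem_map.1 hB
        obtain ⟨l₃, l₄, hl34⟩ := List.append_of_mem hql
        have hcnt3 : (l₃.map Prod.fst).count s + (l₄.map Prod.fst).count s + 1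
            = (l₂.map Prod.fst).count s := by
          rw [hl34]
          simp only [List.map_append, List.map_cons, List.count_append, List.count_cons, hqs,
            beq_self_eq_true, if_true]
          omega
        have hns3 : s ∉ l₃.map Prod.fst := by
          intro h; have := List.one_le_count_iff.2 h; omega
        have hns4 : s ∉ l₄.map Prod.fst := by
          intro h; have := List.one_le_count_iff.2 h; omega
        have hns1 : s ∉ l₁.map Prod.fst := hA
        have hlen34 : l₃.length + 1 + l₄.length = l₂.length := by
          rw [hl34]; simp [List.length_append]; omega
        have hsub3 : l₃.Sublist l := ((hl34 ▸ List.sublist_append_left l₃ (q :: l₄)).trans hsub2)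
        have hsub4 : l₄.Sublist l := (((List.sublist_cons_self q l₄).trans
          (List.sublist_append_right l₃ (q :: l₄))).trans (hl34 ▸ hsub2))
        have hq2 : q.2 ∈ W s := by rw [← hqs]; exact (hp q (hsub2.subset hql)).2
        have hP3 := piece l₃ hsub3 (by omega) hns3
        have hP4 := piece l₄ hsub4 (by omega) hns4
        have hP1 := piece l₁ hsub1 (by omega) hns1
        rw [hs'] at hP3 hP4 hP1 hq2 hp2
        have key := h5 s' _ hP1 _ hp2 _ hP3 _ hq2 _ hP4
        have heq : (l.map Prod.snd).prod
            = (l₁.map Prod.snd).prod * p.2 * (l₃.map Prod.snd).prod * q.2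
              * (l₄.map Prod.snd).prod := by
          rw [hl12, hl34]
          simp [List.map_append, List.prod_append, List.prod_cons, mul_assoc]
        rw [heq]
        exact chain_anti h1 h5 hms' key
      · have hP1 := piece l₁ hsub1 (by omega) hA
        have hP2 := piece l₂ hsub2 (by omega) hB
        rw [hs'] at hP1 hP2 hp2
        have key := h5 s' _ hP1 _ hp2 _ hP2 _ (h1 (s'+1)) _ (h1 (s'+1))
        have heq : (l.map Prod.snd).prod
            = (l₁.map Prod.snd).prod * p.2 * (l₂.map Prod.snd).prod * 1 * 1 := by
          rw [hl12]
          simp [List.map_append, List.prod_append, List.prod_cons, mul_assoc]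
        rw [heq]
        exact chain_anti h1 h5 hms' key

end Chain


theorem exists_T {t : TopologicalSpace (FreeGroup X)}
    (ht : @IsTopologicalGroup (FreeGroup X) t _)
    (hconv : freeFilter X ≤ @nhds _ t 1) {S : Set (FreeGroup X)} (hS : S ∈ @nhds _ t 1)
    (h : FreeGroup X) : ∃ V ∈ uniformity X, ∀ s ∈ iSet V, h * s * h⁻¹ ∈ S := by
  letI := t
  have hcont : Continuous fun y : FreeGroup X => h * y * h⁻¹ :=
    (continuous_const.mul continuous_id).mul continuous_const
  have hpre : (fun y : FreeGroup X => h * y * h⁻¹) ⁻¹' S ∈ @nhds _ t (1 : FreeGroup X) := by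
    apply hcont.continuousAt.preimage_mem_nhds
    simpa using hS
  obtain ⟨V, hV, hVsub⟩ := exists_iSet_subset (hconv hpre)
  exact ⟨V, hV, fun s hs => hVsub hs⟩

theorem infinite_split {I : Set ℕ} (hI : I.Infinite) :
    ∃ I₁ I₂ : Set ℕ, I₁ ⊆ I ∧ I₂ ⊆ I ∧ Disjoint I₁ I₂ ∧ I₁.Infinite ∧ I₂.Infinite := by
  have e := Set.Infinite.natEmbedding I hI
  have hinj : Function.Injective fun n => ((e n : I) : ℕ) :=
    fun a b h => e.injective (Subtype.coe_injective h)
  refine ⟨Set.range fun n => ((e (2 * n) : I) : ℕ), Set.range fun n => ((e (2 * n + 1) : I) : ℕ),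
    ?_, ?_, ?_, ?_, ?_⟩
  · rintro _ ⟨n, rfl⟩; exact (e (2 * n)).2
  · rintro _ ⟨n, rfl⟩; exact (e (2 * n + 1)).2
  · rw [Set.disjoint_left]
    rintro _ ⟨n, rfl⟩ ⟨m, hm⟩
    have := hinj hm
    omega
  · exact Set.infinite_range_of_injective fun a b h => by have := hinj h; omega
  · exact Set.infinite_range_of_injective fun a b h => by have := hinj h; omega

theorem dense_pair {D : Set X} (hD : Dense D) {V : Set (X × X)} (hV : V ∈ uniformity X)
    (a : X) : ∃ d ∈ D, (a, d) ∈ symEnt V := by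
  have hball : UniformSpace.ball a (symEnt V) ∈ nhds a :=
    UniformSpace.ball_mem_nhds a (symEnt_mem hV)
  obtain ⟨d, hdb, hdD⟩ := (mem_closure_iff_nhds.1 (hD a)) _ hball
  exact ⟨d, hdD, hdb⟩

theorem approx (A : ℕ → FreeGroup X → Set (X × X)) (hA : ∀ i g, A i g ∈ uniformity X)
    {D : Set X} (hD : Dense D) {K : Set (FreeGroup X)}
    (hK1 : (1 : FreeGroup X) ∈ K) (hKmul : ∀ a ∈ K, ∀ b ∈ K, a * b ∈ K)
    (hKinv : ∀ a ∈ K, a⁻¹ ∈ K) (hKof : ∀ d ∈ D, FreeGroup.of d ∈ K) :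
    ∀ g : FreeGroup X, ∀ I : Set ℕ, I.Infinite → ∀ x ∈ K,
      (∃ h ∈ K, x * g * h⁻¹ ∈ pSet A K I 1) ∧ (∃ h ∈ K, h * g * x⁻¹ ∈ pSet A K I 1) := by
  intro g
  induction g using FreeGroup.induction_on with
  | C1 =>
    intro I hI x hx
    constructor
    · refine ⟨x, hx, ?_⟩
      rw [show x * 1 * x⁻¹ = (1 : FreeGroup X) by group]
      exact one_mem_pSet
    · refine ⟨x, hx, ?_⟩
      rw [show x * 1 * x⁻¹ = (1 : FreeGroup X) by group]
      exact one_mem_pSet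
  | of a =>
    intro I hI x hx
    obtain ⟨i, hiI⟩ := hI.nonempty
    obtain ⟨d, hdD, hdV⟩ := dense_pair hD (hA i x) a
    constructor
    · refine ⟨x * FreeGroup.of d, hKmul x hx _ (hKof d hdD), ?_⟩
      have hs : FreeGroup.of a * (FreeGroup.of d)⁻¹ ∈ iSetSym (A i x) :=
        Or.inr ⟨(a, d), hdV, rfl⟩
      have hmem := single_mem_pSet (M := 1) le_rfl hiI hx hs
      rw [show x * FreeGroup.of a * (x * FreeGroup.of d)⁻¹
          = x * (FreeGroup.of a * (FreeGroup.of d)⁻¹) * x⁻¹ from by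
        group]
      exact hmem
    · refine ⟨x * (FreeGroup.of d)⁻¹, hKmul x hx _ (hKinv _ (hKof d hdD)), ?_⟩
      have hs : (FreeGroup.of d)⁻¹ * FreeGroup.of a ∈ iSetSym (A i x) :=
        Or.inl ⟨(d, a), ⟨hdV.2, hdV.1⟩, rfl⟩
      have hmem := single_mem_pSet (M := 1) le_rfl hiI hx hs
      rw [show x * (FreeGroup.of d)⁻¹ * FreeGroup.of a * x⁻¹
          = x * ((FreeGroup.of d)⁻¹ * FreeGroup.of a) * x⁻¹ from by
        group]
      exact hmem
  | inv_of a _ =>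
    intro I hI x hx
    obtain ⟨i, hiI⟩ := hI.nonempty
    obtain ⟨d, hdD, hdV⟩ := dense_pair hD (hA i x) a
    constructor
    · refine ⟨x * (FreeGroup.of d)⁻¹, hKmul x hx _ (hKinv _ (hKof d hdD)), ?_⟩
      have hs : (FreeGroup.of a)⁻¹ * FreeGroup.of d ∈ iSetSym (A i x) :=
        Or.inl ⟨(a, d), hdV, rfl⟩
      have hmem := single_mem_pSet (M := 1) le_rfl hiI hx hs
      rw [show x * (FreeGroup.of a)⁻¹ * (x * (FreeGroup.of d)⁻¹)⁻¹
          = x * ((FreeGroup.of a)⁻¹ * FreeGroup.of d) * x⁻¹ from by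
        group]
      exact hmem
    · refine ⟨x * FreeGroup.of d, hKmul x hx _ (hKof d hdD), ?_⟩
      have hs : FreeGroup.of d * (FreeGroup.of a)⁻¹ ∈ iSetSym (A i x) :=
        Or.inr ⟨(d, a), ⟨hdV.2, hdV.1⟩, rfl⟩
      have hmem := single_mem_pSet (M := 1) le_rfl hiI hx hs
      rw [show x * FreeGroup.of d * (FreeGroup.of a)⁻¹ * x⁻¹
          = x * (FreeGroup.of d * (FreeGroup.of a)⁻¹) * x⁻¹ from by
        group]
      exact hmem
  | mul g₁ g₂ ih₁ ih₂ =>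
    intro I hI x hx
    obtain ⟨I₁, I₂, hI₁, hI₂, hdisj, hinf₁, hinf₂⟩ := infinite_split hI
    have hcount : ∀ i : ℕ, (if i ∈ I₁ then 1 else 0) + (if i ∈ I₂ then 1 else 0) ≤ 1 := by
      intro i
      by_cases h1 : i ∈ I₁
      · have h2 : i ∉ I₂ := Set.disjoint_left.1 hdisj h1
        simp [h1, h2]
      · by_cases h2 : i ∈ I₂ <;> simp [h1, h2]
    constructor
    · obtain ⟨h₁, hh₁, hs₁⟩ := (ih₁ I₁ hinf₁ x hx).1
      obtain ⟨h₂, hh₂, hs₂⟩ := (ih₂ I₂ hinf₂ h₁ hh₁).1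
      refine ⟨h₂, hh₂, ?_⟩
      have hmm := mul_mem_pSet_count (M := 1) hs₁ hs₂ hcount
      rw [show x * (g₁ * g₂) * h₂⁻¹ = (x * g₁ * h₁⁻¹) * (h₁ * g₂ * h₂⁻¹) by group]
      exact pSet_mono (fun _ _ _ _ => subset_rfl) subset_rfl (Set.union_subset hI₁ hI₂) le_rfl hmm
    · obtain ⟨h₂, hh₂, hs₂⟩ := (ih₂ I₂ hinf₂ x hx).2
      obtain ⟨h₁, hh₁, hs₁⟩ := (ih₁ I₁ hinf₁ h₂ hh₂).2
      refine ⟨h₁, hh₁, ?_⟩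
      have hmm := mul_mem_pSet_count (M := 1) hs₁ hs₂ hcount
      rw [show h₁ * (g₁ * g₂) * x⁻¹ = (h₁ * g₁ * h₂⁻¹) * (h₂ * g₂ * x⁻¹) by group]
      exact pSet_mono (fun _ _ _ _ => subset_rfl) subset_rfl (Set.union_subset hI₁ hI₂) le_rfl hmm


def idx (i n : ℕ) : ℕ := Nat.pairEquiv (i, n) + 1

theorem idx_inj {i n i' n' : ℕ} (h : idx i n = idx i' n') : i = i' ∧ n = n' := by
  have h' : Nat.pairEquiv (i, n) = Nat.pairEquiv (i', n') := by
    simpa [idx] using h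
  have := Nat.pairEquiv.injective h'
  exact ⟨congrArg Prod.fst this, congrArg Prod.snd this⟩

theorem idx_pos (i n : ℕ) : 1 ≤ idx i n := Nat.succ_le_succ (Nat.zero_le _)

def B1 (i : ℕ) : Set ℕ := Set.range fun n => idx i (2 * n)

def jdx (i : ℕ) : ℕ := idx i 1

def Bud (i : ℕ) : Set ℕ := insert (jdx i) (B1 i)

theorem B1_infinite (i : ℕ) : (B1 i).Infinite :=
  Set.infinite_range_of_injective fun a b h => by
    have := (idx_inj h).2; omega

theorem jdx_not_mem_B1 (i : ℕ) : jdx i ∉ B1 i := by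
  rintro ⟨n, hn⟩
  have := (idx_inj hn).2
  omega

theorem Bud_disjoint {i i' : ℕ} (h : i ≠ i') : Disjoint (Bud i) (Bud i') := by
  rw [Set.disjoint_left]
  intro j hj hj'
  have h1 : ∃ n, idx i n = j := by
    rcases hj with rfl | ⟨n, rfl⟩
    exacts [⟨1, rfl⟩, ⟨2 * n, rfl⟩]
  have h2 : ∃ n, idx i' n = j := by
    rcases hj' with rfl | ⟨n, rfl⟩
    exacts [⟨1, rfl⟩, ⟨2 * n, rfl⟩]
  obtain ⟨n, rfl⟩ := h1
  obtain ⟨m, hm⟩ := h2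
  exact h ((idx_inj hm).1).symm

theorem Bud_pos {i j : ℕ} (h : j ∈ Bud i) : 1 ≤ j := by
  rcases h with rfl | ⟨n, rfl⟩
  · exact idx_pos _ _
  · exact idx_pos _ _

theorem Uset_subset_main (A : ℕ → FreeGroup X → Set (X × X)) (hA : ∀ i g, A i g ∈ uniformity X)
    {D : Set X} (hD : Dense D) {K : Set (FreeGroup X)}
    (hK1 : (1 : FreeGroup X) ∈ K) (hKmul : ∀ a ∈ K, ∀ b ∈ K, a * b ∈ K)
    (hKinv : ∀ a ∈ K, a⁻¹ ∈ K) (hKof : ∀ d ∈ D, FreeGroup.of d ∈ K) :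
    ∃ Af : ℕ → FreeGroup X → Set (X × X), (∀ i g, Af i g ∈ uniformity X) ∧
      Uset Af ⊆ pSet A K {j | 1 ≤ j} 2 := by
  have hchoice : ∀ (i : ℕ) (g : FreeGroup X), ∃ h ∈ K, g * h⁻¹ ∈ pSet A K (B1 i) 1 := by
    intro i g
    obtain ⟨h, hh, hs⟩ := (approx A hA hD hK1 hKmul hKinv hKof g (B1 i) (B1_infinite i) 1 hK1).1
    refine ⟨h, hh, ?_⟩
    rwa [one_mul] at hs
  choose hf hfK hfS using hchoice
  refine ⟨fun i g => A (jdx i) (hf i g), fun i g => hA _ _, ?_⟩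
  have main : ∀ L : List (Entry X),
      (∀ e ∈ L, goodEntry (fun i g => A (jdx i) (hf i g)) Set.univ Set.univ e) →
      (∀ i, (L.map Prod.fst).count i ≤ 1) →
      (L.map fac).prod ∈ pSet A K {j | ∃ i ∈ L.map Prod.fst, j ∈ Bud i} 2 := by
    intro L
    induction L with
    | nil => intro _ _; simpa using one_mem_pSet
    | cons e L ih =>
      intro hL hc
      have hnotmem : e.1 ∉ L.map Prod.fst := by
        intro hmem
        have h1 := List.one_le_count_iff.2 hmem
        have h2 := hc e.1
        simp only [List.map_cons, List.count_cons, beq_self_eq_true, if_true] at h2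
        omega
      have hfacmem : fac e ∈ pSet A K (Bud e.1) 2 := by
        have hq : e.2.1 * (hf e.1 e.2.1)⁻¹ ∈ pSet A K (B1 e.1) 1 := hfS e.1 e.2.1
        have hmid : hf e.1 e.2.1 * e.2.2 * (hf e.1 e.2.1)⁻¹ ∈ pSet A K {jdx e.1} 1 :=
          single_mem_pSet le_rfl rfl (hfK e.1 e.2.1) (hL e List.mem_cons_self).2.2
        have hqi : (e.2.1 * (hf e.1 e.2.1)⁻¹)⁻¹ ∈ pSet A K (B1 e.1) 1 := inv_mem_pSet hq
        have step1 := mul_mem_pSet_count (M := 1) hq hmid ?_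
        · have step2 := mul_mem_pSet_count (M := 2) step1 hqi ?_
          · have heq : fac e = e.2.1 * (hf e.1 e.2.1)⁻¹ *
                (hf e.1 e.2.1 * e.2.2 * (hf e.1 e.2.1)⁻¹) *
                (e.2.1 * (hf e.1 e.2.1)⁻¹)⁻¹ := by
              simp only [fac]; group
            rw [heq]
            refine pSet_mono (fun _ _ _ _ => subset_rfl) subset_rfl ?_ le_rfl step2
            intro j hj
            rcases hj with (hj | hj) | hj
            · exact Set.mem_insert_of_mem _ hj
            · rcases hj with rfl; exact Set.mem_insert _ _
            · exact Set.mem_insert_of_mem _ hj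
          · intro j
            split <;> split <;> omega
        · intro j
          by_cases hj : j ∈ B1 e.1
          · rw [if_pos hj, if_neg (by
              intro hj'
              rw [Set.mem_singleton_iff] at hj'
              subst hj'
              exact jdx_not_mem_B1 e.1 hj)]
          · rw [if_neg hj]
            split <;> omega
      have htail := ih (fun e' he' => hL e' (List.mem_cons_of_mem e he')) ?_
      · have hcomb := mul_mem_pSet_count (M := 2) hfacmem htail ?_
        · simp only [List.map_cons, List.prod_cons]
          refine pSet_mono (fun _ _ _ _ => subset_rfl) subset_rfl ?_ le_rfl hcomb
          intro j hj
          rcases hj with hj | ⟨i, hi, hji⟩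
          · exact ⟨e.1, by simp, hj⟩
          · exact ⟨i, by simp [hi], hji⟩
        · intro j
          by_cases hj : j ∈ Bud e.1
          · have hnot : j ∉ {j | ∃ i ∈ List.map Prod.fst L, j ∈ Bud i} := by
              rintro ⟨i, hi, hji⟩
              have hne : e.1 ≠ i := fun h => hnotmem (h ▸ hi)
              exact Set.disjoint_left.1 (Bud_disjoint hne) hj hji
            rw [if_pos hj, if_neg hnot]
          · rw [if_neg hj]
            split <;> omega
      · intro i
        have h2 := hc i
        simp only [List.map_cons, List.count_cons] at h2
        split at h2 <;> omega
  rintro w ⟨L, hL, hc, rfl⟩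
  refine pSet_mono (fun _ _ _ _ => subset_rfl) subset_rfl ?_ le_rfl (main L hL hc)
  rintro j ⟨i, _, hji⟩
  exact Bud_pos hji

end Stmt6Aux

open Stmt6Aux

/-- Corollary 3.10: if `X` is a separable uniform space whose uniformity admits an
`ω^ω`-base, then the free topological group on `X` (the free group with the finest
group topology making the filter generated by the sets `i(V)`, `V ∈ 𝒰`, converge to
the identity) admits a local `ω^ω`-base. -/
theorem stmt6 {X : Type*} [UniformSpace X] [TopologicalSpace.SeparableSpace X]
    (hU : HasOmegaOmegaBase (uniformity X))
    (t : TopologicalSpace (FreeGroup X)) (ht : @IsTopologicalGroup (FreeGroup X) t _)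
    (hconv : freeFilter X ≤ @nhds (FreeGroup X) t 1)
    (hfinest : ∀ t' : TopologicalSpace (FreeGroup X),
      @IsTopologicalGroup (FreeGroup X) t' _ →
      freeFilter X ≤ @nhds (FreeGroup X) t' 1 → t ≤ t') :
    HasOmegaOmegaBase (@nhds (FreeGroup X) t 1) := by
  classical
  obtain ⟨bU, hbU_mem, hbU_mono, hbU_cof⟩ := hU
  obtain ⟨D, hDc, hDd⟩ := TopologicalSpace.exists_countable_dense X
  haveI : Countable ↥D := hDc.to_subtype
  set φ : FreeGroup ↥D →* FreeGroup X := FreeGroup.map Subtype.val with hφ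
  set K : Set (FreeGroup X) := Set.range φ with hK
  have hK1 : (1 : FreeGroup X) ∈ K := ⟨1, map_one φ⟩
  have hKmul : ∀ a ∈ K, ∀ b ∈ K, a * b ∈ K := by
    rintro _ ⟨a, rfl⟩ _ ⟨b, rfl⟩
    exact ⟨a * b, map_mul φ a b⟩
  have hKinv : ∀ a ∈ K, a⁻¹ ∈ K := by
    rintro _ ⟨a, rfl⟩
    exact ⟨a⁻¹, map_inv φ a⟩
  have hKof : ∀ d ∈ D, FreeGroup.of d ∈ K := fun d hd =>
    ⟨FreeGroup.of ⟨d, hd⟩, by simp [hφ]⟩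
  haveI : Countable (FreeGroup ↥D) := FreeGroup.toWord_injective.countable
  haveI hKcnt : Countable ↥K := (Set.countable_range φ).to_subtype
  haveI : Nonempty (ℕ × ↥K × ℕ) := ⟨⟨0, ⟨1, hK1⟩, 0⟩⟩
  obtain ⟨ι, hι⟩ := exists_injective_nat (ℕ × ↥K × ℕ)
  set Af : (ℕ → ℕ) → ℕ → FreeGroup X → Set (X × X) := fun f i g =>
    if hg : g ∈ K then bU fun n => f (ι (i, ⟨g, hg⟩, n)) else Set.univ with hAf
  have hAfmem : ∀ f i g, Af f i g ∈ uniformity X := by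
    intro f i g
    rw [hAf]
    dsimp only
    split
    · exact hbU_mem _
    · exact Filter.univ_mem
  have htle : t ≤ (gfb X).topology :=
    hfinest _ (gfb X).isTopologicalGroup freeFilter_le_gfb
  have hUmem : ∀ A : ℕ → FreeGroup X → Set (X × X), (∀ i g, A i g ∈ uniformity X) →
      Uset A ∈ @nhds (FreeGroup X) t 1 := by
    intro A hA
    exact nhds_mono htle ((gfb X).mem_nhds_one ⟨A, hA, rfl⟩)
  refine ⟨fun f => pSet (Af f) K {j | 1 ≤ j} 2, ?_, ?_, ?_⟩
  · intro f
    obtain ⟨Afull, hAfull, hsub⟩ := Uset_subset_main (Af f) (hAfmem f) hDd hK1 hKmul hKinv hKof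
    exact Filter.mem_of_superset (hUmem Afull hAfull) hsub
  · intro f g hfg
    refine pSet_mono (fun i _ x hx => ?_) subset_rfl subset_rfl le_rfl
    rw [hAf]
    dsimp only
    rw [dif_pos hx, dif_pos hx]
    exact hbU_mono _ _ fun n => hfg _
  · intro N hN
    obtain ⟨Wc, hW0, hWmem, hW5⟩ := exists_chain ht hN
    have h1W : ∀ i, (1 : FreeGroup X) ∈ Wc i := fun i => mem_of_mem_nhds (hWmem i)
    have hT : ∀ (i : ℕ) (h : FreeGroup X), ∃ V ∈ uniformity X, ∀ s ∈ iSet V,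
        h * s * h⁻¹ ∈ Wc i := fun i h => exists_T ht hconv (hWmem i) h
    choose T hTmem hTprop using hT
    choose Φ hΦ using fun (i : ℕ) (k : ↥K) => hbU_cof _ (hTmem i (k : FreeGroup X))
    set f : ℕ → ℕ := fun n => Φ (Function.invFun ι n).1 (Function.invFun ι n).2.1
      (Function.invFun ι n).2.2 with hf
    refine ⟨f, ?_⟩
    have hAfT : ∀ i ∈ {j : ℕ | 1 ≤ j}, ∀ g ∈ K, Af f i g ⊆ T i g := by
      intro i _ g hg
      rw [hAf]
      dsimp only
      rw [dif_pos hg]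
      have heq : (fun n => f (ι (i, ⟨g, hg⟩, n))) = Φ i ⟨g, hg⟩ := by
        funext n
        rw [hf]
        dsimp only
        rw [Function.leftInverse_invFun hι (i, ⟨g, hg⟩, n)]
      rw [heq]
      exact hΦ i ⟨g, hg⟩
    refine subset_trans (pSet_mono hAfT subset_rfl subset_rfl le_rfl) (subset_trans ?_ hW0)
    rintro w ⟨L, hL, hc, rfl⟩
    have hcp := chain_prod h1W hW5 L.length (L.map fun e => (e.1, fac e)) (by simp) 0 ?_ ?_
    · have heq2 : ((L.map fun e => (e.1, fac e)).map Prod.snd).prod = (L.map fac).prod := by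
        rw [List.map_map]; rfl
      rwa [heq2] at hcp
    · intro p hp
      rw [List.mem_map] at hp
      obtain ⟨e, heL, rfl⟩ := hp
      obtain ⟨hi, hgK, hss⟩ := hL e heL
      exact ⟨hi, hTprop e.1 e.2.1 _ (iSetSym_subset_iSet hss)⟩
    · intro i
      have heq3 : (L.map fun e => (e.1, fac e)).map Prod.fst = L.map Prod.fst := by
        rw [List.map_map]; rfl
      rw [heq3]
      exact hc i
end

section
/- Let (X, 𝒰) be a uniform space. Let A be the free Abelian group on the set X, let ℱ be the filter on A generated by the filter base consisting of the sets i(V) = { x − y : (x,y) ∈ V } for V ∈ 𝒰 (where elements of X are identified with the generators of A), and suppose t is a group topology on A such that ℱ converges to 0 with respect to t and t is the finest group topology with this property. Then (A, t) admits a local ω^ω-base if and only if the uniformity 𝒰 admits an ω^ω-base. -/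
/-- For an entourage `V` of the uniform space `X`, the subset
`i(V) = {x − y : (x,y) ∈ V}` of the free Abelian group on `X`. -/
def iSetAb {X : Type*} (V : Set (X × X)) : Set (FreeAbelianGroup X) :=
  {w | ∃ p ∈ V, w = FreeAbelianGroup.of p.1 - FreeAbelianGroup.of p.2}

/-- The filter on the free Abelian group on a uniform space `X` generated by the sets
`i(V)`, `V` an entourage of `X`. -/
def freeAbFilter (X : Type*) [UniformSpace X] : Filter (FreeAbelianGroup X) :=
  Filter.generate {S | ∃ V ∈ uniformity X, S = iSetAb V}

open Filter Set Pointwise Topology Uniformity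

section Aux

lemma iSetAb_mono {X : Type*} {V W : Set (X × X)} (h : V ⊆ W) : iSetAb V ⊆ iSetAb W := by
  rintro w ⟨p, hp, rfl⟩; exact ⟨p, h hp, rfl⟩

lemma mem_freeAbFilter {X : Type*} [UniformSpace X] {S : Set (FreeAbelianGroup X)} :
    S ∈ freeAbFilter X ↔ ∃ V ∈ uniformity X, iSetAb V ⊆ S := by
  constructor
  · intro h
    rw [freeAbFilter, Filter.mem_generate_iff] at h
    obtain ⟨T, hT, hfin, hsub⟩ := h
    have key : ∀ T' : Set (Set (FreeAbelianGroup X)), T'.Finite →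
        T' ⊆ {S | ∃ V ∈ uniformity X, S = iSetAb V} →
        ∃ V ∈ uniformity X, iSetAb V ⊆ ⋂₀ T' := by
      intro T' hfin'
      refine Set.Finite.induction_on T' hfin' ?_ ?_
      · intro _; exact ⟨univ, univ_mem, by simp⟩
      · rintro A T'' hA hfin'' ih hins
        obtain ⟨V, hV, hVT⟩ := ih fun x hx => hins (Or.inr hx)
        obtain ⟨W, hW, rfl⟩ := hins (mem_insert A T'')
        refine ⟨V ∩ W, Filter.inter_mem hV hW, ?_⟩
        rw [sInter_insert]
        exact subset_inter (iSetAb_mono inter_subset_right) ((iSetAb_mono inter_subset_left).trans hVT)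
    obtain ⟨V, hV, h2⟩ := key T hfin hT
    exact ⟨V, hV, h2.trans hsub⟩
  · rintro ⟨V, hV, hsub⟩
    exact Filter.mem_of_superset (Filter.mem_generate_of_mem ⟨V, hV, rfl⟩) hsub

section Sums
variable {A : Type*} [AddCommGroup A]

lemma zero_mem_finsetSum {s : Finset ℕ} {f : ℕ → Set A} (h : ∀ n ∈ s, (0:A) ∈ f n) :
    (0:A) ∈ ∑ n ∈ s, f n := by
  classical
  induction s using Finset.induction_on with
  | empty => simp [Set.mem_zero]
  | insert _ _ ha ih =>
    rename_i a s'
    rw [Finset.sum_insert ha]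
    exact ⟨0, h a (Finset.mem_insert_self a s'), 0, ih fun n hn => h n (Finset.mem_insert_of_mem hn), add_zero 0⟩

lemma finsetSum_subset {s : Finset ℕ} {f g : ℕ → Set A} (h : ∀ n ∈ s, f n ⊆ g n) :
    ∑ n ∈ s, f n ⊆ ∑ n ∈ s, g n := by
  classical
  induction s using Finset.induction_on with
  | empty => simp
  | insert _ _ ha ih =>
    rename_i a s'
    rw [Finset.sum_insert ha, Finset.sum_insert ha]
    exact Set.add_subset_add (h a (Finset.mem_insert_self a s'))
      (ih fun n hn => h n (Finset.mem_insert_of_mem hn))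

lemma finsetSum_subset_of_subset {s t : Finset ℕ} (hst : s ⊆ t) {f : ℕ → Set A}
    (h : ∀ n ∈ t, (0:A) ∈ f n) : ∑ n ∈ s, f n ⊆ ∑ n ∈ t, f n := by
  classical
  have : t = s ∪ (t \ s) := by rw [Finset.union_sdiff_of_subset hst]
  rw [this, Finset.sum_union (Finset.disjoint_sdiff)]
  intro x hx
  exact ⟨x, hx, 0, zero_mem_finsetSum (fun n hn => h n (Finset.mem_sdiff.mp hn).1 ), add_zero x⟩

lemma neg_mem_finsetSum {s : Finset ℕ} {f : ℕ → Set A} (h : ∀ n ∈ s, ∀ x ∈ f n, -x ∈ f n) :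
    ∀ w ∈ ∑ n ∈ s, f n, -w ∈ ∑ n ∈ s, f n := by
  classical
  induction s using Finset.induction_on with
  | empty => intro w hw; simp only [Finset.sum_empty, Set.mem_zero] at hw ⊢; simp [hw]
  | insert _ _ ha ih =>
    rename_i a s'
    intro w hw
    rw [Finset.sum_insert ha] at hw ⊢
    obtain ⟨x, hx, y, hy, rfl⟩ := hw
    exact ⟨-x, h a (Finset.mem_insert_self a s') x hx, -y,
      ih (fun n hn => h n (Finset.mem_insert_of_mem hn)) y hy, (neg_add x y).symm⟩

lemma chain_sum_subset {T : ℕ → Set A} (h0 : ∀ n, (0:A) ∈ T n)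
    (hc : ∀ n, T (n+1) + T (n+1) ⊆ T n) :
    ∀ (k m : ℕ), ∑ i ∈ Finset.range k, T (m+i+1) ⊆ T m := by
  intro k
  induction k with
  | zero => intro m x hx; rw [Finset.sum_range_zero] at hx; rw [Set.mem_zero] at hx; subst hx; exact h0 m
  | succ k ih =>
    intro m
    rw [Finset.sum_range_succ']
    intro x hx
    obtain ⟨a, ha, b, hb, rfl⟩ := hx
    have ha' : a ∈ T (m+1) := by
      have := ih (m+1)
      simp only [show ∀ i, m+1+i+1 = m+(i+1)+1 by omega] at this
      exact this ha
    have hb' : b ∈ T (m+1) := by simpa using hb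
    exact hc m ⟨a, ha', b, hb', rfl⟩
end Sums

section WU
variable {X : Type*}

def WSet (V : Set (X × X)) : Set (FreeAbelianGroup X) := iSetAb V ∪ (-(iSetAb V)) ∪ {0}

lemma zero_mem_WSet (V : Set (X × X)) : (0 : FreeAbelianGroup X) ∈ WSet V := by
  simp [WSet]

lemma WSet_mono {V W : Set (X × X)} (h : V ⊆ W) : WSet V ⊆ WSet W := by
  rintro w (( hw | hw) | hw)
  · exact Or.inl (Or.inl (iSetAb_mono h hw))
  · exact Or.inl (Or.inr (iSetAb_mono h hw))
  · exact Or.inr hw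

lemma neg_mem_WSet {V : Set (X × X)} {w : FreeAbelianGroup X} (hw : w ∈ WSet V) :
    -w ∈ WSet V := by
  rcases hw with ((h | h) | h)
  · exact Or.inl (Or.inr (by simpa [Set.mem_neg] using h))
  · exact Or.inl (Or.inl (by simpa [Set.mem_neg] using h))
  · simp_all [WSet]

lemma iSetAb_subset_WSet (V : Set (X × X)) : iSetAb V ⊆ WSet V :=
  fun w hw => Or.inl (Or.inl hw)

lemma WSet_subset {V : Set (X × X)} {U : Set (FreeAbelianGroup X)} (hi : iSetAb V ⊆ U)
    (hneg : ∀ x ∈ U, -x ∈ U) (h0 : (0 : FreeAbelianGroup X) ∈ U) : WSet V ⊆ U := by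
  rintro w ((h | h) | h)
  · exact hi h
  · rw [Set.mem_neg] at h; simpa using hneg _ (hi h)
  · simp_all

def USet (σ : ℕ → Set (X × X)) : Set (FreeAbelianGroup X) :=
  ⋃ s : Finset ℕ, ∑ n ∈ s, WSet (σ n)

lemma zero_mem_USet (σ : ℕ → Set (X × X)) : (0 : FreeAbelianGroup X) ∈ USet σ :=
  Set.mem_iUnion.mpr ⟨∅, by simp [Set.mem_zero]⟩

lemma USet_mono {σ σ' : ℕ → Set (X × X)} (h : ∀ n, σ n ⊆ σ' n) : USet σ ⊆ USet σ' := by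
  intro w hw
  obtain ⟨s, hs⟩ := Set.mem_iUnion.mp hw
  exact Set.mem_iUnion.mpr ⟨s, finsetSum_subset (fun n _ => WSet_mono (h n)) hs⟩

lemma iSetAb_subset_USet (σ : ℕ → Set (X × X)) : iSetAb (σ 0) ⊆ USet σ := by
  intro w hw
  refine Set.mem_iUnion.mpr ⟨{0}, ?_⟩
  simpa using iSetAb_subset_WSet _ hw

lemma neg_mem_USet {σ : ℕ → Set (X × X)} {w : FreeAbelianGroup X} (hw : w ∈ USet σ) :
    -w ∈ USet σ := by
  obtain ⟨s, hs⟩ := Set.mem_iUnion.mp hw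
  exact Set.mem_iUnion.mpr ⟨s, neg_mem_finsetSum (fun n _ x hx => neg_mem_WSet hx) w hs⟩

lemma USet_add_subset (σ : ℕ → Set (X × X)) :
    USet (fun n => σ (2*n) ∩ σ (2*n+1)) + USet (fun n => σ (2*n) ∩ σ (2*n+1)) ⊆ USet σ := by
  classical
  rintro w ⟨a, ha, b, hb, rfl⟩
  obtain ⟨s, hs⟩ := Set.mem_iUnion.mp ha
  obtain ⟨s', hs'⟩ := Set.mem_iUnion.mp hb
  set u := s ∪ s' with hu
  have h0 : ∀ n ∈ u, (0 : FreeAbelianGroup X) ∈ WSet ((fun n => σ (2*n) ∩ σ (2*n+1)) n) :=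
    fun n _ => zero_mem_WSet _
  have ha' := finsetSum_subset_of_subset (Finset.subset_union_left (s₂ := s')) h0 hs
  have hb' := finsetSum_subset_of_subset (Finset.subset_union_right (s₁ := s)) h0 hs'
  have hab : a + b ∈ ∑ n ∈ u, (WSet (σ (2*n) ∩ σ (2*n+1)) + WSet (σ (2*n) ∩ σ (2*n+1))) := by
    rw [Finset.sum_add_distrib]
    exact ⟨a, ha', b, hb', rfl⟩
  have hsub : ∑ n ∈ u, (WSet (σ (2*n) ∩ σ (2*n+1)) + WSet (σ (2*n) ∩ σ (2*n+1)))
      ⊆ ∑ n ∈ u, (WSet (σ (2*n)) + WSet (σ (2*n+1))) := by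
    refine finsetSum_subset fun n _ => Set.add_subset_add ?_ ?_
    · exact WSet_mono Set.inter_subset_left
    · exact WSet_mono Set.inter_subset_right
  have := hsub hab
  rw [Finset.sum_add_distrib] at this
  have he : ∑ n ∈ u, WSet (σ (2*n)) = ∑ m ∈ u.image (fun n => 2*n), WSet (σ m) := by
    rw [Finset.sum_image (fun x _ y _ h => by omega)]
  have ho : ∑ n ∈ u, WSet (σ (2*n+1)) = ∑ m ∈ u.image (fun n => 2*n+1), WSet (σ m) := by
    rw [Finset.sum_image (fun x _ y _ h => by omega)]
  rw [he, ho] at this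
  rw [← Finset.sum_union (by
    rw [Finset.disjoint_left]
    intro m hm hm'
    obtain ⟨x, _, rfl⟩ := Finset.mem_image.mp hm
    obtain ⟨y, _, hxy⟩ := Finset.mem_image.mp hm'
    omega)] at this
  exact Set.mem_iUnion.mpr ⟨_, this⟩
end WU

section Basis
variable (X : Type*) [UniformSpace X]

def uBasis : AddGroupFilterBasis (FreeAbelianGroup X) :=
  addGroupFilterBasisOfComm
    {U | ∃ σ : ℕ → Set (X × X), (∀ n, σ n ∈ uniformity X) ∧ U = USet σ}
    ⟨USet (fun _ => Set.univ), fun _ => Set.univ, fun _ => Filter.univ_mem, rfl⟩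
    (by
      rintro _ _ ⟨σ, hσ, rfl⟩ ⟨σ', hσ', rfl⟩
      refine ⟨USet (fun n => σ n ∩ σ' n), ⟨_, fun n => Filter.inter_mem (hσ n) (hσ' n), rfl⟩, ?_⟩
      exact Set.subset_inter (USet_mono fun n => Set.inter_subset_left)
        (USet_mono fun n => Set.inter_subset_right))
    (by rintro _ ⟨σ, hσ, rfl⟩; exact zero_mem_USet σ)
    (by
      rintro _ ⟨σ, hσ, rfl⟩
      exact ⟨USet (fun n => σ (2*n) ∩ σ (2*n+1)),
        ⟨_, fun n => Filter.inter_mem (hσ _) (hσ _), rfl⟩, USet_add_subset σ⟩)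
    (by
      rintro _ ⟨σ, hσ, rfl⟩
      exact ⟨USet σ, ⟨σ, hσ, rfl⟩, fun w hw => neg_mem_USet hw⟩)

lemma freeAbFilter_le_uBasis_nhds :
    freeAbFilter X ≤ @nhds _ (uBasis X).topology 0 := by
  intro S hS
  rw [((uBasis X).nhds_zero_hasBasis).mem_iff] at hS
  obtain ⟨U, ⟨σ, hσ, rfl⟩, hsub⟩ := hS
  exact mem_freeAbFilter.mpr ⟨σ 0, hσ 0, (iSetAb_subset_USet σ).trans hsub⟩

variable {X}

lemma USet_mem_nhds {t : TopologicalSpace (FreeAbelianGroup X)}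
    (hfinest : ∀ t' : TopologicalSpace (FreeAbelianGroup X),
      @IsTopologicalAddGroup (FreeAbelianGroup X) t' _ →
      freeAbFilter X ≤ @nhds (FreeAbelianGroup X) t' 0 → t ≤ t')
    {σ : ℕ → Set (X × X)} (hσ : ∀ n, σ n ∈ uniformity X) :
    USet σ ∈ @nhds _ t 0 := by
  have hle : t ≤ (uBasis X).topology :=
    hfinest _ (uBasis X).isTopologicalAddGroup (freeAbFilter_le_uBasis_nhds X)
  exact nhds_mono hle ((uBasis X).mem_nhds_zero ⟨σ, hσ, rfl⟩)
end Basis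

section Chain
variable {X : Type*} [UniformSpace X]

lemma exists_USet_subset {t : TopologicalSpace (FreeAbelianGroup X)}
    (ht : @IsTopologicalAddGroup (FreeAbelianGroup X) t _)
    (hconv : freeAbFilter X ≤ @nhds (FreeAbelianGroup X) t 0)
    {U : Set (FreeAbelianGroup X)} (hU : U ∈ @nhds _ t 0) :
    ∃ σ : ℕ → Set (X × X), (∀ n, σ n ∈ uniformity X) ∧ USet σ ⊆ U := by
  letI := t
  haveI := ht
  -- a "halving" function
  have hstep : ∀ S : Set (FreeAbelianGroup X), ∃ S' : Set (FreeAbelianGroup X),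
      S ∈ 𝓝 (0 : FreeAbelianGroup X) →
      S' ∈ 𝓝 (0 : FreeAbelianGroup X) ∧ S' + S' ⊆ S ∧ ∀ x ∈ S', -x ∈ S' := by
    intro S
    by_cases hS : S ∈ 𝓝 (0 : FreeAbelianGroup X)
    · obtain ⟨V, hV, hVS⟩ := exists_nhds_zero_half hS
      have hnegV : (fun x : FreeAbelianGroup X => -x) ⁻¹' V ∈ 𝓝 (0 : FreeAbelianGroup X) := by
        refine continuous_neg.continuousAt.preimage_mem_nhds ?_
        simpa using hV
      refine ⟨V ∩ (fun x => -x) ⁻¹' V, fun _ => ⟨Filter.inter_mem hV hnegV, ?_, ?_⟩⟩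
      · rintro w ⟨a, ⟨ha, _⟩, b, ⟨hb, _⟩, rfl⟩
        exact hVS a ha b hb
      · rintro x ⟨hx1, hx2⟩
        exact ⟨hx2, by simpa using hx1⟩
    · exact ⟨∅, fun h => absurd h hS⟩
  choose F hF using hstep
  set T : ℕ → Set (FreeAbelianGroup X) := fun n => (fun S => F S)^[n+1] U with hT
  have hTsucc : ∀ n, T (n + 1) = F (T n) := by
    intro n
    simp only [hT, Function.iterate_succ_apply']
  have hT0 : T 0 = F U := by simp [hT]
  have hTnhds : ∀ n, T n ∈ 𝓝 (0 : FreeAbelianGroup X) := by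
    intro n
    induction n with
    | zero => rw [hT0]; exact (hF U hU).1
    | succ n ih => rw [hTsucc]; exact (hF _ ih).1
  have hTchain : ∀ n, T (n+1) + T (n+1) ⊆ T n := fun n => by
    rw [hTsucc]; exact (hF _ (hTnhds n)).2.1
  have hTneg : ∀ n, ∀ x ∈ T n, -x ∈ T n := by
    intro n
    cases n with
    | zero => rw [hT0]; exact (hF U hU).2.2
    | succ n => rw [hTsucc]; exact (hF _ (hTnhds n)).2.2
  have hT0U : T 0 + T 0 ⊆ U := by rw [hT0]; exact (hF U hU).2.1
  -- entourages
  have hE : ∀ n, ∃ E ∈ uniformity X, iSetAb E ⊆ T n := fun n =>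
    mem_freeAbFilter.mp (hconv (hTnhds n))
  choose E hE1 hE2 using hE
  refine ⟨E, hE1, ?_⟩
  -- the padded chain
  set T' : ℕ → Set (FreeAbelianGroup X) := fun n => Nat.casesOn n U T with hT'
  have hT'chain : ∀ n, T' (n+1) + T' (n+1) ⊆ T' n := by
    intro n
    cases n with
    | zero =>
      intro w hw
      exact hT0U hw
    | succ n => exact hTchain n
  have hT'0 : ∀ n, (0 : FreeAbelianGroup X) ∈ T' n := by
    intro n
    cases n with
    | zero => exact mem_of_mem_nhds hU
    | succ n => exact mem_of_mem_nhds (hTnhds n)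
  intro w hw
  obtain ⟨s, hs⟩ := Set.mem_iUnion.mp hw
  have hWsub : ∀ n ∈ s, WSet (E n) ⊆ T' (n+1) := by
    intro n _
    exact WSet_subset (hE2 n) (hTneg n) (mem_of_mem_nhds (hTnhds n))
  have hs2 : w ∈ ∑ n ∈ s, T' (n+1) := finsetSum_subset hWsub hs
  -- reindex and pad
  classical
  set k := s.sup id + 1 with hk
  have hsk : s ⊆ Finset.range k := by
    intro n hn
    simp only [Finset.mem_range, hk]
    exact Nat.lt_succ_of_le (Finset.le_sup (f := id) hn)
  have hpad : ∑ n ∈ s, T' (n+1) ⊆ ∑ n ∈ Finset.range k, T' (n+1) :=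
    finsetSum_subset_of_subset hsk (fun n _ => hT'0 (n+1))
  have hchain := chain_sum_subset hT'0 hT'chain k 0
  simp only [Nat.zero_add] at hchain
  exact hchain (hpad hs2)
end Chain

section PM
variable {X : Type*} [UniformSpace X]
open SetRel

lemma exists_pseudometric {V : Set (X × X)} (hV : V ∈ uniformity X) :
    ∃ d : X → X → ℝ, (∀ x, d x x = 0) ∧ (∀ x y z, |d x y - d z y| ≤ d x z) ∧
      (∀ ε : ℝ, 0 < ε → {p : X × X | d p.1 p.2 < ε} ∈ uniformity X) ∧
      ∃ ε : ℝ, 0 < ε ∧ {p : X × X | d p.1 p.2 < ε} ⊆ V := by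
  -- build a chain of symmetric entourages
  have hstep : ∀ S : Set (X × X), ∃ S' : Set (X × X), S ∈ uniformity X →
      S' ∈ uniformity X ∧ SetRel.IsSymm S' ∧ S' ○ S' ⊆ S := by
    intro S
    by_cases hS : S ∈ uniformity X
    · obtain ⟨S', h1, h2, h3⟩ := comp_symm_mem_uniformity_sets hS
      exact ⟨S', fun _ => ⟨h1, h2, h3⟩⟩
    · exact ⟨∅, fun h => absurd h hS⟩
  choose F hF using hstep
  obtain ⟨V0, hV01, hV02, hV03⟩ := comp_symm_mem_uniformity_sets hV
  have hV0refl : ∀ x : X, (x, x) ∈ V0 := fun x => refl_mem_uniformity hV01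
  set Vc : ℕ → Set (X × X) := fun n => (fun S => F S)^[n] V0 with hVc
  have hVc0 : Vc 0 = V0 := rfl
  have hVcsucc : ∀ n, Vc (n+1) = F (Vc n) := fun n => Function.iterate_succ_apply' _ _ _
  have hVcmem : ∀ n, Vc n ∈ uniformity X := by
    intro n
    induction n with
    | zero => exact hV01
    | succ n ih => rw [hVcsucc]; exact (hF _ ih).1
  have hVcsymm : ∀ n, SetRel.IsSymm (Vc n) := by
    intro n
    cases n with
    | zero => exact hV02
    | succ n => rw [hVcsucc]; exact (hF _ (hVcmem n)).2.1
  have hVccomp : ∀ n, Vc (n+1) ○ Vc (n+1) ⊆ Vc n := fun n => by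
    rw [hVcsucc]; exact (hF _ (hVcmem n)).2.2
  have hsub : ∀ n, Vc (n+1) ⊆ Vc n := by
    intro n p hp
    exact hVccomp n ⟨p.2, hp, refl_mem_uniformity (hVcmem (n+1))⟩
  have hanti : Antitone Vc := antitone_nat_of_succ_le hsub
  -- the coarser uniformity
  set Fc : Filter (X × X) := ⨅ n, Filter.principal (Vc n) with hFc
  have hdir : Directed (· ≥ ·) fun n => Vc n := fun m n =>
    ⟨max m n, hanti (le_max_left m n), hanti (le_max_right m n)⟩
  have hFcbasis : Fc.HasBasis (fun _ => True) Vc := Filter.hasBasis_iInf_principal hdir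
  have hFcmem : ∀ {S : Set (X × X)}, S ∈ Fc ↔ ∃ n, Vc n ⊆ S := by
    intro S
    rw [hFcbasis.mem_iff]
    simp
  set core : UniformSpace.Core X := UniformSpace.Core.mk' Fc
    (fun r hr x => by
      obtain ⟨n, hn⟩ := hFcmem.mp hr
      exact hn (refl_mem_uniformity (hVcmem n)))
    (fun r hr => by
      obtain ⟨n, hn⟩ := hFcmem.mp hr
      refine hFcmem.mpr ⟨n, ?_⟩
      intro p hp
      haveI := hVcsymm n; exact hn (SetRel.symm (R := Vc n) hp))
    (fun r hr => by
      obtain ⟨n, hn⟩ := hFcmem.mp hr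
      exact ⟨Vc (n+1), hFcmem.mpr ⟨n+1, le_refl _⟩, (hVccomp n).trans hn⟩) with hcore
  set u' : UniformSpace X := UniformSpace.ofCore core with hu'
  have hu'eq : @uniformity X u' = Fc := rfl
  have hcg : @Filter.IsCountablyGenerated _ (@uniformity X u') := by
    rw [hu'eq, hFc]
    exact Filter.isCountablyGenerated_seq Vc
  obtain ⟨I, hI⟩ := @UniformSpace.metrizable_uniformity X u' hcg
  have hIu : @uniformity X I.toUniformSpace = Fc := by rw [hI]; exact hu'eq
  set d : X → X → ℝ := fun x y => @dist X I.toDist x y with hd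
  have hbasis := @Metric.uniformity_basis_dist X I
  rw [hIu] at hbasis
  refine ⟨d, fun x => @dist_self X I x, fun x y z => @abs_dist_sub_le X I x z y, ?_, ?_⟩
  · intro ε hε
    have : {p : X × X | d p.1 p.2 < ε} ∈ Fc := hbasis.mem_of_mem hε
    obtain ⟨n, hn⟩ := hFcmem.mp this
    exact Filter.mem_of_superset (hVcmem n) hn
  · have hV0Fc : V0 ∈ Fc := hFcmem.mpr ⟨0, le_refl _⟩
    obtain ⟨ε, hε, hsub'⟩ := hbasis.mem_iff.mp hV0Fc
    refine ⟨ε, hε, hsub'.trans ?_⟩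
    intro p hp
    exact hV03 ⟨p.2, hp, hV0refl p.2⟩
end PM

section Lip
variable {X : Type*}

def Uball (d : X → X → ℝ) (ε : ℝ) : Set (FreeAbelianGroup X) :=
  {w | ∀ f : X → ℝ, (∀ x y, |f x - f y| ≤ d x y) → |FreeAbelianGroup.lift f w| ≤ ε}

def lBasis (d : X → X → ℝ) : AddGroupFilterBasis (FreeAbelianGroup X) :=
  addGroupFilterBasisOfComm
    {U | ∃ ε : ℝ, 0 < ε ∧ U = Uball d ε}
    ⟨Uball d 1, 1, one_pos, rfl⟩
    (by
      rintro _ _ ⟨ε, hε, rfl⟩ ⟨ε', hε', rfl⟩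
      refine ⟨Uball d (min ε ε'), ⟨min ε ε', lt_min hε hε', rfl⟩, ?_⟩
      intro w hw
      exact ⟨fun f hf => (hw f hf).trans (min_le_left _ _),
        fun f hf => (hw f hf).trans (min_le_right _ _)⟩)
    (by
      rintro _ ⟨ε, hε, rfl⟩
      intro f hf
      simp [le_of_lt hε])
    (by
      rintro _ ⟨ε, hε, rfl⟩
      refine ⟨Uball d (ε/2), ⟨ε/2, by linarith, rfl⟩, ?_⟩
      rintro w ⟨a, ha, b, hb, rfl⟩
      intro f hf
      rw [map_add]
      calc |FreeAbelianGroup.lift f a + FreeAbelianGroup.lift f b|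
          ≤ |FreeAbelianGroup.lift f a| + |FreeAbelianGroup.lift f b| := abs_add_le _ _
        _ ≤ ε/2 + ε/2 := add_le_add (ha f hf) (hb f hf)
        _ = ε := by ring)
    (by
      rintro _ ⟨ε, hε, rfl⟩
      refine ⟨Uball d ε, ⟨ε, hε, rfl⟩, ?_⟩
      intro w hw f hf
      simp only [Set.mem_preimage]
      rw [show FreeAbelianGroup.lift f (-w) = -(FreeAbelianGroup.lift f w) from map_neg _ w,
        abs_neg]
      exact hw f hf)

lemma freeAbFilter_le_lBasis_nhds [UniformSpace X] {d : X → X → ℝ}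
    (hd : ∀ ε : ℝ, 0 < ε → {p : X × X | d p.1 p.2 < ε} ∈ uniformity X) :
    freeAbFilter X ≤ @nhds _ (lBasis d).topology 0 := by
  intro S hS
  rw [((lBasis d).nhds_zero_hasBasis).mem_iff] at hS
  obtain ⟨U, ⟨ε, hε, rfl⟩, hsub⟩ := hS
  refine mem_freeAbFilter.mpr ⟨{p : X × X | d p.1 p.2 < ε}, hd ε hε, ?_⟩
  refine Set.Subset.trans ?_ hsub
  rintro w ⟨p, hp, rfl⟩
  intro f hf
  rw [map_sub]
  simp only [FreeAbelianGroup.lift_apply_of]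
  exact (hf p.1 p.2).trans (le_of_lt hp)

lemma Uball_recover {d : X → X → ℝ} (hself : ∀ x, d x x = 0)
    (hlip : ∀ x y z, |d x y - d z y| ≤ d x z) {ε : ℝ} {x y : X}
    (h : FreeAbelianGroup.of x - FreeAbelianGroup.of y ∈ Uball d ε) : d x y ≤ ε := by
  have hf : ∀ a b, |(fun z => d z y) a - (fun z => d z y) b| ≤ d a b := fun a b => hlip a y b
  have := h (fun z => d z y) hf
  rw [map_sub] at this
  simp only [FreeAbelianGroup.lift_apply_of, hself y, sub_zero] at this
  exact (le_abs_self _).trans this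
end Lip


end Aux

/-- Corollary 3.19: the free Abelian topological group on a uniform space `X` (the free
Abelian group with the finest group topology making the filter generated by the sets
`i(V)`, `V ∈ 𝒰`, converge to `0`) admits a local `ω^ω`-base if and only if the
uniformity of `X` admits an `ω^ω`-base. -/
theorem stmt7 {X : Type*} [UniformSpace X]
    (t : TopologicalSpace (FreeAbelianGroup X))
    (ht : @IsTopologicalAddGroup (FreeAbelianGroup X) t _)
    (hconv : freeAbFilter X ≤ @nhds (FreeAbelianGroup X) t 0)
    (hfinest : ∀ t' : TopologicalSpace (FreeAbelianGroup X),
      @IsTopologicalAddGroup (FreeAbelianGroup X) t' _ →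
      freeAbFilter X ≤ @nhds (FreeAbelianGroup X) t' 0 → t ≤ t') :
    HasOmegaOmegaBase (@nhds (FreeAbelianGroup X) t 0) ↔
      HasOmegaOmegaBase (uniformity X) := by
  constructor
  · rintro ⟨Wb, hmem, hmono, hcof⟩
    refine ⟨fun f => {p : X × X | FreeAbelianGroup.of p.1 - FreeAbelianGroup.of p.2 ∈ Wb f},
      ?_, ?_, ?_⟩
    · intro f
      obtain ⟨E, hE, hEsub⟩ := mem_freeAbFilter.mp (hconv (hmem f))
      exact Filter.mem_of_superset hE (fun p hp => hEsub ⟨p, hp, rfl⟩)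
    · intro f g hfg p hp
      exact hmono f g hfg hp
    · intro V hV
      obtain ⟨d, hself, hlip, hdmem, ε0, hε0, hball⟩ := exists_pseudometric hV
      have hU : Uball d (ε0/2) ∈ @nhds _ t 0 := by
        have hle : t ≤ (lBasis d).topology :=
          hfinest _ (lBasis d).isTopologicalAddGroup (freeAbFilter_le_lBasis_nhds hdmem)
        exact nhds_mono hle ((lBasis d).mem_nhds_zero ⟨ε0/2, by linarith, rfl⟩)
      obtain ⟨f, hf⟩ := hcof _ hU
      refine ⟨f, ?_⟩
      intro p hp
      have : d p.1 p.2 ≤ ε0/2 := Uball_recover hself hlip (hf hp)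
      exact hball (by simpa using lt_of_le_of_lt this (by linarith))
  · rintro ⟨Vb, hmem, hmono, hcof⟩
    refine ⟨fun g => USet (fun n => Vb (fun m => g (Nat.pair n m))), ?_, ?_, ?_⟩
    · intro g
      exact USet_mem_nhds hfinest (fun n => hmem _)
    · intro g g' hgg'
      refine USet_mono fun n => hmono _ _ ?_
      intro m
      exact hgg' (Nat.pair n m)
    · intro U hU
      obtain ⟨σ, hσ, hsub⟩ := exists_USet_subset ht hconv hU
      have hfn : ∀ n, ∃ f : ℕ → ℕ, Vb f ⊆ σ n := fun n => hcof _ (hσ n)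
      choose f hf using hfn
      refine ⟨fun k => f (Nat.unpair k).1 (Nat.unpair k).2, ?_⟩
      have hEq : ∀ n : ℕ, (fun m => f (Nat.unpair (Nat.pair n m)).1
          (Nat.unpair (Nat.pair n m)).2) = f n := by
        intro n
        funext m
        simp [Nat.unpair_pair]
      refine Set.Subset.trans ?_ hsub
      refine USet_mono fun n => ?_
      rw [hEq n]
      exact hf n
end

section
/- Let X be a metrizable topological space such that the set X′ of all non-isolated points of X is σ-compact (a countable union of compact subsets of X). Then the filter of neighborhoods of the diagonal Δ_X = {(x,x) : x ∈ X} in X × X admits an ω^ω-base. (Since a metrizable space is paracompact, this filter coincides with the finest compatible uniformity of X, so the finest uniformity of X has an ω^ω-base of entourages.) -/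
open Metric Set

/-- Lebesgue-style lemma: if `U` is an open set containing the diagonal of a compact
set `K`, then for a uniform `ε > 0` the sets `ball x ε ×ˢ ball x ε` are in `U`. -/
lemma aux_lebesgue {X : Type*} [MetricSpace X] {K : Set X} (hK : IsCompact K)
    {U : Set (X × X)} (hU : IsOpen U) (hd : ∀ x ∈ K, (x, x) ∈ U) :
    ∃ ε > 0, ∀ x ∈ K, Metric.ball x ε ×ˢ Metric.ball x ε ⊆ U := by
  have hr : ∀ y ∈ K, ∃ r > 0, Metric.ball (y, y) r ⊆ U := fun y hy =>
    Metric.isOpen_iff.1 hU _ (hd y hy)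
  choose! r hr0 hrU using hr
  have hcov : K ⊆ ⋃ y : K, Metric.ball (y : X) (r y) := fun y hy =>
    Set.mem_iUnion.2 ⟨⟨y, hy⟩, Metric.mem_ball_self (hr0 y hy)⟩
  obtain ⟨δ, hδ0, hδ⟩ :=
    lebesgue_number_lemma_of_metric hK (fun y : K => Metric.isOpen_ball) hcov
  refine ⟨δ, hδ0, fun x hx => ?_⟩
  obtain ⟨y, hy⟩ := hδ x hx
  calc Metric.ball x δ ×ˢ Metric.ball x δ
      ⊆ Metric.ball (y : X) (r y) ×ˢ Metric.ball (y : X) (r y) := Set.prod_mono hy hy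
    _ = Metric.ball ((y : X), (y : X)) (r y) := ball_prod_same _ _ _
    _ ⊆ U := hrU y y.2

/-- Proposition 3.14: if `X` is a metrizable space whose set of non-isolated points is
σ-compact, then the filter of neighbourhoods of the diagonal in `X × X` (which, `X`
being paracompact, is the finest compatible uniformity of `X`) admits an `ω^ω`-base. -/
theorem stmt8 {X : Type*} [TopologicalSpace X] [TopologicalSpace.MetrizableSpace X]
    (K : ℕ → Set X) (hK : ∀ n, IsCompact (K n))
    (hK' : {x : X | ¬ IsOpen ({x} : Set X)} = ⋃ n, K n) :
    HasOmegaOmegaBase (nhdsSet (Set.diagonal X)) := by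
  letI : MetricSpace X := TopologicalSpace.metrizableSpaceMetric X
  classical
  set V : (ℕ → ℕ) → Set (X × X) := fun f =>
    (⋃ x ∈ {x : X | IsOpen ({x} : Set X)}, ({x} : Set X) ×ˢ ({x} : Set X)) ∪
      ⋃ n, ⋃ x ∈ K n,
        Metric.ball x (1 / (f n + 1)) ×ˢ Metric.ball x (1 / (f n + 1)) with hV
  have hopen : ∀ f, IsOpen (V f) := by
    intro f
    refine IsOpen.union (isOpen_biUnion fun x hx => hx.prod hx) ?_
    exact isOpen_iUnion fun n => isOpen_biUnion fun x _ => isOpen_ball.prod isOpen_ball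
  have hdiag : ∀ f, Set.diagonal X ⊆ V f := by
    rintro f ⟨x, y⟩ hxy
    have hx : x = y := hxy
    subst hx
    by_cases h : IsOpen ({x} : Set X)
    · exact Or.inl (Set.mem_biUnion h (by simp))
    · have : x ∈ ⋃ n, K n := hK' ▸ h
      obtain ⟨n, hn⟩ := Set.mem_iUnion.1 this
      refine Or.inr (Set.mem_iUnion.2 ⟨n, Set.mem_biUnion hn ?_⟩)
      have hpos : (0 : ℝ) < 1 / (f n + 1) := by positivity
      exact Set.mem_prod.2 ⟨Metric.mem_ball_self hpos, Metric.mem_ball_self hpos⟩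
  refine ⟨V, fun f => ((hopen f).mem_nhdsSet).2 (hdiag f), ?_, ?_⟩
  · intro f g hfg
    refine Set.union_subset_union subset_rfl ?_
    refine Set.iUnion_mono fun n => Set.iUnion₂_mono fun x _ => ?_
    have hle : (1 : ℝ) / (g n + 1) ≤ 1 / (f n + 1) := by
      apply one_div_le_one_div_of_le (by positivity)
      have := hfg n
      exact_mod_cast Nat.add_le_add_right this 1
    exact Set.prod_mono (Metric.ball_subset_ball hle) (Metric.ball_subset_ball hle)
  · intro A hA
    obtain ⟨U, hUo, hUd, hUA⟩ := mem_nhdsSet_iff_exists.1 hA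
    have hε : ∀ n, ∃ ε > 0, ∀ x ∈ K n, Metric.ball x ε ×ˢ Metric.ball x ε ⊆ U :=
      fun n => aux_lebesgue (hK n) hUo (fun x _ => hUd (Set.mem_diagonal x))
    choose ε hε0 hεU using hε
    have hf : ∀ n, ∃ m : ℕ, (1 : ℝ) / (m + 1) < ε n := fun n =>
      exists_nat_one_div_lt (hε0 n)
    choose f hf using hf
    refine ⟨f, fun p hp => ?_⟩
    rcases hp with hp | hp
    · obtain ⟨x, -, hx⟩ := Set.mem_iUnion₂.1 hp
      obtain ⟨h1, h2⟩ := Set.mem_prod.1 hx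
      exact hUA (hUd (show p ∈ Set.diagonal X by
        simp only [Set.mem_singleton_iff] at h1 h2
        simp [Set.mem_diagonal_iff, h1, h2]))
    · obtain ⟨n, hp⟩ := Set.mem_iUnion.1 hp
      obtain ⟨x, hxK, hx⟩ := Set.mem_iUnion₂.1 hp
      have hsub : Metric.ball x (1 / (f n + 1)) ⊆ Metric.ball x (ε n) :=
        Metric.ball_subset_ball (le_of_lt (hf n))
      exact hUA (hεU n x hxK (Set.prod_mono hsub hsub hx))
end

section
/- Let τ be an infinite cardinal (identified with the set of ordinals below τ, with the ordinal order) and let D be a partially ordered set. Suppose g is a Tukey (unbounded) map from τ to D, i.e., g maps every subset of τ that is unbounded above in τ to a subset of D that is unbounded above in D. Then there exists a monotone map f : D → τ whose image is cofinal in τ (for every ordinal ξ < τ there is x ∈ D with ξ ≤ f(x)). -/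
universe u v

/-- Lemma 2.6: if an infinite cardinal `τ` (viewed as the linearly ordered set of
ordinals below it) is Tukey-dominated by a partially ordered set `D`, witnessed by an
unbounded (Tukey) map `g : τ → D`, then there is a monotone map `f : D → τ` whose
image is cofinal in `τ`. -/
theorem stmt11 (κ : Cardinal.{u}) (hκ : Cardinal.aleph0 ≤ κ)
    {D : Type v} [PartialOrder D]
    (g : {o : Ordinal.{u} // o < κ.ord} → D)
    (hg : ∀ S : Set {o : Ordinal.{u} // o < κ.ord},
      (¬ ∃ b, ∀ s ∈ S, s ≤ b) → ¬ ∃ b : D, ∀ s ∈ S, g s ≤ b) :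
    ∃ f : D → {o : Ordinal.{u} // o < κ.ord},
      Monotone f ∧ ∀ ξ : {o : Ordinal.{u} // o < κ.ord}, ∃ x : D, ξ ≤ f x := by
  have hlim : Order.IsSuccLimit κ.ord := Cardinal.isSuccLimit_ord hκ
  -- the set of indices mapped below x
  set T : D → Set Ordinal.{u} :=
    fun x => (fun ξ : {o : Ordinal.{u} // o < κ.ord} => ξ.val + 1) '' {ξ | g ξ ≤ x} with hT
  -- each T x is bounded above by something below κ.ord
  have hbdd : ∀ x : D, ∃ b : Ordinal.{u}, b < κ.ord ∧ ∀ a ∈ T x, a ≤ b := by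
    intro x
    have h1 : ¬ ¬ ∃ b, ∀ s ∈ {ξ | g ξ ≤ x}, s ≤ b := by
      intro h
      exact hg _ h ⟨x, fun s hs => hs⟩
    obtain ⟨b, hb⟩ := not_not.mp h1
    refine ⟨b.val + 1, hlim.succ_lt b.2, ?_⟩
    rintro a ⟨ξ, hξ, rfl⟩
    have := hb ξ hξ
    exact add_le_add_left (Subtype.coe_le_coe.mpr this) 1
  have hbddAbove : ∀ x : D, BddAbove (T x) := by
    intro x
    obtain ⟨b, _, hb⟩ := hbdd x
    exact ⟨b, hb⟩
  have hsup_lt : ∀ x : D, sSup (T x) < κ.ord := by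
    intro x
    obtain ⟨b, hb1, hb⟩ := hbdd x
    exact lt_of_le_of_lt (csSup_le' hb) hb1
  refine ⟨fun x => ⟨sSup (T x), hsup_lt x⟩, ?_, ?_⟩
  · intro x y hxy
    have hsub : T x ⊆ T y := by
      rintro a ⟨ξ, hξ, rfl⟩
      exact ⟨ξ, le_trans hξ hxy, rfl⟩
    exact csSup_le_csSup' (hbddAbove y) hsub
  · intro ξ
    refine ⟨g ξ, ?_⟩
    have hmem : ξ.val + 1 ∈ T (g ξ) := ⟨ξ, le_refl _, rfl⟩
    have h2 := le_csSup (hbddAbove (g ξ)) hmem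
    show ξ.val ≤ sSup (T (g ξ))
    exact le_trans (le_of_lt (Order.lt_succ ξ.val)) h2
end

section
/- There exists a map φ from the set Finset(ℝ) of finite subsets of the reals (partially ordered by inclusion; the reals serve as an index set of cardinality continuum) into ℕ → ℕ (with the pointwise partial order) such that φ(s) ≤ φ(t) if and only if s ⊆ t, and φ(s ∪ t) = φ(s) ⊔ φ(t) (pointwise maximum) for all finite sets s, t. In particular, the image of φ is a directed subset of ω^ω order-isomorphic to the directed set [𝔠]^{<ω} of finite subsets of the continuum. -/
open Classical in
/-- code of the length-`n` prefix of `x`. -/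
noncomputable def pre12 (x : ℕ → Bool) (n : ℕ) : ℕ :=
  Encodable.encode (List.ofFn fun i : Fin n => x i)

open Classical in
/-- indicator of the set of prefix codes of `x`. -/
noncomputable def f12 (x : ℕ → Bool) (m : ℕ) : ℕ :=
  if m ∈ Set.range (pre12 x) then 1 else 0

lemma pre12_inj_aux {x y : ℕ → Bool} {n m : ℕ} (h : pre12 x n = pre12 y m) :
    n = m ∧ ∀ i : Fin n, x i = y i := by
  have := Encodable.encode_injective h
  have hlen : n = m := by
    have := congrArg List.length this
    simpa using this
  subst hlen
  refine ⟨rfl, fun i => ?_⟩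
  have := congrArg (fun l => l[(i : ℕ)]?) this
  simpa using this

lemma pre12_sep {x y : ℕ → Bool} {k : ℕ} (hk : x k ≠ y k) :
    ∀ n ≥ k + 1, ∀ m, pre12 x n ≠ pre12 y m := by
  intro n hn m h
  obtain ⟨rfl, hxy⟩ := pre12_inj_aux h
  exact hk (hxy ⟨k, by omega⟩)

/-- Lemma 2.4: the directed set `ω^ω = (ℕ → ℕ)` (pointwise order) contains a directed
subset order-isomorphic to `[𝔠]^{<ω}`, the finite subsets of the continuum ordered by
inclusion: there is a map `φ : Finset ℝ → (ℕ → ℕ)` with `φ s ≤ φ t ↔ s ⊆ t` which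
turns unions into pointwise suprema. -/
theorem stmt12 : ∃ φ : Finset ℝ → (ℕ → ℕ),
    (∀ s t : Finset ℝ, φ s ≤ φ t ↔ s ⊆ t) ∧
    (∀ s t : Finset ℝ, φ (s ∪ t) = φ s ⊔ φ t) := by
  classical
  -- an injection from ℝ into ℕ → Bool
  have hcard : Cardinal.mk ℝ ≤ Cardinal.mk (ℕ → Bool) := by
    simp [Cardinal.mk_real, Cardinal.mk_arrow, Cardinal.mk_bool]
  obtain ⟨b⟩ := hcard
  refine ⟨fun s => s.sup (fun r => f12 (b r)), ?_, ?_⟩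
  · intro s t
    constructor
    · intro hle r hr
      have hle' : s.sup (fun r => f12 (b r)) ≤ t.sup (fun r => f12 (b r)) := hle
      by_contra hrt
      -- choose a large enough prefix length
      set N : ℕ := (t.sup fun r' => if h : ∃ k, b r k ≠ b r' k then Nat.find h + 1 else 0)
      set m : ℕ := pre12 (b r) N with hm
      have h1 : f12 (b r) m = 1 := by
        simp [f12, hm]
      have hs1 : 1 ≤ s.sup (fun r' => f12 (b r')) m := by
        have := Finset.le_sup (f := fun r' => f12 (b r')) hr
        calc 1 = f12 (b r) m := h1.symm
        _ ≤ _ := this m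
      have ht0 : t.sup (fun r' => f12 (b r')) m = 0 := by
        have : ∀ r' ∈ t, f12 (b r') m = 0 := by
          intro r' hr'
          have hne : b r ≠ b r' := fun h => hrt (b.injective h ▸ hr')
          have hk : ∃ k, b r k ≠ b r' k := by
            by_contra hc
            push_neg at hc
            exact hne (funext hc)
          have hN : Nat.find hk + 1 ≤ N := by
            have h2 := Finset.le_sup
              (f := fun r' => if h : ∃ k, b r k ≠ b r' k then Nat.find h + 1 else 0) hr'
            simpa only [dif_pos hk] using h2
          have hsep := pre12_sep (Nat.find_spec hk) N (by omega)
          simp only [f12, hm]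
          rw [if_neg]
          rintro ⟨n, hn⟩
          exact hsep n hn.symm
        -- sup of zeros is zero
        rw [Finset.sup_apply]
        exact Nat.le_zero.mp (Finset.sup_le fun r' hr' => le_of_eq (this r' hr'))
      exact absurd (hs1.trans ((hle' m).trans_eq ht0)) (by norm_num)
    · intro hst
      exact Finset.sup_mono hst
  · intro s t
    exact Finset.sup_union
end

section
/- Let I be an uncountable index set and for each i ∈ I let G_i be a Hausdorff topological group with more than one element. If H is a dense subgroup of the product ∏_{i∈I} G_i (with the product topology), then H does not admit a local ω^ω-base. -/
open Set Filter Topology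



private lemma exists_injective_bounded {I : Type*} [Uncountable I] (f : I → ℕ → ℕ) :
    ∃ (i : ℕ → I) (g : ℕ → ℕ), Function.Injective i ∧ ∀ n, f (i n) ≤ g := by
  classical
  have step : ∀ (s : Set I), ¬ s.Countable → ∀ n : ℕ,
      ∃ k, ¬ {x ∈ s | f x n = k}.Countable := by
    intro s hs n
    by_contra hk
    push_neg at hk
    apply hs
    have hs' : s = ⋃ k, {x ∈ s | f x n = k} := by
      ext x
      simp only [mem_iUnion, mem_setOf_eq]
      exact ⟨fun hx => ⟨f x n, hx, rfl⟩, fun ⟨k, hx, _⟩ => hx⟩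
    rw [hs']
    exact Set.countable_iUnion hk
  have h0 : ¬ (Set.univ : Set I).Countable := by
    rw [Set.countable_univ_iff]
    exact not_countable
  let A : ℕ → {s : Set I // ¬ s.Countable} := fun n => Nat.rec ⟨Set.univ, h0⟩
    (fun n s => ⟨{x ∈ s.1 | f x n = (step s.1 s.2 n).choose},
      (step s.1 s.2 n).choose_spec⟩) n
  have hAsucc : ∀ n, (A (n+1)).1 ⊆ (A n).1 := fun n x hx => hx.1
  have hAmono : ∀ k n, k ≤ n → (A n).1 ⊆ (A k).1 := by
    intro k n hkn
    induction hkn with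
    | refl => exact fun x hx => hx
    | step h ih => exact fun x hx => ih (hAsucc _ hx)
  have hconst : ∀ n, ∀ x ∈ (A (n+1)).1, ∀ y ∈ (A (n+1)).1, f x n = f y n := by
    intro n x hx y hy
    rw [hx.2, hy.2]
  have hinf : ∀ n, (A n).1.Infinite := fun n hf => (A n).2 hf.countable
  let pick : ℕ → Finset I → I := fun n s => ((hinf (n+1)).exists_notMem_finset s).choose
  have hpick : ∀ n s, pick n s ∈ (A (n+1)).1 ∧ pick n s ∉ s :=
    fun n s => ((hinf (n+1)).exists_notMem_finset s).choose_spec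
  let used : ℕ → Finset I := fun n => Nat.rec ∅ (fun n u => insert (pick n u) u) n
  let i : ℕ → I := fun n => pick n (used n)
  have husedsucc : ∀ n, used (n+1) = insert (i n) (used n) := fun n => rfl
  have husedmono : ∀ k n, k ≤ n → used k ⊆ used n := by
    intro k n hkn
    induction hkn with
    | refl => exact fun x hx => hx
    | step h ih =>
        intro x hx
        rw [husedsucc]
        exact Finset.mem_insert_of_mem (ih hx)
  have hiA : ∀ n, i n ∈ (A (n+1)).1 := fun n => (hpick n (used n)).1
  have hinj : Function.Injective i := by
    intro m n hmn
    by_contra hne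
    rcases Nat.lt_or_ge m n with h | h
    · have h1 : i m ∈ used n := husedmono (m+1) n h (by
        rw [husedsucc]; exact Finset.mem_insert_self _ _)
      rw [hmn] at h1; exact (hpick n (used n)).2 h1
    · have h' : n < m := lt_of_le_of_ne h (fun e => hne e.symm)
      have h1 : i n ∈ used m := husedmono (n+1) m h' (by
        rw [husedsucc]; exact Finset.mem_insert_self _ _)
      rw [← hmn] at h1; exact (hpick m (used m)).2 h1
  refine ⟨i, fun k => (Finset.range (k+1)).sup (fun m => f (i m) k) ⊔ f (i (k+1)) k,
    hinj, ?_⟩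
  intro n k
  rcases le_or_gt n k with h | h
  · exact le_sup_of_le_left (Finset.le_sup (f := fun m => f (i m) k) (Finset.mem_range.mpr (Nat.lt_succ_of_le h)))
  · have heq : f (i n) k = f (i (k+1)) k := by
      have h1 : i n ∈ (A (k+1)).1 := hAmono (k+1) (n+1) (Nat.succ_le_succ h.le) (hiA n)
      have h2 : i (k+1) ∈ (A (k+1)).1 := hAmono (k+1) (k+2) (Nat.le_succ _) (hiA (k+1))
      exact hconst k _ h1 _ h2
    rw [heq]
    exact le_sup_right

/-- Proposition 2.5: a dense subgroup of a product of uncountably many non-trivial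
(Hausdorff) topological groups does not admit a local `ω^ω`-base. -/
theorem stmt14 {I : Type*} [Uncountable I] (G : I → Type*)
    [∀ i, Group (G i)] [∀ i, TopologicalSpace (G i)] [∀ i, IsTopologicalGroup (G i)]
    [∀ i, T2Space (G i)] [∀ i, Nontrivial (G i)]
    (H : Subgroup (∀ i, G i)) (hd : Dense (H : Set (∀ i, G i))) :
    ¬ HasOmegaOmegaBase (nhds (1 : H)) := by
  classical
  rintro ⟨V, hV1, hV2, hV3⟩
  have hcoe : ((1 : H) : ∀ j, G j) = 1 := rfl
  have hmemH : ∀ (t : Set H), t ∈ 𝓝 (1 : H) ↔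
      ∃ u ∈ 𝓝 (1 : ∀ j, G j), Subtype.val ⁻¹' u ⊆ t := by
    intro t
    rw [mem_nhds_subtype (H : Set (∀ j, G j)) (1 : H) t, hcoe]
    rfl
  -- choose, for each i, a point with disjoint open sets W i ∋ 1, O i nonempty
  have hsep : ∀ i : I, ∃ (W O : Set (G i)), IsOpen W ∧ IsOpen O ∧ (1 : G i) ∈ W ∧
      O.Nonempty ∧ Disjoint W O := by
    intro i
    obtain ⟨b, hb⟩ := exists_ne (1 : G i)
    obtain ⟨W, O, hWo, hOo, h1W, hbO, hdisj⟩ := t2_separation hb.symm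
    exact ⟨W, O, hWo, hOo, h1W, ⟨b, hbO⟩, hdisj⟩
  choose W O hWopen hOopen hW1 hOne hdisj using hsep
  have hnbhd : ∀ i : I, {h : H | (h : ∀ j, G j) i ∈ W i} ∈ 𝓝 (1 : H) := by
    intro i
    rw [hmemH]
    refine ⟨(fun x : ∀ j, G j => x i) ⁻¹' (W i), ?_, fun h hh => hh⟩
    exact (continuous_apply i).continuousAt.preimage_mem_nhds
      (by simpa using (hWopen i).mem_nhds (hW1 i))
  choose f hf using fun i => hV3 _ (hnbhd i)
  obtain ⟨idx, g, hinj, hbound⟩ := exists_injective_bounded f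
  have hVg : ∀ n, V g ⊆ {h : H | (h : ∀ j, G j) (idx n) ∈ W (idx n)} :=
    fun n => (hV2 _ _ (hbound n)).trans (hf (idx n))
  -- V g is a nbhd of 1 in H; extract a finite-support basic neighborhood
  obtain ⟨U, hU, hUsub⟩ := (hmemH (V g)).mp (hV1 g)
  rw [nhds_pi, Filter.mem_pi] at hU
  obtain ⟨E, hEfin, t, ht, hEt⟩ := hU
  -- pick n with idx n ∉ E
  have hEn : ∃ n, idx n ∉ E := by
    by_contra hall
    push_neg at hall
    exact ((Set.infinite_range_of_injective hinj).mono
      (Set.range_subset_iff.mpr hall)) hEfin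
  obtain ⟨n, hn⟩ := hEn
  -- build a nonempty open set meeting forcing a contradiction
  set OO : Set (∀ j, G j) :=
    (E.pi fun j => interior (t j)) ∩ ((fun x => x (idx n)) ⁻¹' (O (idx n))) with hOO
  have hOOopen : IsOpen OO :=
    (isOpen_set_pi hEfin fun j _ => isOpen_interior).inter
      ((hOopen (idx n)).preimage (continuous_apply (idx n)))
  obtain ⟨b, hb⟩ := hOne (idx n)
  have hOOne : OO.Nonempty := by
    refine ⟨Function.update (1 : ∀ j, G j) (idx n) b, ?_, ?_⟩
    · intro j hj
      have hjne : j ≠ idx n := fun e => hn (e ▸ hj)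
      rw [Function.update_of_ne hjne]
      exact mem_interior_iff_mem_nhds.mpr (by simpa using ht j)
    · simpa using hb
  obtain ⟨x, hxH, hxOO⟩ := hd.exists_mem_open hOOopen hOOne
  have hxU : x ∈ U := by
    apply hEt
    intro j hj
    exact interior_subset (hxOO.1 j hj)
  have hxV : (⟨x, hxH⟩ : H) ∈ V g := hUsub hxU
  have hxW : x (idx n) ∈ W (idx n) := hVg n hxV
  exact (hdisj (idx n)).ne_of_mem hxW hxOO.2 rfl
end

section
/- Let τ be an infinite cardinal (identified with the set of ordinals below τ) such that there exists a monotone map from ℕ → ℕ (with the pointwise partial order) to τ whose image is cofinal in τ (equivalently, τ is Tukey-dominated by ω^ω). Let G be a topological group possessing a neighborhood base (V_α)_{α<τ} at the identity indexed by the ordinals below τ and linearly ordered by reverse inclusion (α ≤ β implies V_β ⊆ V_α). Then G admits a local ω^ω-base. -/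
universe u v

/-- Proposition 2.7: if `τ` is an infinite cardinal Tukey-dominated by `ω^ω`
(witnessed by a monotone map `ℕ → ℕ` to the ordinals below `τ` with cofinal image)
and `G` is a topological group with a neighbourhood base at the identity indexed by
the ordinals below `τ` and linearly ordered by reverse inclusion, then `G` admits a
local `ω^ω`-base. -/
theorem stmt15 (κ : Cardinal.{u}) (hκ : Cardinal.aleph0 ≤ κ)
    (hdom : ∃ φ : (ℕ → ℕ) → {o : Ordinal.{u} // o < κ.ord},
      Monotone φ ∧ ∀ ξ : {o : Ordinal.{u} // o < κ.ord}, ∃ f : ℕ → ℕ, ξ ≤ φ f)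
    {G : Type v} [Group G] [TopologicalSpace G] [IsTopologicalGroup G]
    (V : {o : Ordinal.{u} // o < κ.ord} → Set G)
    (hV : ∀ α, V α ∈ nhds (1 : G))
    (hmono : ∀ α β, α ≤ β → V β ⊆ V α)
    (hbase : ∀ U ∈ nhds (1 : G), ∃ α, V α ⊆ U) :
    HasOmegaOmegaBase (nhds (1 : G)) := by
  obtain ⟨φ, hφmono, hφcof⟩ := hdom
  refine ⟨fun f => V (φ f), fun f => hV _, fun f g hfg => hmono _ _ (hφmono hfg), ?_⟩
  intro A hA
  obtain ⟨α, hα⟩ := hbase A hA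
  obtain ⟨f, hf⟩ := hφcof α
  exact ⟨f, (hmono _ _ hf).trans hα⟩
end
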